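/- arXiv:2309.04365 — 10 statements merged into one kernel-verified Lean document; each statement's English description precedes it below -/
import Mathlib

section
/- Let X be a real Hilbert space, K a nonempty closed convex subset of X, A : X → X an operator for which there exist constants m > 0 and M > 0 with (Au − Av, u − v)_X ≥ m‖u − v‖_X² and ‖Au − Av‖_X ≤ M‖u − v‖_X for all u, v ∈ X, and j : X × X → ℝ a function such that for every η ∈ X the map v ↦ j(η, v) is convex and lower semicontinuous, and such that there exists α ≥ 0 with j(η, ṽ) − j(η, v) + j(η̃, v) − j(η̃, ṽ) ≤ α‖η − η̃‖_X‖v − ṽ‖_X for all η, η̃, v, ṽ ∈ X. Assume m > α and let f ∈ X. Then there exists a unique u ∈ K such that (Au, v − u)_X + j(u, v) − j(u, u) ≥ (f, v − u)_X for all v ∈ K. -/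
open scoped InnerProductSpace

lemma affine_minorant {X : Type*} [NormedAddCommGroup X] [NormedSpace ℝ X]
    (φ : X → ℝ) (hconv : ConvexOn ℝ Set.univ φ) (hlsc : LowerSemicontinuous φ) :
    ∃ (g : X →L[ℝ] ℝ) (c : ℝ), ∀ x, c + g x ≤ φ x := by
  set E : Set (X × ℝ) := {p : X × ℝ | φ p.1 ≤ p.2} with hE
  have hEclosed : IsClosed E := by
    rw [← isOpen_compl_iff, isOpen_iff_mem_nhds]
    rintro ⟨x, t⟩ hp
    simp only [hE, Set.mem_compl_iff, Set.mem_setOf_eq, not_le] at hp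
    obtain ⟨y, hty, hyφ⟩ := exists_between hp
    have h1 : ∀ᶠ x' in nhds x, y < φ x' := hlsc x y hyφ
    have h2 : ∀ᶠ t' in nhds t, t' < y := Filter.Tendsto.eventually_lt_const hty Filter.tendsto_id
    rw [nhds_prod_eq]
    filter_upwards [h1.prod_mk h2] with p hp2
    simp only [hE, Set.mem_compl_iff, Set.mem_setOf_eq, not_le]
    exact hp2.2.trans hp2.1
  have hEconv : Convex ℝ E := by
    have := hconv.convex_epigraph
    simpa using this
  have hp0 : ((0 : X), φ 0 - 1) ∉ E := by
    simp only [hE, Set.mem_setOf_eq]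
    linarith
  obtain ⟨l, u, hlt, hgt⟩ := geometric_hahn_banach_closed_point hEconv hEclosed hp0
  set g : X →L[ℝ] ℝ := l.comp (ContinuousLinearMap.inl ℝ X ℝ) with hg
  set β : ℝ := l (0, 1) with hβ
  have hsplit : ∀ (x : X) (t : ℝ), l (x, t) = g x + t * β := by
    intro x t
    have h : (x, t) = ((x, (0:ℝ)) : X × ℝ) + t • (((0:X), (1:ℝ)) : X × ℝ) := by
      simp [Prod.ext_iff]
    rw [h, map_add, map_smul, smul_eq_mul]
    rfl
  have hmem : ∀ x : X, l (x, φ x) < u := fun x => hlt (x, φ x) (by simp [hE])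
  have hβnonpos : β ≤ 0 := by
    by_contra h
    push_neg at h
    set t := max (φ 0) ((u - g 0) / β) with htdef
    have h1 : l (0, t) < u := hlt (0, t) (by simp only [hE, Set.mem_setOf_eq]; exact le_max_left _ _)
    rw [hsplit] at h1
    have h2 : (u - g 0) / β ≤ t := le_max_right _ _
    rw [div_le_iff₀ h] at h2
    linarith
  have hβne : β ≠ 0 := by
    intro h
    have h1 := hmem 0
    rw [hsplit, h, mul_zero] at h1
    rw [hsplit, h, mul_zero] at hgt
    linarith
  have hβneg : β < 0 := lt_of_le_of_ne hβnonpos hβne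
  refine ⟨(-β⁻¹) • g, u / β, fun x => ?_⟩
  have h2 := hmem x
  rw [hsplit] at h2
  have h3 : (u - g x) / β < φ x := (div_lt_iff_of_neg hβneg).mpr (by linarith)
  have h4 : u / β + (-β⁻¹) * g x = (u - g x) / β := by field_simp; ring
  simp only [ContinuousLinearMap.smul_apply, smul_eq_mul]
  linarith


open scoped InnerProductSpace

lemma exists_minimizer {X : Type*} [NormedAddCommGroup X] [InnerProductSpace ℝ X]
    [CompleteSpace X]
    (K : Set X) (hne : K.Nonempty) (hcl : IsClosed K) (hcv : Convex ℝ K)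
    (ψ : X → ℝ) (hconv : ConvexOn ℝ Set.univ ψ) (hlsc : LowerSemicontinuous ψ) (z : X) :
    ∃ u ∈ K, ∀ v ∈ K,
      (1:ℝ)/2 * ‖u‖^2 - ⟪z, u⟫_ℝ + ψ u ≤ (1:ℝ)/2 * ‖v‖^2 - ⟪z, v⟫_ℝ + ψ v := by
  set Φ : X → ℝ := fun v => (1:ℝ)/2 * ‖v‖^2 - ⟪z, v⟫_ℝ + ψ v with hΦ
  -- midpoint strong convexity
  have hmid : ∀ u v : X, Φ ((1/2 : ℝ) • (u + v)) ≤ Φ u / 2 + Φ v / 2 - ‖u - v‖^2 / 8 := by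
    intro u v
    have hψ : ψ ((1/2 : ℝ) • u + (1/2 : ℝ) • v) ≤ (1/2) * ψ u + (1/2) * ψ v := by
      have := hconv.2 (Set.mem_univ u) (Set.mem_univ v)
        (by norm_num : (0:ℝ) ≤ 1/2) (by norm_num : (0:ℝ) ≤ 1/2) (by norm_num)
      simpa [smul_eq_mul] using this
    have hpar : ‖u + v‖^2 + ‖u - v‖^2 = 2 * ‖u‖^2 + 2 * ‖v‖^2 := by
      have h1 := norm_add_sq_real u v
      have h2 := norm_sub_sq_real u v
      linarith
    have hn : ‖(1/2 : ℝ) • (u + v)‖^2 = (1/4) * ‖u + v‖^2 := by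
      rw [norm_smul]
      simp [mul_pow]
      norm_num
    have hin : ⟪z, (1/2 : ℝ) • (u + v)⟫_ℝ = (1/2) * ⟪z, u⟫_ℝ + (1/2) * ⟪z, v⟫_ℝ := by
      rw [real_inner_smul_right, inner_add_right]
      ring
    have hsm : (1/2 : ℝ) • (u + v) = (1/2 : ℝ) • u + (1/2 : ℝ) • v := by
      rw [smul_add]
    simp only [hΦ]
    rw [hn, hin, hsm]
    have := hψ
    linarith
  -- lower bound
  obtain ⟨g, c, hgc⟩ := affine_minorant ψ hconv hlsc
  set B : ℝ := c - (‖z‖ + ‖g‖)^2 / 2 with hB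
  have hlb : ∀ v, B ≤ Φ v := by
    intro v
    have h1 : ⟪z, v⟫_ℝ ≤ ‖z‖ * ‖v‖ := real_inner_le_norm z v
    have h2 : |g v| ≤ ‖g‖ * ‖v‖ := by
      have := g.le_opNorm v
      simpa using this
    have h3 : -(‖g‖ * ‖v‖) ≤ g v := neg_le_of_abs_le h2
    have h4 := hgc v
    have h5 : (0:ℝ) ≤ (‖v‖ - (‖z‖ + ‖g‖))^2 := sq_nonneg _
    simp only [hΦ, hB]
    nlinarith
  -- infimum
  have hne' : (Φ '' K).Nonempty := hne.image Φ
  have hbdd : BddBelow (Φ '' K) := ⟨B, by rintro y ⟨v, _, rfl⟩; exact hlb v⟩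
  set d : ℝ := sInf (Φ '' K) with hd
  have hd_le : ∀ v ∈ K, d ≤ Φ v := fun v hv => csInf_le hbdd ⟨v, hv, rfl⟩
  -- minimizing sequence
  have hseq : ∀ n : ℕ, ∃ v ∈ K, Φ v < d + 1 / (n + 1) := by
    intro n
    have hlt : d < d + 1 / (n + 1) := by
      have : (0:ℝ) < 1 / (n + 1) := by positivity
      linarith
    obtain ⟨y, ⟨v, hv, rfl⟩, hy⟩ := exists_lt_of_csInf_lt hne' hlt
    exact ⟨v, hv, hy⟩
  choose w hwK hwΦ using hseq
  -- Cauchy estimate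
  have hkey : ∀ p q : ℕ, ‖w p - w q‖^2 ≤ 4 * (1 / (p + 1) + 1 / (q + 1)) := by
    intro p q
    have hm := hmid (w p) (w q)
    have hmem : (1/2 : ℝ) • (w p + w q) ∈ K := by
      have := hcv (hwK p) (hwK q) (by norm_num : (0:ℝ) ≤ 1/2) (by norm_num : (0:ℝ) ≤ 1/2)
        (by norm_num)
      simpa [smul_add] using this
    have h1 := hd_le _ hmem
    have h2 := hwΦ p
    have h3 := hwΦ q
    linarith
  have hcauchy : CauchySeq w := by
    rw [Metric.cauchySeq_iff]
    intro ε hε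
    obtain ⟨N, hN⟩ := exists_nat_gt (8 / ε^2)
    refine ⟨N, fun p hp q hq => ?_⟩
    have hp1 : (1:ℝ) / (p + 1) ≤ 1 / (N + 1) := by
      apply one_div_le_one_div_of_le (by positivity)
      exact_mod_cast by omega
    have hq1 : (1:ℝ) / (q + 1) ≤ 1 / (N + 1) := by
      apply one_div_le_one_div_of_le (by positivity)
      exact_mod_cast by omega
    have h4 := hkey p q
    have h8 : (8:ℝ) / (N + 1) = 4 * (1 / ((N:ℝ) + 1) + 1 / ((N:ℝ) + 1)) := by ring
    have h5 : ‖w p - w q‖^2 ≤ 8 / (N + 1) := by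
      rw [h8]; linarith
    have h6 : (8:ℝ) / (N + 1) < ε^2 := by
      rw [div_lt_iff₀ (by positivity)]
      rw [div_lt_iff₀ (by positivity : (0:ℝ) < ε^2)] at hN
      nlinarith [hN, sq_nonneg ε, hε]
    rw [dist_eq_norm]
    nlinarith [norm_nonneg (w p - w q), hε]
  obtain ⟨u, hu⟩ := cauchySeq_tendsto_of_complete hcauchy
  have huK : u ∈ K := hcl.mem_of_tendsto hu (Filter.Eventually.of_forall hwK)
  -- Φ is lsc
  have hΦlsc : LowerSemicontinuous Φ := by
    have hin : Continuous fun v : X => ⟪z, v⟫_ℝ := continuous_const.inner continuous_id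
    have hcont : Continuous fun v : X => (1:ℝ)/2 * ‖v‖^2 - ⟪z, v⟫_ℝ :=
      (continuous_const.mul (continuous_norm.pow 2)).sub hin
    have := hcont.lowerSemicontinuous.add hlsc
    simpa [hΦ] using this
  have hΦu : Φ u ≤ d := by
    by_contra h
    push_neg at h
    obtain ⟨y, hy1, hy2⟩ := exists_between h
    have h1 : ∀ᶠ n in Filter.atTop, y < Φ (w n) := hu.eventually (hΦlsc u y hy2)
    have h2 : ∀ᶠ n : ℕ in Filter.atTop, (1:ℝ) / (n + 1) < y - d :=
      tendsto_one_div_add_atTop_nhds_zero_nat.eventually_lt_const (by linarith)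
    obtain ⟨n, hn1, hn2⟩ := (h1.and h2).exists
    have h9 := hwΦ n
    have h10 : Φ (w n) < y := by
      calc Φ (w n) < d + 1 / ((n:ℝ) + 1) := h9
        _ < d + (y - d) := by linarith [hn2]
        _ = y := by ring
    linarith [hn1, h10]
  exact ⟨u, huK, fun v hv => le_trans hΦu (hd_le v hv)⟩

lemma minimizer_vi {X : Type*} [NormedAddCommGroup X] [InnerProductSpace ℝ X]
    (K : Set X) (hcv : Convex ℝ K)
    (ψ : X → ℝ) (hconv : ConvexOn ℝ Set.univ ψ) (z : X) (u : X) (huK : u ∈ K)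
    (hmin : ∀ v ∈ K,
      (1:ℝ)/2 * ‖u‖^2 - ⟪z, u⟫_ℝ + ψ u ≤ (1:ℝ)/2 * ‖v‖^2 - ⟪z, v⟫_ℝ + ψ v) :
    ∀ v ∈ K, 0 ≤ ⟪u - z, v - u⟫_ℝ + ψ v - ψ u := by
  intro v hv
  by_contra h
  push_neg at h
  set C : ℝ := ⟪u - z, v - u⟫_ℝ + ψ v - ψ u with hC
  set B : ℝ := ‖v - u‖^2 with hBdef
  have hB0 : 0 < B := by
    have hvu : v ≠ u := by
      intro heq
      rw [hC, heq] at h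
      simp at h
    rw [hBdef]
    exact pow_pos (norm_pos_iff.mpr (sub_ne_zero.mpr hvu)) 2
  -- choose t
  have hCneg : C < 0 := h
  set t : ℝ := min 1 (-C / B) with ht
  have ht0 : 0 < t := lt_min one_pos (div_pos (neg_pos.mpr hCneg) hB0)
  have ht1 : t ≤ 1 := min_le_left _ _
  have htB : t * B ≤ -C := by
    have h1 : t ≤ -C / B := min_le_right _ _
    rw [← le_div_iff₀ hB0]
    exact h1
  -- the point u + t(v-u)
  set w : X := u + t • (v - u) with hw
  have hwK : w ∈ K := by
    have h2 : w = (1 - t) • u + t • v := by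
      rw [hw]; module
    rw [h2]
    exact hcv huK hv (by linarith) (le_of_lt ht0) (by ring)
  have hmin2 := hmin w hwK
  -- expand
  have hnorm : ‖w‖^2 = ‖u‖^2 + 2 * t * ⟪u, v - u⟫_ℝ + t^2 * B := by
    rw [hw, norm_add_sq_real, real_inner_smul_right, norm_smul]
    rw [hBdef]
    simp [mul_pow, abs_of_pos ht0]
    ring
  have hinner : ⟪z, w⟫_ℝ = ⟪z, u⟫_ℝ + t * ⟪z, v - u⟫_ℝ := by
    rw [hw, inner_add_right, real_inner_smul_right]
  have hψw : ψ w ≤ (1 - t) * ψ u + t * ψ v := by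
    have h2 : w = (1 - t) • u + t • v := by rw [hw]; module
    rw [h2]
    have := hconv.2 (Set.mem_univ u) (Set.mem_univ v) (by linarith : (0:ℝ) ≤ 1 - t)
      (le_of_lt ht0) (by ring)
    simpa [smul_eq_mul] using this
  have hiz : ⟪u - z, v - u⟫_ℝ = ⟪u, v - u⟫_ℝ - ⟪z, v - u⟫_ℝ := by
    rw [inner_sub_left]
  -- combine:  0 ≤ t*C + t^2/2 * B  from hmin2
  have hcomb : 0 ≤ t * C + t^2 / 2 * B := by
    rw [hnorm, hinner] at hmin2
    rw [hC, hiz]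
    nlinarith [hmin2, hψw]
  have hfin : t * C + t^2 / 2 * B ≤ t * C / 2 := by
    have : t * (t * B) ≤ t * (-C) := by
      apply mul_le_mul_of_nonneg_left htB (le_of_lt ht0)
    nlinarith
  nlinarith [mul_pos ht0 (neg_pos.mpr hCneg)]

lemma vi_diff {X : Type*} [NormedAddCommGroup X] [InnerProductSpace ℝ X]
    (a₁ a₂ u₁ u₂ : X) (r₁ r₂ : ℝ)
    (h₁ : 0 ≤ ⟪a₁, u₂ - u₁⟫_ℝ + r₁) (h₂ : 0 ≤ ⟪a₂, u₁ - u₂⟫_ℝ + r₂) :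
    ⟪a₁ - a₂, u₁ - u₂⟫_ℝ ≤ r₁ + r₂ := by
  have e1 : ⟪a₁, u₂ - u₁⟫_ℝ = -⟪a₁, u₁ - u₂⟫_ℝ := by
    rw [← inner_neg_right, neg_sub]
  have e2 : ⟪a₁ - a₂, u₁ - u₂⟫_ℝ = ⟪a₁, u₁ - u₂⟫_ℝ - ⟪a₂, u₁ - u₂⟫_ℝ := inner_sub_left _ _ _
  rw [e1] at h₁
  linarith

set_option maxHeartbeats 1000000 in
lemma evi_exists_unique {X : Type*} [NormedAddCommGroup X] [InnerProductSpace ℝ X]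
    [CompleteSpace X]
    (K : Set X) (hne : K.Nonempty) (hcl : IsClosed K) (hcv : Convex ℝ K)
    (A : X → X) (m M : ℝ) (hm : 0 < m)
    (hA_mono : ∀ u v : X, m * ‖u - v‖ ^ 2 ≤ ⟪A u - A v, u - v⟫_ℝ)
    (hA_lip : ∀ u v : X, ‖A u - A v‖ ≤ M * ‖u - v‖)
    (jj : X → ℝ) (hjconv : ConvexOn ℝ Set.univ jj) (hjlsc : LowerSemicontinuous jj)
    (f : X) :
    ∃! u : X, u ∈ K ∧ ∀ v ∈ K, 0 ≤ ⟪A u - f, v - u⟫_ℝ + jj v - jj u := by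
  set N : ℝ := max M m with hNdef
  have hN : 0 < N := lt_of_lt_of_le hm (le_max_right _ _)
  have hmN : m ≤ N := le_max_right _ _
  have hMN : M ≤ N := le_max_left _ _
  set ρ : ℝ := m / N^2 with hρdef
  have hρ : 0 < ρ := by positivity
  set ψ : X → ℝ := fun v => ρ * jj v with hψdef
  have hψconv : ConvexOn ℝ Set.univ ψ := by
    have := hjconv.smul (le_of_lt hρ)
    simpa [hψdef, smul_eq_mul] using this
  have hψlsc : LowerSemicontinuous ψ := by
    have hmono : Monotone fun t : ℝ => ρ * t := fun a b hab =>
      mul_le_mul_of_nonneg_left hab hρ.le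
    exact (continuous_const.mul continuous_id).comp_lowerSemicontinuous hjlsc hmono
  -- z map
  set z : X → X := fun w => w - ρ • (A w - f) with hzdef
  -- for each w the minimizer exists
  have hex : ∀ w : X, ∃ u ∈ K, ∀ v ∈ K,
      (1:ℝ)/2 * ‖u‖^2 - ⟪z w, u⟫_ℝ + ψ u ≤ (1:ℝ)/2 * ‖v‖^2 - ⟪z w, v⟫_ℝ + ψ v :=
    fun w => exists_minimizer K hne hcl hcv ψ hψconv hψlsc (z w)
  choose T hTK hTmin using hex
  have hTvi : ∀ w : X, ∀ v ∈ K, 0 ≤ ⟪T w - z w, v - T w⟫_ℝ + ψ v - ψ (T w) :=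
    fun w => minimizer_vi K hcv ψ hψconv (z w) (T w) (hTK w) (hTmin w)
  -- contraction constant
  set k : ℝ := Real.sqrt (1 - m^2 / N^2) with hkdef
  have harg : 0 ≤ 1 - m^2 / N^2 := by
    rw [sub_nonneg, div_le_one (by positivity)]
    nlinarith
  have hk0 : 0 ≤ k := Real.sqrt_nonneg _
  have hksq : k^2 = 1 - m^2 / N^2 := Real.sq_sqrt harg
  have hk1 : k < 1 := by
    nlinarith [hksq, hk0, sq_nonneg k, div_pos (by positivity : (0:ℝ) < m^2) (by positivity : (0:ℝ) < N^2)]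
  -- Lipschitz estimate for T
  have hTlip : ∀ w₁ w₂ : X, ‖T w₁ - T w₂‖ ≤ k * ‖w₁ - w₂‖ := by
    intro w₁ w₂
    have h₁ := hTvi w₁ (T w₂) (hTK w₂)
    have h₂ := hTvi w₂ (T w₁) (hTK w₁)
    have hd := vi_diff (T w₁ - z w₁) (T w₂ - z w₂) (T w₁) (T w₂)
      (ψ (T w₂) - ψ (T w₁)) (ψ (T w₁) - ψ (T w₂)) (by linarith) (by linarith)
    -- rewrite hd : ⟪(T w₁ - z w₁) - (T w₂ - z w₂), T w₁ - T w₂⟫ ≤ 0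
    have hd2 : ‖T w₁ - T w₂‖^2 ≤ ⟪z w₁ - z w₂, T w₁ - T w₂⟫_ℝ := by
      have e : (T w₁ - z w₁) - (T w₂ - z w₂) = (T w₁ - T w₂) - (z w₁ - z w₂) := by abel
      rw [e, inner_sub_left, real_inner_self_eq_norm_sq] at hd
      linarith
    have hz2 : ‖z w₁ - z w₂‖^2 ≤ k^2 * ‖w₁ - w₂‖^2 := by
      have e : z w₁ - z w₂ = (w₁ - w₂) - ρ • (A w₁ - A w₂) := by
        simp only [hzdef]
        module
      rw [e, norm_sub_sq_real, real_inner_smul_right, norm_smul]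
      have hA1 := hA_mono w₁ w₂
      have hA2 := hA_lip w₁ w₂
      have hA3 : ⟪w₁ - w₂, A w₁ - A w₂⟫_ℝ = ⟪A w₁ - A w₂, w₁ - w₂⟫_ℝ := real_inner_comm _ _
      rw [hA3]
      have hAn : ‖A w₁ - A w₂‖^2 ≤ N^2 * ‖w₁ - w₂‖^2 := by
        have h0 : ‖A w₁ - A w₂‖ ≤ N * ‖w₁ - w₂‖ :=
          le_trans hA2 (mul_le_mul_of_nonneg_right hMN (norm_nonneg _))
        nlinarith [norm_nonneg (A w₁ - A w₂), norm_nonneg (w₁ - w₂)]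
      have habs : ‖ρ‖ = ρ := by rw [Real.norm_eq_abs]; exact abs_of_pos hρ
      rw [habs, hksq, hρdef]
      have hN2 : (0:ℝ) < N^2 := by positivity
      rw [mul_pow, div_pow]
      have e2 : (1 - m^2 / N^2) * ‖w₁ - w₂‖^2
          = ‖w₁ - w₂‖^2 - 2 * (m / N^2) * (m * ‖w₁ - w₂‖^2) + m^2 / (N^2)^2 * (N^2 * ‖w₁ - w₂‖^2) := by
        field_simp
        ring
      rw [e2]
      have h5 : m^2 / (N^2)^2 * ‖A w₁ - A w₂‖^2 ≤ m^2 / (N^2)^2 * (N^2 * ‖w₁ - w₂‖^2) :=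
        mul_le_mul_of_nonneg_left hAn (by positivity)
      have h6 : 2 * (m / N^2) * (m * ‖w₁ - w₂‖^2) ≤ 2 * (m / N^2) * ⟪A w₁ - A w₂, w₁ - w₂⟫_ℝ := by
        apply mul_le_mul_of_nonneg_left hA1 (by positivity)
      linarith
    have hcs : ⟪z w₁ - z w₂, T w₁ - T w₂⟫_ℝ ≤ ‖z w₁ - z w₂‖ * ‖T w₁ - T w₂‖ :=
      real_inner_le_norm _ _
    have hzle : ‖z w₁ - z w₂‖ ≤ k * ‖w₁ - w₂‖ := by
      have e1 : ‖z w₁ - z w₂‖ = Real.sqrt (‖z w₁ - z w₂‖^2) :=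
        (Real.sqrt_sq (norm_nonneg _)).symm
      rw [e1]
      have e2 : k^2 * ‖w₁ - w₂‖^2 = (k * ‖w₁ - w₂‖)^2 := by ring
      calc Real.sqrt (‖z w₁ - z w₂‖^2) ≤ Real.sqrt (k^2 * ‖w₁ - w₂‖^2) :=
            Real.sqrt_le_sqrt hz2
        _ = k * ‖w₁ - w₂‖ := by
            rw [e2]; exact Real.sqrt_sq (by positivity)
    rcases eq_or_lt_of_le (norm_nonneg (T w₁ - T w₂)) with h0 | h0
    · rw [← h0]; positivity
    · have h7 : ‖T w₁ - T w₂‖ * ‖T w₁ - T w₂‖ ≤ (k * ‖w₁ - w₂‖) * ‖T w₁ - T w₂‖ := by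
        have := le_trans hd2 (le_trans hcs
          (mul_le_mul_of_nonneg_right hzle (norm_nonneg _)))
        nlinarith [this]
      exact le_of_mul_le_mul_right h7 h0
  -- Banach fixed point
  have hnonempty : Nonempty X := ⟨0⟩
  have hcontr : ContractingWith ⟨k, hk0⟩ T := by
    constructor
    · exact_mod_cast hk1
    · apply LipschitzWith.of_dist_le_mul
      intro x y
      rw [dist_eq_norm, dist_eq_norm]
      exact hTlip x y
  obtain ⟨u, hu, -⟩ := hcontr.exists_fixedPoint hne.some (edist_ne_top _ _)
  -- u is fixed point: T u = u
  have huK : u ∈ K := hu ▸ hTK u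
  have huvi : ∀ v ∈ K, 0 ≤ ⟪A u - f, v - u⟫_ℝ + jj v - jj u := by
    intro v hv
    have h := hTvi u v hv
    rw [hu] at h
    have e : u - z u = ρ • (A u - f) := by
      simp only [hzdef]
      abel
    rw [e, real_inner_smul_left] at h
    simp only [hψdef] at h
    have hrew : ρ * ⟪A u - f, v - u⟫_ℝ + ρ * jj v - ρ * jj u
        = ρ * (⟪A u - f, v - u⟫_ℝ + jj v - jj u) := by ring
    have h' : 0 ≤ ρ * (⟪A u - f, v - u⟫_ℝ + jj v - jj u) := by linarith [h, hrew]
    by_contra hE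
    push_neg at hE
    have : ρ * (⟪A u - f, v - u⟫_ℝ + jj v - jj u) < 0 := mul_neg_of_pos_of_neg hρ (by linarith)
    linarith
  refine ⟨u, ⟨huK, huvi⟩, ?_⟩
  -- uniqueness
  rintro u' ⟨hu'K, hu'vi⟩
  have h₁ := hu'vi u huK
  have h₂ := huvi u' hu'K
  have hd := vi_diff (A u' - f) (A u - f) u' u (jj u - jj u') (jj u' - jj u)
    (by linarith) (by linarith)
  have e : (A u' - f) - (A u - f) = A u' - A u := by abel
  rw [e] at hd
  have hA1 := hA_mono u' u
  have hnn : 0 ≤ m * ‖u' - u‖^2 := by positivity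
  have hzero : ‖u' - u‖^2 = 0 := by nlinarith
  have : u' - u = 0 := by
    rw [pow_eq_zero_iff (by norm_num : 2 ≠ 0)] at hzero
    exact norm_eq_zero.mp hzero
  exact sub_eq_zero.mp this


theorem quasivariational_inequality_exists_unique
    {X : Type*} [NormedAddCommGroup X] [InnerProductSpace ℝ X] [CompleteSpace X]
    (K : Set X) (hK_ne : K.Nonempty) (hK_closed : IsClosed K) (hK_convex : Convex ℝ K)
    (A : X → X) (m M : ℝ) (hm : 0 < m) (hM : 0 < M)
    (hA_mono : ∀ u v : X, m * ‖u - v‖ ^ 2 ≤ ⟪A u - A v, u - v⟫_ℝ)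
    (hA_lip : ∀ u v : X, ‖A u - A v‖ ≤ M * ‖u - v‖)
    (j : X → X → ℝ)
    (hj_convex : ∀ η : X, ConvexOn ℝ Set.univ (j η))
    (hj_lsc : ∀ η : X, LowerSemicontinuous (j η))
    (α : ℝ) (hα : 0 ≤ α)
    (hj_lip : ∀ η η' v v' : X,
      j η v' - j η v + j η' v - j η' v' ≤ α * ‖η - η'‖ * ‖v - v'‖)
    (hmα : α < m) (f : X) :
    ∃! u : X, u ∈ K ∧ ∀ v ∈ K,
      ⟪A u, v - u⟫_ℝ + j u v - j u u ≥ ⟪f, v - u⟫_ℝ := by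
  classical
  have hevi : ∀ η : X, ∃! u : X, u ∈ K ∧ ∀ v ∈ K,
      0 ≤ ⟪A u - f, v - u⟫_ℝ + j η v - j η u :=
    fun η => evi_exists_unique K hK_ne hK_closed hK_convex A m M hm hA_mono hA_lip
      (j η) (hj_convex η) (hj_lsc η) f
  choose Λ hΛ using fun η => (hevi η).exists
  have hΛK : ∀ η, Λ η ∈ K := fun η => (hΛ η).1
  have hΛvi : ∀ η, ∀ v ∈ K, 0 ≤ ⟪A (Λ η) - f, v - Λ η⟫_ℝ + j η v - j η (Λ η) :=
    fun η => (hΛ η).2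
  -- Λ is a contraction with constant α/m
  set κ : ℝ := α / m with hκdef
  have hκ0 : 0 ≤ κ := by positivity
  have hκ1 : κ < 1 := (div_lt_one hm).mpr hmα
  have hΛlip : ∀ η₁ η₂ : X, ‖Λ η₁ - Λ η₂‖ ≤ κ * ‖η₁ - η₂‖ := by
    intro η₁ η₂
    have h₁ := hΛvi η₁ (Λ η₂) (hΛK η₂)
    have h₂ := hΛvi η₂ (Λ η₁) (hΛK η₁)
    have hd := vi_diff (A (Λ η₁) - f) (A (Λ η₂) - f) (Λ η₁) (Λ η₂)
      (j η₁ (Λ η₂) - j η₁ (Λ η₁)) (j η₂ (Λ η₁) - j η₂ (Λ η₂))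
      (by linarith) (by linarith)
    have e : (A (Λ η₁) - f) - (A (Λ η₂) - f) = A (Λ η₁) - A (Λ η₂) := by abel
    rw [e] at hd
    have hj := hj_lip η₁ η₂ (Λ η₁) (Λ η₂)
    have hA := hA_mono (Λ η₁) (Λ η₂)
    have hkey : m * ‖Λ η₁ - Λ η₂‖^2 ≤ α * ‖η₁ - η₂‖ * ‖Λ η₁ - Λ η₂‖ := by linarith
    rcases eq_or_lt_of_le (norm_nonneg (Λ η₁ - Λ η₂)) with h0 | h0
    · rw [← h0]
      positivity
    · have h7 : (m * ‖Λ η₁ - Λ η₂‖) * ‖Λ η₁ - Λ η₂‖ ≤ (α * ‖η₁ - η₂‖) * ‖Λ η₁ - Λ η₂‖ := by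
        nlinarith [hkey]
      have h8 : m * ‖Λ η₁ - Λ η₂‖ ≤ α * ‖η₁ - η₂‖ := le_of_mul_le_mul_right h7 h0
      rw [hκdef, div_mul_eq_mul_div, le_div_iff₀ hm]
      linarith [h8]
  have hcontr : ContractingWith ⟨κ, hκ0⟩ Λ := by
    constructor
    · exact_mod_cast hκ1
    · apply LipschitzWith.of_dist_le_mul
      intro x y
      rw [dist_eq_norm, dist_eq_norm]
      exact hΛlip x y
  obtain ⟨u, hu, -⟩ := hcontr.exists_fixedPoint hK_ne.some (edist_ne_top _ _)
  have hufix : Λ u = u := hu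
  have huK : u ∈ K := hufix ▸ hΛK u
  have husol : ∀ v ∈ K, ⟪A u, v - u⟫_ℝ + j u v - j u u ≥ ⟪f, v - u⟫_ℝ := by
    intro v hv
    have h := hΛvi u v hv
    rw [hufix] at h
    rw [inner_sub_left] at h
    linarith
  refine ⟨u, ⟨huK, husol⟩, ?_⟩
  rintro u' ⟨hu'K, hu'sol⟩
  have hu'P : u' ∈ K ∧ ∀ v ∈ K, 0 ≤ ⟪A u' - f, v - u'⟫_ℝ + j u' v - j u' u' := by
    refine ⟨hu'K, fun v hv => ?_⟩
    have := hu'sol v hv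
    rw [inner_sub_left]
    linarith
  have hΛP : Λ u' ∈ K ∧ ∀ v ∈ K, 0 ≤ ⟪A (Λ u') - f, v - Λ u'⟫_ℝ + j u' v - j u' (Λ u') :=
    ⟨hΛK u', hΛvi u'⟩
  have hfix' : Λ u' = u' := ((hevi u').unique hΛP hu'P)
  exact hcontr.fixedPoint_unique' hfix' hu
end

section
/- Let X be a real Hilbert space, K a nonempty closed convex subset of X, A : X → X an operator for which there exist constants m > 0 and M > 0 with (Au − Av, u − v)_X ≥ m‖u − v‖_X² and ‖Au − Av‖_X ≤ M‖u − v‖_X for all u, v ∈ X, and j : X × X → ℝ such that for every η ∈ X the map v ↦ j(η, v) is convex and lower semicontinuous, and there exists α ≥ 0 with j(η, ṽ) − j(η, v) + j(η̃, v) − j(η̃, ṽ) ≤ α‖η − η̃‖_X‖v − ṽ‖_X for all η, η̃, v, ṽ ∈ X; assume m > α and f ∈ X. Let K* be a nonempty closed convex subset of X with K* ⊆ K, let G : X → X be a monotone Lipschitz continuous operator, and let λ > 0. Then: (i) there exists a unique u* ∈ K* such that (Au*, v − u*)_X + j(u*, v) − j(u*, u*) ≥ (f, v − u*)_X for all v ∈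 K*; and (ii) there exists a unique u_λ ∈ K such that (Au_λ, v − u_λ)_X + (1/λ)(Gu_λ, v − u_λ)_X + j(u_λ, v) − j(u_λ, u_λ) ≥ (f, v − u_λ)_X for all v ∈ K. -/
/-!
For a strongly monotone Lipschitz operator `B` and fixed `η`, the inequality with `φ = j η` is
solved by a contraction argument: with `ρ = m / M ^ 2`, its solutions are the fixed points of
`w ↦ prox (w + ρ • (f - B w))`, where `prox z` minimizes the strongly convex function
`v ↦ ‖v - z‖ ^ 2 / 2 + ρ φ v` on the constraint set and is nonexpansive, while
`w ↦ w - ρ • B w` is a contraction by strong monotonicity.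
The solution map `η ↦ S η` is then `α / m`-Lipschitz, so its fixed point is the unique solution
of the quasi-variational inequality. Both problems of the theorem are of this form, the second
one with the strongly monotone Lipschitz operator `A + λ⁻¹ G` on `K`.
-/

open scoped InnerProductSpace
open Set Filter Topology

section Minimization

variable {E : Type*} [NormedAddCommGroup E] [NormedSpace ℝ E] {C : Set E} {F : E → ℝ} {m : ℝ}

theorem StrongConvexOn.midpoint_le (hF : StrongConvexOn C m F) {p q : E} (hp : p ∈ C)
    (hq : q ∈ C) : F (midpoint ℝ p q) + m / 8 * ‖p - q‖ ^ 2 ≤ (F p + F q) / 2 := by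
  have h := hF.2 hp hq (by norm_num : (0 : ℝ) ≤ 1 / 2) (by norm_num : (0 : ℝ) ≤ 1 / 2)
    (by norm_num)
  rw [midpoint_eq_smul_add, smul_add]
  simp only [smul_eq_mul] at h
  norm_num at h ⊢
  linarith

theorem StrongConvexOn.exists_isMinOn [CompleteSpace E] (hF : StrongConvexOn C m F) (hm : 0 < m)
    (hC : IsClosed C) (hne : C.Nonempty) (hF_lsc : LowerSemicontinuous F)
    (hF_bdd : BddBelow (F '' C)) : ∃ u ∈ C, IsMinOn F C u := by
  set d := sInf (F '' C)
  have hd_le : ∀ v ∈ C, d ≤ F v := fun v hv => csInf_le hF_bdd (mem_image_of_mem F hv)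
  have hseq : ∀ n : ℕ, ∃ w ∈ C, F w < d + 1 / (n + 1) := fun n => by
    obtain ⟨_, ⟨w, hw, rfl⟩, h⟩ := Real.lt_sInf_add_pos (hne.image F) Nat.one_div_pos_of_nat
    exact ⟨w, hw, h⟩
  choose w hwC hwF using hseq
  have hdist : ∀ n k N : ℕ, N ≤ n → N ≤ k → dist (w n) (w k) ≤ √(8 / m * (1 / (N + 1))) := by
    intro n k N hn hk
    have hmid := hF.midpoint_le (hwC n) (hwC k)
    have hdmid := hd_le _ (hF.1.midpoint_mem (hwC n) (hwC k))
    have hn' : (1 : ℝ) / (n + 1) ≤ 1 / (N + 1) := Nat.one_div_le_one_div hn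
    have hk' : (1 : ℝ) / (k + 1) ≤ 1 / (N + 1) := Nat.one_div_le_one_div hk
    rw [dist_eq_norm, ← Real.sqrt_sq (norm_nonneg _)]
    refine Real.sqrt_le_sqrt ?_
    rw [div_mul_eq_mul_div, le_div_iff₀ hm]
    nlinarith [hwF n, hwF k]
  have hlim : Tendsto (fun N : ℕ => √(8 / m * (1 / (N + 1)))) atTop (𝓝 0) := by
    simpa [Function.comp_def] using
      ((Real.continuous_sqrt.comp (continuous_const_mul (8 / m))).tendsto 0).comp
        tendsto_one_div_add_atTop_nhds_zero_nat
  obtain ⟨u, hu⟩ := cauchySeq_tendsto_of_complete (cauchySeq_of_le_tendsto_0 _ hdist hlim)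
  have hFw : Tendsto (fun n => F (w n)) atTop (𝓝 d) :=
    tendsto_of_tendsto_of_tendsto_of_le_of_le tendsto_const_nhds
      (by simpa using tendsto_one_div_add_atTop_nhds_zero_nat.const_add d)
      (fun n => hd_le _ (hwC n)) (fun n => (hwF n).le)
  have hFu : F u ≤ d := le_of_forall_lt_imp_le_of_dense fun y hy =>
    ge_of_tendsto hFw ((hu.eventually (hF_lsc u y hy)).mono fun _ => le_of_lt)
  exact ⟨u, hC.mem_of_tendsto hu (.of_forall hwC), fun v hv => hFu.trans (hd_le v hv)⟩

theorem StrongConvexOn.add_mul_norm_sub_sq_le (hF : StrongConvexOn C m F) {u v : E}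
    (hu : u ∈ C) (hv : v ∈ C) (hmin : IsMinOn F C u) :
    F u + m / 2 * ‖v - u‖ ^ 2 ≤ F v := by
  have hseg : ∀ t ∈ Ioc (0 : ℝ) 1, F u + m / 2 * (1 - t) * ‖v - u‖ ^ 2 ≤ F v := by
    rintro t ⟨ht0, ht1⟩
    have hmin_t : F u ≤ F ((1 - t) • u + t • v) :=
      hmin (hF.1 hu hv (sub_nonneg.2 ht1) ht0.le (sub_add_cancel 1 t))
    have hconv := hF.2 hu hv (sub_nonneg.2 ht1) ht0.le (sub_add_cancel 1 t)
    rw [norm_sub_rev, smul_eq_mul, smul_eq_mul] at hconv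
    refine le_of_mul_le_mul_left ?_ ht0
    linarith
  have hcont : Tendsto (fun t : ℝ => F u + m / 2 * (1 - t) * ‖v - u‖ ^ 2) (𝓝[>] 0)
      (𝓝 (F u + m / 2 * (1 - 0) * ‖v - u‖ ^ 2)) :=
    ((Continuous.tendsto (by fun_prop) 0)).mono_left nhdsWithin_le_nhds
  simpa using le_of_tendsto hcont (eventually_of_mem (Ioc_mem_nhdsGT one_pos) hseg)

theorem ConvexOn.bddBelow_range_norm_sub_sq_add {φ : E → ℝ} (hφ : ConvexOn ℝ univ φ)
    (hφ_lsc : LowerSemicontinuous φ) (z : E) :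
    BddBelow (range fun v => ‖v - z‖ ^ 2 / 2 + φ v) := by
  obtain ⟨l, c, hl, -⟩ := hφ.exists_affine_le_of_lt (𝕜 := ℝ) (mem_univ 0) (sub_one_lt (φ 0))
    isClosed_univ (hφ_lsc.lowerSemicontinuousOn univ)
  refine ⟨l z + c - ‖l‖ ^ 2 / 2, forall_mem_range.2 fun v => ?_⟩
  have hlv : l v + c ≤ φ v := by simpa using hl ⟨v, mem_univ v⟩
  have hl_sub : -(‖l‖ * ‖v - z‖) ≤ l v - l z := by
    rw [← map_sub]
    exact (neg_le_neg (l.le_opNorm _)).trans (neg_abs_le _)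
  nlinarith [sq_nonneg (‖v - z‖ - ‖l‖)]

end Minimization

section VariationalInequality

variable {X : Type*} [NormedAddCommGroup X] [InnerProductSpace ℝ X]

theorem strongConvexOn_norm_sub_sq_div_two_add {C : Set X} {φ : X → ℝ} (hφ : ConvexOn ℝ C φ)
    (z : X) : StrongConvexOn C 1 fun v => ‖v - z‖ ^ 2 / 2 + φ v := by
  rw [strongConvexOn_iff_convex]
  have h : (fun v => ‖v - z‖ ^ 2 / 2 + φ v - 1 / 2 * ‖v‖ ^ 2) =
      φ + ⇑(-(innerSL ℝ z : X →L[ℝ] ℝ) : X →ₗ[ℝ] ℝ) + fun _ => ‖z‖ ^ 2 / 2 := by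
    ext v
    simp only [norm_sub_sq_real, Pi.add_apply, LinearMap.neg_apply, ContinuousLinearMap.coe_coe,
      innerSL_apply_apply, real_inner_comm z v]
    ring
  rw [h]
  exact (hφ.add ((-(innerSL ℝ z : X →L[ℝ] ℝ) : X →ₗ[ℝ] ℝ).convexOn hφ.1)).add_const _

/-- With `B = id`, a solution is the proximal point of `f` for `φ` on `C`. -/
def IsVISolution (C : Set X) (B : X → X) (φ : X → ℝ) (f u : X) : Prop :=
  u ∈ C ∧ ∀ v ∈ C, ⟪f, v - u⟫_ℝ ≤ ⟪B u, v - u⟫_ℝ + φ v - φ u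

theorem exists_isVISolution_id [CompleteSpace X] {C : Set X} (hC : IsClosed C)
    (hne : C.Nonempty) (hC_convex : Convex ℝ C) {φ : X → ℝ} (hφ : ConvexOn ℝ univ φ)
    (hφ_lsc : LowerSemicontinuous φ) (z : X) : ∃ u, IsVISolution C id φ z u := by
  have hF := strongConvexOn_norm_sub_sq_div_two_add (hφ.subset (subset_univ C) hC_convex) z
  obtain ⟨u, hu, hmin⟩ := hF.exists_isMinOn one_pos hC hne
    ((((continuous_norm.comp (continuous_id.sub continuous_const)).pow 2).div_const 2
      ).lowerSemicontinuous.add hφ_lsc)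
    ((hφ.bddBelow_range_norm_sub_sq_add hφ_lsc z).mono (image_subset_range _ _))
  refine ⟨u, hu, fun v hv => ?_⟩
  have h := hF.add_mul_norm_sub_sq_le hu hv hmin
  have hsplit : v - z = (v - u) + (u - z) := by abel
  rw [hsplit, norm_add_sq_real, real_inner_comm, inner_sub_left] at h
  change ⟪z, v - u⟫_ℝ ≤ ⟪u, v - u⟫_ℝ + φ v - φ u
  linarith

theorem IsVISolution.inner_sub_le {C : Set X} {B : X → X} {φ₁ φ₂ : X → ℝ} {f₁ f₂ u₁ u₂ : X}
    (hu₁ : IsVISolution C B φ₁ f₁ u₁) (hu₂ : IsVISolution C B φ₂ f₂ u₂) :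
    ⟪B u₁ - B u₂, u₁ - u₂⟫_ℝ ≤ ⟪f₁ - f₂, u₁ - u₂⟫_ℝ + (φ₁ u₂ - φ₁ u₁ + φ₂ u₁ - φ₂ u₂) := by
  have h₁ := hu₁.2 u₂ hu₂.1
  have h₂ := hu₂.2 u₁ hu₁.1
  rw [← neg_sub u₁ u₂, inner_neg_right, inner_neg_right] at h₁
  rw [inner_sub_left, inner_sub_left]
  linarith

theorem IsVISolution.norm_sub_le_of_id {C : Set X} {φ : X → ℝ} {z₁ z₂ u₁ u₂ : X}
    (hu₁ : IsVISolution C id φ z₁ u₁) (hu₂ : IsVISolution C id φ z₂ u₂) :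
    ‖u₁ - u₂‖ ≤ ‖z₁ - z₂‖ := by
  have h := hu₁.inner_sub_le hu₂
  rw [id, id, real_inner_self_eq_norm_sq] at h
  nlinarith [real_inner_le_norm (z₁ - z₂) (u₁ - u₂), norm_nonneg (u₁ - u₂),
    norm_nonneg (z₁ - z₂)]

/-- `ρ = m / M ^ 2` minimizes `1 - 2 ρ m + ρ ^ 2 M ^ 2`, the squared Lipschitz constant of
`w ↦ w - ρ • B w` obtained from strong monotonicity and the Lipschitz bound. -/
theorem norm_sub_sub_smul_sub_le {B : X → X} {m M : ℝ} (hm : 0 ≤ m) (hM : 0 < M)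
    (hB_mono : ∀ u v : X, m * ‖u - v‖ ^ 2 ≤ ⟪B u - B v, u - v⟫_ℝ)
    (hB_lip : ∀ u v : X, ‖B u - B v‖ ≤ M * ‖u - v‖) (u v : X) :
    ‖(u - v) - (m / M ^ 2) • (B u - B v)‖ ≤ √(1 - m ^ 2 / M ^ 2) * ‖u - v‖ := by
  have hsq : ‖(u - v) - (m / M ^ 2) • (B u - B v)‖ ^ 2 ≤ (1 - m ^ 2 / M ^ 2) * ‖u - v‖ ^ 2 := by
    have hlip : ‖B u - B v‖ ^ 2 ≤ M ^ 2 * ‖u - v‖ ^ 2 := by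
      rw [← mul_pow]; exact pow_le_pow_left₀ (norm_nonneg _) (hB_lip u v) 2
    rw [norm_sub_sq_real, inner_smul_right, norm_smul, mul_pow, Real.norm_eq_abs, sq_abs,
      real_inner_comm]
    have hmono := mul_le_mul_of_nonneg_left (hB_mono u v) (by positivity : 0 ≤ m / M ^ 2)
    have hρ : m ^ 2 / M ^ 2 = 2 * (m / M ^ 2) * m - (m / M ^ 2) ^ 2 * M ^ 2 := by
      field_simp; ring
    rw [hρ]
    nlinarith [mul_le_mul_of_nonneg_left hlip (sq_nonneg (m / M ^ 2))]
  calc ‖(u - v) - (m / M ^ 2) • (B u - B v)‖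
      = √(‖(u - v) - (m / M ^ 2) • (B u - B v)‖ ^ 2) := (Real.sqrt_sq (norm_nonneg _)).symm
    _ ≤ √((1 - m ^ 2 / M ^ 2) * ‖u - v‖ ^ 2) := Real.sqrt_le_sqrt hsq
    _ = √(1 - m ^ 2 / M ^ 2) * ‖u - v‖ := by
      rw [Real.sqrt_mul' _ (sq_nonneg _), Real.sqrt_sq (norm_nonneg _)]

theorem IsVISolution.of_id_smul {C : Set X} {B : X → X} {φ : X → ℝ} {f u : X} {ρ : ℝ}
    (hρ : 0 < ρ) (h : IsVISolution C id (fun v => ρ • φ v) (u + ρ • (f - B u)) u) :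
    IsVISolution C B φ f u := by
  refine ⟨h.1, fun v hv => ?_⟩
  have h' := h.2 v hv
  simp only [id, smul_eq_mul, inner_add_left, real_inner_smul_left, inner_sub_left] at h'
  nlinarith

theorem exists_isVISolution [CompleteSpace X] {C : Set X} (hC : IsClosed C)
    (hne : C.Nonempty) (hC_convex : Convex ℝ C) {B : X → X} {m M : ℝ} (hm : 0 < m) (hM : 0 < M)
    (hB_mono : ∀ u v : X, m * ‖u - v‖ ^ 2 ≤ ⟪B u - B v, u - v⟫_ℝ)
    (hB_lip : ∀ u v : X, ‖B u - B v‖ ≤ M * ‖u - v‖) {φ : X → ℝ} (hφ : ConvexOn ℝ univ φ)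
    (hφ_lsc : LowerSemicontinuous φ) (f : X) : ∃ u, IsVISolution C B φ f u := by
  set ρ := m / M ^ 2
  have hρ : 0 < ρ := by positivity
  choose P hP using exists_isVISolution_id hC hne hC_convex (hφ.smul hρ.le)
    ((continuous_const_mul ρ).comp_lowerSemicontinuous hφ_lsc (monotone_mul_left_of_nonneg hρ.le))
  have hP_lip : LipschitzWith 1 P := LipschitzWith.of_dist_le_mul fun z₁ z₂ => by
    simpa [dist_eq_norm] using (hP z₁).norm_sub_le_of_id (hP z₂)
  have hstep : LipschitzWith (√(1 - m ^ 2 / M ^ 2)).toNNReal fun w => w + ρ • (f - B w) :=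
    LipschitzWith.of_dist_le' fun w₁ w₂ => by
      have h : w₁ + ρ • (f - B w₁) - (w₂ + ρ • (f - B w₂)) = (w₁ - w₂) - ρ • (B w₁ - B w₂) := by
        module
      rw [dist_eq_norm, dist_eq_norm, h]
      exact norm_sub_sub_smul_sub_le hm.le hM hB_mono hB_lip w₁ w₂
  have hcontr :
      ContractingWith (√(1 - m ^ 2 / M ^ 2)).toNNReal (P ∘ fun w => w + ρ • (f - B w)) := by
    refine ⟨Real.toNNReal_lt_one.2 ((Real.sqrt_lt' one_pos).2 ?_),
      by simpa using hP_lip.comp hstep⟩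
    have : 0 < m ^ 2 / M ^ 2 := by positivity
    linarith
  set u := ContractingWith.fixedPoint _ hcontr
  have hfix : P (u + ρ • (f - B u)) = u := hcontr.fixedPoint_isFixedPt
  have hu := hP (u + ρ • (f - B u))
  rw [hfix] at hu
  exact ⟨u, hu.of_id_smul hρ⟩

theorem IsVISolution.mul_norm_sub_le {C : Set X} {B : X → X} {m : ℝ}
    (hB_mono : ∀ u v : X, m * ‖u - v‖ ^ 2 ≤ ⟪B u - B v, u - v⟫_ℝ) {j : X → X → ℝ} {α : ℝ}
    (hα : 0 ≤ α)
    (hj_lip : ∀ η η' v v' : X, j η v' - j η v + j η' v - j η' v' ≤ α * ‖η - η'‖ * ‖v - v'‖)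
    {f η₁ η₂ u₁ u₂ : X} (hu₁ : IsVISolution C B (j η₁) f u₁)
    (hu₂ : IsVISolution C B (j η₂) f u₂) : m * ‖u₁ - u₂‖ ≤ α * ‖η₁ - η₂‖ := by
  have h := hu₁.inner_sub_le hu₂
  rw [sub_self, inner_zero_left, zero_add] at h
  have hsq : ‖u₁ - u₂‖ * (m * ‖u₁ - u₂‖) ≤ ‖u₁ - u₂‖ * (α * ‖η₁ - η₂‖) := by
    nlinarith [hB_mono u₁ u₂, hj_lip η₁ η₂ u₁ u₂]
  rcases (norm_nonneg (u₁ - u₂)).eq_or_lt with h0 | h0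
  · rw [← h0, mul_zero]
    positivity
  · exact le_of_mul_le_mul_left hsq h0

theorem existsUnique_isVISolution_self [CompleteSpace X] {C : Set X} (hC : IsClosed C)
    (hne : C.Nonempty) (hC_convex : Convex ℝ C) {B : X → X} {m M : ℝ} (hm : 0 < m) (hM : 0 < M)
    (hB_mono : ∀ u v : X, m * ‖u - v‖ ^ 2 ≤ ⟪B u - B v, u - v⟫_ℝ)
    (hB_lip : ∀ u v : X, ‖B u - B v‖ ≤ M * ‖u - v‖) {j : X → X → ℝ}
    (hj_convex : ∀ η : X, ConvexOn ℝ univ (j η)) (hj_lsc : ∀ η : X, LowerSemicontinuous (j η))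
    {α : ℝ} (hα : 0 ≤ α)
    (hj_lip : ∀ η η' v v' : X, j η v' - j η v + j η' v - j η' v' ≤ α * ‖η - η'‖ * ‖v - v'‖)
    (hmα : α < m) (f : X) : ∃! u, IsVISolution C B (j u) f u := by
  choose S hS using fun η =>
    exists_isVISolution hC hne hC_convex hm hM hB_mono hB_lip (hj_convex η) (hj_lsc η) f
  have hS_lip : LipschitzWith (α / m).toNNReal S := LipschitzWith.of_dist_le' fun η₁ η₂ => by
    rw [dist_eq_norm, dist_eq_norm, div_mul_eq_mul_div, le_div_iff₀ hm, mul_comm]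
    exact (hS η₁).mul_norm_sub_le hB_mono hα hj_lip (hS η₂)
  have hcontr : ContractingWith (α / m).toNNReal S :=
    ⟨Real.toNNReal_lt_one.2 ((div_lt_one hm).2 hmα), hS_lip⟩
  set u := ContractingWith.fixedPoint S hcontr
  have hfix : S u = u := hcontr.fixedPoint_isFixedPt
  have hu := hS u
  rw [hfix] at hu
  refine ⟨u, hu, fun w hw => ?_⟩
  have h := hw.mul_norm_sub_le hB_mono hα hj_lip hu
  have : ‖w - u‖ ≤ 0 := by nlinarith [norm_nonneg (w - u)]
  exact sub_eq_zero.1 (norm_le_zero_iff.1 this)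

end VariationalInequality

section Penalization

variable {X : Type*} [NormedAddCommGroup X] [InnerProductSpace ℝ X] {A G : X → X} {c : ℝ}

theorem mul_norm_sub_sq_le_inner_add_smul_sub {m : ℝ}
    (hA_mono : ∀ u v : X, m * ‖u - v‖ ^ 2 ≤ ⟪A u - A v, u - v⟫_ℝ)
    (hG_mono : ∀ u v : X, 0 ≤ ⟪G u - G v, u - v⟫_ℝ) (hc : 0 ≤ c) (u v : X) :
    m * ‖u - v‖ ^ 2 ≤ ⟪(A u + c • G u) - (A v + c • G v), u - v⟫_ℝ := by
  rw [add_sub_add_comm, ← smul_sub, inner_add_left, real_inner_smul_left]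
  nlinarith [hA_mono u v, mul_nonneg hc (hG_mono u v)]

theorem norm_add_smul_sub_le {M L : ℝ} (hA_lip : ∀ u v : X, ‖A u - A v‖ ≤ M * ‖u - v‖)
    (hG_lip : ∀ u v : X, ‖G u - G v‖ ≤ L * ‖u - v‖) (hc : 0 ≤ c) (u v : X) :
    ‖(A u + c • G u) - (A v + c • G v)‖ ≤ (M + c * L) * ‖u - v‖ := by
  rw [add_sub_add_comm, ← smul_sub, add_mul, mul_assoc]
  refine (norm_add_le _ _).trans (add_le_add (hA_lip u v) ?_)
  rw [norm_smul, Real.norm_of_nonneg hc]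
  exact mul_le_mul_of_nonneg_left (hG_lip u v) hc

end Penalization

theorem penalty_problems_exist_unique_general
    {X : Type*} [NormedAddCommGroup X] [InnerProductSpace ℝ X] [CompleteSpace X]
    (K : Set X) (hK_ne : K.Nonempty) (hK_closed : IsClosed K) (hK_convex : Convex ℝ K)
    (A : X → X) (m M : ℝ) (hm : 0 < m) (hM : 0 < M)
    (hA_mono : ∀ u v : X, m * ‖u - v‖ ^ 2 ≤ ⟪A u - A v, u - v⟫_ℝ)
    (hA_lip : ∀ u v : X, ‖A u - A v‖ ≤ M * ‖u - v‖)
    (j : X → X → ℝ)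
    (hj_convex : ∀ η : X, ConvexOn ℝ Set.univ (j η))
    (hj_lsc : ∀ η : X, LowerSemicontinuous (j η))
    (α : ℝ) (hα : 0 ≤ α)
    (hj_lip : ∀ η η' v v' : X,
      j η v' - j η v + j η' v - j η' v' ≤ α * ‖η - η'‖ * ‖v - v'‖)
    (hmα : α < m) (f : X)
    (Kstar : Set X) (hKs_ne : Kstar.Nonempty) (hKs_closed : IsClosed Kstar)
    (hKs_convex : Convex ℝ Kstar)
    (G : X → X)
    (hG_mono : ∀ u v : X, 0 ≤ ⟪G u - G v, u - v⟫_ℝ)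
    (hG_lip : ∃ L : ℝ, 0 < L ∧ ∀ u v : X, ‖G u - G v‖ ≤ L * ‖u - v‖)
    (lam : ℝ) (hlam : 0 < lam) :
    (∃! ustar : X, ustar ∈ Kstar ∧ ∀ v ∈ Kstar,
      ⟪A ustar, v - ustar⟫_ℝ + j ustar v - j ustar ustar ≥ ⟪f, v - ustar⟫_ℝ) ∧
    (∃! ulam : X, ulam ∈ K ∧ ∀ v ∈ K,
      ⟪A ulam, v - ulam⟫_ℝ + (1 / lam) * ⟪G ulam, v - ulam⟫_ℝ
        + j ulam v - j ulam ulam ≥ ⟪f, v - ulam⟫_ℝ) := by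
  refine ⟨existsUnique_isVISolution_self hKs_closed hKs_ne hKs_convex hm hM hA_mono hA_lip
    hj_convex hj_lsc hα hj_lip hmα f, ?_⟩
  obtain ⟨L, hL, hG_lip⟩ := hG_lip
  have hc : 0 ≤ 1 / lam := by positivity
  refine (existsUnique_congr fun u => ?_).1 (existsUnique_isVISolution_self hK_closed hK_ne
    hK_convex hm (by positivity : 0 < M + 1 / lam * L)
    (mul_norm_sub_sq_le_inner_add_smul_sub hA_mono hG_mono hc)
    (norm_add_smul_sub_le hA_lip hG_lip hc) hj_convex hj_lsc hα hj_lip hmα f)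
  simp only [IsVISolution, inner_add_left, real_inner_smul_left, ge_iff_le]

theorem penalty_problems_exist_unique
    {X : Type*} [NormedAddCommGroup X] [InnerProductSpace ℝ X] [CompleteSpace X]
    (K : Set X) (hK_ne : K.Nonempty) (hK_closed : IsClosed K) (hK_convex : Convex ℝ K)
    (A : X → X) (m M : ℝ) (hm : 0 < m) (hM : 0 < M)
    (hA_mono : ∀ u v : X, m * ‖u - v‖ ^ 2 ≤ ⟪A u - A v, u - v⟫_ℝ)
    (hA_lip : ∀ u v : X, ‖A u - A v‖ ≤ M * ‖u - v‖)
    (j : X → X → ℝ)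
    (hj_convex : ∀ η : X, ConvexOn ℝ Set.univ (j η))
    (hj_lsc : ∀ η : X, LowerSemicontinuous (j η))
    (α : ℝ) (hα : 0 ≤ α)
    (hj_lip : ∀ η η' v v' : X,
      j η v' - j η v + j η' v - j η' v' ≤ α * ‖η - η'‖ * ‖v - v'‖)
    (hmα : α < m) (f : X)
    (Kstar : Set X) (hKs_ne : Kstar.Nonempty) (hKs_closed : IsClosed Kstar)
    (hKs_convex : Convex ℝ Kstar) (hKs_sub : Kstar ⊆ K)
    (G : X → X)
    (hG_mono : ∀ u v : X, 0 ≤ ⟪G u - G v, u - v⟫_ℝ)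
    (hG_lip : ∃ L : ℝ, 0 < L ∧ ∀ u v : X, ‖G u - G v‖ ≤ L * ‖u - v‖)
    (lam : ℝ) (hlam : 0 < lam) :
    (∃! ustar : X, ustar ∈ Kstar ∧ ∀ v ∈ Kstar,
      ⟪A ustar, v - ustar⟫_ℝ + j ustar v - j ustar ustar ≥ ⟪f, v - ustar⟫_ℝ) ∧
    (∃! ulam : X, ulam ∈ K ∧ ∀ v ∈ K,
      ⟪A ulam, v - ulam⟫_ℝ + (1 / lam) * ⟪G ulam, v - ulam⟫_ℝ
        + j ulam v - j ulam ulam ≥ ⟪f, v - ulam⟫_ℝ) :=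
  penalty_problems_exist_unique_general K hK_ne hK_closed hK_convex A m M hm hM hA_mono hA_lip j
    hj_convex hj_lsc α hα hj_lip hmα f Kstar hKs_ne hKs_closed hKs_convex G hG_mono hG_lip lam hlam
end

section
/- Let X be a real Hilbert space, K a nonempty closed convex subset of X, A : X → X an operator for which there exist constants m > 0 and M > 0 with (Au − Av, u − v)_X ≥ m‖u − v‖_X² and ‖Au − Av‖_X ≤ M‖u − v‖_X for all u, v ∈ X, and j : X × X → ℝ such that for every η ∈ X the map v ↦ j(η, v) is convex and lower semicontinuous, and there exists α ≥ 0 with j(η, ṽ) − j(η, v) + j(η̃, v) − j(η̃, ṽ) ≤ α‖η − η̃‖_X‖v − ṽ‖_X for all η, η̃, v, ṽ ∈ X; assume m > α and f ∈ X. Let K* be a nonempty closed convex subset of X with K* ⊆ K, and let G : X → X be a monotone Lipschitz continuous operator satisfying: (Gu, v − u)_X ≤ 0 for all u ∈ K and v ∈ K*, and, for u ∈ K, if (Gu, v − u)_X = 0 for all v ∈ K* then u ∈ K*. Let {λ_n} be a sequence of positive reals with λ_n → 0, for each n let u_n ∈ K be the unique element with (Au_n, v − u_n)_X + (1/λ_n)(Gu_n,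 v − u_n)_X + j(u_n, v) − j(u_n, u_n) ≥ (f, v − u_n)_X for all v ∈ K, and let u* ∈ K* be the unique element with (Au*, v − u*)_X + j(u*, v) − j(u*, u*) ≥ (f, v − u*)_X for all v ∈ K*. Then u_n → u* strongly in X as n → ∞. -/
/-!
Testing the penalized inequality with `v = u*` (where the penalty term is `≤ 0`) gives
`(m - α) ‖uₙ - u*‖² ≤ ⟪A u* - f, u* - uₙ⟫ + j(u*, u*) - j(u*, uₙ)`, which bounds `uₙ` because
`j(u*, ·)` has an affine minorant. Along any ultrafilter, `uₙ` then has a weak limit `ū ∈ K`.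
Multiplying the penalized inequality by `λₙ → 0` shows `⟪G uₙ, v - uₙ⟫` is asymptotically `≥ 0`
for `v ∈ K`; by monotonicity of `G` this gives `⟪G v, v - ū⟫ ≥ 0` on `K`, and Minty's trick turns
it into `⟪G ū, v - ū⟫ ≥ 0`, so `ū ∈ K*`. Finally the right-hand side of the estimate is weakly
upper semicontinuous and nonpositive at `ū` by the inequality for `u*`, so `‖uₙ - u*‖ → 0`.
-/

open scoped InnerProductSpace
open Filter Topology Set

section WeakTopology

variable {E : Type*} [AddCommGroup E] [Module ℝ E] [TopologicalSpace E] [IsTopologicalAddGroup E]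
  [ContinuousSMul ℝ E] [LocallyConvexSpace ℝ E]

theorem Convex.isClosed_toWeakSpace_image {s : Set E} (hs : Convex ℝ s) (hc : IsClosed s) :
    IsClosed (toWeakSpace ℝ E '' s) := by
  rw [← hc.closure_eq, hs.toWeakSpace_closure ℝ]
  exact isClosed_closure

theorem Convex.mem_of_tendsto_toWeakSpace {ι : Type*} {l : Filter ι} [l.NeBot] {s : Set E}
    (hs : Convex ℝ s) (hc : IsClosed s) {x : ι → E} {z : E}
    (hz : Tendsto (fun i => toWeakSpace ℝ E (x i)) l (𝓝 (toWeakSpace ℝ E z)))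
    (hx : ∀ᶠ i in l, x i ∈ s) : z ∈ s := by
  have := (hs.isClosed_toWeakSpace_image hc).mem_of_tendsto hz
    (hx.mono fun i => mem_image_of_mem _)
  rwa [(toWeakSpace ℝ E).injective.mem_set_image] at this

theorem LowerSemicontinuous.comp_toWeakSpace_symm {φ : E → ℝ} (hφ : LowerSemicontinuous φ)
    (hφcv : ConvexOn ℝ univ φ) :
    LowerSemicontinuous fun w : WeakSpace ℝ E => φ ((toWeakSpace ℝ E).symm w) := by
  rw [lowerSemicontinuous_iff_isClosed_preimage] at hφ ⊢
  intro y
  have hconv : Convex ℝ {x | φ x ≤ y} := by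
    simpa only [mem_univ, true_and] using hφcv.convex_le y
  change IsClosed ((toWeakSpace ℝ E).symm ⁻¹' (φ ⁻¹' Iic y))
  rw [← LinearEquiv.image_eq_preimage_symm]
  exact hconv.isClosed_toWeakSpace_image (hφ y)

end WeakTopology

theorem le_of_mul_sq_le_mul_add {a b c d : ℝ} (hc : 0 < c) (hd : 0 ≤ d)
    (h : c * d ^ 2 ≤ a * d + b) : d ≤ (|a| + |b|) / c + 1 := by
  rw [div_add_one hc.ne', le_div_iff₀ hc]
  rcases le_or_gt d 1 with hd1 | hd1
  · nlinarith [abs_nonneg a, abs_nonneg b]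
  · nlinarith [le_abs_self a, le_abs_self b, abs_nonneg b]

theorem ConvexOn.exists_sub_mul_norm_sub_le {E : Type*} [NormedAddCommGroup E] [NormedSpace ℝ E]
    {φ : E → ℝ} (hφcv : ConvexOn ℝ univ φ) (hφ : LowerSemicontinuous φ) (w : E) :
    ∃ a b : ℝ, ∀ v, b - a * ‖v - w‖ ≤ φ v := by
  obtain ⟨l, c, hle, hw⟩ := hφcv.exists_affine_le_of_lt (𝕜 := ℝ) (mem_univ w)
    (sub_one_lt (φ w)) isClosed_univ (lowerSemicontinuousOn_univ_iff.2 hφ)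
  refine ⟨‖l‖, φ w - 1, fun v => ?_⟩
  have hv : l v + c ≤ φ v := by simpa using hle ⟨v, mem_univ v⟩
  have hlw : -(‖l‖ * ‖v - w‖) ≤ l (v - w) := neg_le_of_abs_le (l.le_opNorm _)
  simp only [RCLike.re_to_real] at hw
  rw [map_sub] at hlw
  linarith

section Hilbert

variable {X : Type*} [NormedAddCommGroup X] [InnerProductSpace ℝ X]

theorem tendsto_toWeakSpace_iff_inner [CompleteSpace X] {ι : Type*} {l : Filter ι} {x : ι → X}
    {z : X} :
    Tendsto (fun i => toWeakSpace ℝ X (x i)) l (𝓝 (toWeakSpace ℝ X z)) ↔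
      ∀ y, Tendsto (fun i => ⟪y, x i⟫_ℝ) l (𝓝 ⟪y, z⟫_ℝ) := by
  have hinj : Function.Injective (topDualPairing ℝ X).flip := fun a b hab =>
    ext_inner_left ℝ fun v => by simpa using LinearMap.congr_fun hab (innerSL ℝ v)
  refine (WeakBilin.tendsto_iff_forall_eval_tendsto _ hinj).trans
    ⟨fun h y => h (innerSL ℝ y), fun h ℓ => ?_⟩
  have hℓ : Tendsto (fun i => ℓ (x i)) l (𝓝 (ℓ z)) := by
    simpa [InnerProductSpace.toDual_symm_apply] using h ((InnerProductSpace.toDual ℝ X).symm ℓ)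
  exact hℓ

theorem Ultrafilter.exists_tendsto_toWeakSpace_of_norm_le [CompleteSpace X] {ι : Type*}
    (U : Ultrafilter ι) {x : ι → X} {C : ℝ} (hx : ∀ i, ‖x i‖ ≤ C) :
    ∃ z, Tendsto (fun i => toWeakSpace ℝ X (x i)) U (𝓝 (toWeakSpace ℝ X z)) := by
  -- Banach–Alaoglu in the dual, pulled back through the Riesz isomorphism.
  let x' : ι → WeakDual ℝ X := fun i => StrongDual.toWeakDual (InnerProductSpace.toDual ℝ X (x i))
  have hmem : ∀ i, x' i ∈ WeakDual.toStrongDual ⁻¹' Metric.closedBall 0 C := fun i => by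
    simpa [x'] using hx i
  obtain ⟨φ, -, hφ⟩ := (WeakDual.isCompact_closedBall 0 C).ultrafilter_le_nhds (U.map x')
    (le_principal_iff.2 (mem_map.2 (univ_mem' hmem)))
  refine ⟨(InnerProductSpace.toDual ℝ X).symm (WeakDual.toStrongDual φ),
    tendsto_toWeakSpace_iff_inner.2 fun y => ?_⟩
  rw [real_inner_comm, InnerProductSpace.toDual_symm_apply]
  exact (((WeakDual.eval_continuous y).tendsto φ).comp hφ).congr fun i => real_inner_comm _ _

theorem Convex.inner_sub_nonneg_of_minty {G : X → X} (hG : Continuous G) {K : Set X}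
    (hK : Convex ℝ K) {x : X} (hx : x ∈ K) (h : ∀ z ∈ K, 0 ≤ ⟪G z, z - x⟫_ℝ) :
    ∀ v ∈ K, 0 ≤ ⟪G x, v - x⟫_ℝ := by
  intro v hv
  have hseg : ∀ t ∈ Ioc (0 : ℝ) 1, 0 ≤ ⟪G (x + t • (v - x)), v - x⟫_ℝ := by
    rintro t ⟨ht0, ht1⟩
    have := h _ (hK.add_smul_sub_mem hx hv ⟨ht0.le, ht1⟩)
    rwa [add_sub_cancel_left, real_inner_smul_right, mul_nonneg_iff_of_pos_left ht0] at this
  have hlim : Tendsto (fun t : ℝ => ⟪G (x + t • (v - x)), v - x⟫_ℝ) (𝓝[>] 0)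
      (𝓝 ⟪G x, v - x⟫_ℝ) := by
    have hc : Continuous fun t : ℝ => ⟪G (x + t • (v - x)), v - x⟫_ℝ := by fun_prop
    simpa using hc.continuousWithinAt.tendsto (x := 0) (s := Ioi 0)
  exact ge_of_tendsto hlim (mem_of_superset (Ioc_mem_nhdsGT zero_lt_one) hseg)

theorem mul_sq_norm_sub_le_of_penalized {A G : X → X} {j : X → X → ℝ} {m α lam : ℝ} {f u w : X}
    (hA_mono : ∀ u v : X, m * ‖u - v‖ ^ 2 ≤ ⟪A u - A v, u - v⟫_ℝ)
    (hj_lip : ∀ η η' v v' : X, j η v' - j η v + j η' v - j η' v' ≤ α * ‖η - η'‖ * ‖v - v'‖)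
    (hG : ⟪G u, w - u⟫_ℝ ≤ 0) (hlam : 0 < lam)
    (hu : ⟪A u, w - u⟫_ℝ + (1 / lam) * ⟪G u, w - u⟫_ℝ + j u w - j u u ≥ ⟪f, w - u⟫_ℝ) :
    (m - α) * ‖u - w‖ ^ 2 ≤ ⟪A w - f, w - u⟫_ℝ + j w w - j w u := by
  have hpen : (1 / lam) * ⟪G u, w - u⟫_ℝ ≤ 0 :=
    mul_nonpos_of_nonneg_of_nonpos (one_div_pos.2 hlam).le hG
  have hA : m * ‖u - w‖ ^ 2 ≤ ⟪A w, w - u⟫_ℝ - ⟪A u, w - u⟫_ℝ :=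
    (hA_mono u w).trans_eq (by rw [← neg_sub w u, inner_neg_right, inner_sub_left]; ring)
  have hj : j u w - j u u + j w u - j w w ≤ α * ‖u - w‖ ^ 2 :=
    (hj_lip u w u w).trans_eq (by ring)
  rw [inner_sub_left]
  linarith

theorem exists_neg_mul_le_inner_of_penalized {ι : Type*} {A G : X → X} {j : X → X → ℝ}
    {M α a b D : ℝ} {f w v : X} {lam : ι → ℝ} {u : ι → X} (hM : 0 ≤ M) (hα : 0 ≤ α)
    (hA_lip : ∀ u v : X, ‖A u - A v‖ ≤ M * ‖u - v‖)
    (hj_lip : ∀ η η' v v' : X, j η v' - j η v + j η' v - j η' v' ≤ α * ‖η - η'‖ * ‖v - v'‖)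
    (hj_lower : ∀ x, b - a * ‖x - w‖ ≤ j w x) (hD : ∀ i, ‖u i - w‖ ≤ D)
    (hlam : ∀ i, 0 < lam i)
    (hu : ∀ i, ⟪A (u i), v - u i⟫_ℝ + (1 / lam i) * ⟪G (u i), v - u i⟫_ℝ
        + j (u i) v - j (u i) (u i) ≥ ⟪f, v - u i⟫_ℝ) :
    ∃ C, ∀ i, -(lam i * C) ≤ ⟪G (u i), v - u i⟫_ℝ := by
  set e := ‖v - w‖
  refine ⟨(M * D + ‖A w - f‖) * (D + e) + α * D * (D + e) + j w v + |a| * D - b, fun i => ?_⟩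
  have hD0 : 0 ≤ D := (norm_nonneg _).trans (hD i)
  have hdist : ‖v - u i‖ ≤ D + e := by
    rw [← sub_sub_sub_cancel_right v (u i) w]
    linarith [norm_sub_le (v - w) (u i - w), hD i]
  have hA : ⟪A (u i) - f, v - u i⟫_ℝ ≤ (M * D + ‖A w - f‖) * (D + e) := by
    calc ⟪A (u i) - f, v - u i⟫_ℝ ≤ ‖A (u i) - f‖ * ‖v - u i‖ := real_inner_le_norm _ _
      _ ≤ (‖A (u i) - A w‖ + ‖A w - f‖) * ‖v - u i‖ := by
          gcongr; exact norm_sub_le_norm_sub_add_norm_sub _ _ _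
      _ ≤ (M * D + ‖A w - f‖) * (D + e) := by
          gcongr
          exact (hA_lip _ _).trans (by gcongr; exact hD i)
  have hj : j (u i) v - j (u i) (u i) ≤ α * D * (D + e) + j w v + |a| * D - b := by
    have h := hj_lip (u i) w (u i) v
    have hη : α * ‖u i - w‖ * ‖u i - v‖ ≤ α * D * (D + e) := by
      rw [norm_sub_rev (u i) v]; gcongr
      exact hD i
    have hlow := hj_lower (u i)
    have ha : a * ‖u i - w‖ ≤ |a| * D :=
      (mul_le_mul_of_nonneg_right (le_abs_self a) (norm_nonneg _)).trans (by gcongr; exact hD i)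
    linarith
  have hE : -((M * D + ‖A w - f‖) * (D + e) + α * D * (D + e) + j w v + |a| * D - b)
      ≤ (1 / lam i) * ⟪G (u i), v - u i⟫_ℝ := by
    have := hu i
    rw [inner_sub_left] at hA
    linarith
  have := mul_le_mul_of_nonneg_left hE (hlam i).le
  rwa [← mul_assoc, mul_one_div_cancel (hlam i).ne', one_mul, mul_neg] at this

theorem exists_norm_sub_le_of_sq_le {ι : Type*} {φ : X → ℝ} {a b c : ℝ} {g w : X} {u : ι → X}
    (hc : 0 < c) (hφ : ∀ x, b - a * ‖x - w‖ ≤ φ x)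
    (h : ∀ i, c * ‖u i - w‖ ^ 2 ≤ ⟪g, w - u i⟫_ℝ + φ w - φ (u i)) :
    ∃ D, ∀ i, ‖u i - w‖ ≤ D := by
  refine ⟨(|‖g‖ + a| + |φ w - b|) / c + 1, fun i => le_of_mul_sq_le_mul_add hc (norm_nonneg _) ?_⟩
  have hg : ⟪g, w - u i⟫_ℝ ≤ ‖g‖ * ‖u i - w‖ := norm_sub_rev w (u i) ▸ real_inner_le_norm _ _
  linarith [h i, hφ (u i)]

theorem inner_apply_sub_nonneg_of_penalty {ι : Type*} {l : Filter ι} [l.NeBot] {G : X → X}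
    {K : Set X} {lam : ι → ℝ} {u : ι → X} {z : X} (hG_mono : ∀ u v : X, 0 ≤ ⟪G u - G v, u - v⟫_ℝ)
    (hpen : ∀ v ∈ K, ∃ C, ∀ i, -(lam i * C) ≤ ⟪G (u i), v - u i⟫_ℝ)
    (hlam : Tendsto lam l (𝓝 0))
    (hz : ∀ y, Tendsto (fun i => ⟪y, u i⟫_ℝ) l (𝓝 ⟪y, z⟫_ℝ)) :
    ∀ v ∈ K, 0 ≤ ⟪G v, v - z⟫_ℝ := by
  intro v hv
  obtain ⟨C, hC⟩ := hpen v hv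
  have hmono : ∀ i, -⟪G v, v - u i⟫_ℝ ≤ lam i * C := fun i => by
    have h := hG_mono (u i) v
    rw [inner_sub_left, ← neg_sub v (u i), inner_neg_right, inner_neg_right] at h
    linarith [hC i]
  have hlim : Tendsto (fun i => -⟪G v, v - u i⟫_ℝ) l (𝓝 (-⟪G v, v - z⟫_ℝ)) := by
    simpa only [inner_sub_right, neg_sub] using (hz (G v)).sub_const ⟪G v, v⟫_ℝ
  have := le_of_tendsto_of_tendsto' hlim (by simpa using hlam.mul_const C) hmono
  linarith

theorem tendsto_of_sq_le_of_tendsto_toWeakSpace [CompleteSpace X] {ι : Type*} {l : Filter ι}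
    {φ : X → ℝ} (hφ : LowerSemicontinuous φ) (hφcv : ConvexOn ℝ univ φ) {c : ℝ} (hc : 0 < c)
    {g w z : X} {u : ι → X} (h : ∀ i, c * ‖u i - w‖ ^ 2 ≤ ⟪g, w - u i⟫_ℝ + φ w - φ (u i))
    (hz : Tendsto (fun i => toWeakSpace ℝ X (u i)) l (𝓝 (toWeakSpace ℝ X z)))
    (hvi : ⟪g, w - z⟫_ℝ + φ w - φ z ≤ 0) : Tendsto u l (𝓝 w) := by
  rw [Metric.tendsto_nhds]
  intro ε hε
  have hδ : 0 < c * ε ^ 2 / 2 := by positivity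
  have hinner : ∀ᶠ i in l, ⟪g, w - u i⟫_ℝ < ⟪g, w - z⟫_ℝ + c * ε ^ 2 / 2 := by
    have hlim : Tendsto (fun i => ⟪g, w - u i⟫_ℝ) l (𝓝 ⟪g, w - z⟫_ℝ) := by
      simpa only [inner_sub_right] using
        (tendsto_toWeakSpace_iff_inner.1 hz g).const_sub ⟪g, w⟫_ℝ
    exact hlim.eventually (gt_mem_nhds (by linarith))
  have hlsc : ∀ᶠ i in l, φ z - c * ε ^ 2 / 2 < φ (u i) := by
    simpa using hz.eventually (hφ.comp_toWeakSpace_symm hφcv _ _ (show φ z - _ < φ z by linarith))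
  filter_upwards [hinner, hlsc] with i hi hi'
  rw [dist_eq_norm]
  exact lt_of_pow_lt_pow_left₀ 2 hε.le (by nlinarith [h i])

end Hilbert

theorem penalty_convergence_general
    {X : Type*} [NormedAddCommGroup X] [InnerProductSpace ℝ X] [CompleteSpace X]
    (K : Set X) (hK_closed : IsClosed K) (hK_convex : Convex ℝ K)
    (A : X → X) (m M : ℝ) (hM : 0 < M)
    (hA_mono : ∀ u v : X, m * ‖u - v‖ ^ 2 ≤ ⟪A u - A v, u - v⟫_ℝ)
    (hA_lip : ∀ u v : X, ‖A u - A v‖ ≤ M * ‖u - v‖)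
    (j : X → X → ℝ)
    (hj_convex : ∀ η : X, ConvexOn ℝ Set.univ (j η))
    (hj_lsc : ∀ η : X, LowerSemicontinuous (j η))
    (α : ℝ) (hα : 0 ≤ α)
    (hj_lip : ∀ η η' v v' : X,
      j η v' - j η v + j η' v - j η' v' ≤ α * ‖η - η'‖ * ‖v - v'‖)
    (hmα : α < m) (f : X)
    (Kstar : Set X) (hKs_sub : Kstar ⊆ K)
    (G : X → X)
    (hG_mono : ∀ u v : X, 0 ≤ ⟪G u - G v, u - v⟫_ℝ)
    (hG_lip : ∃ L : ℝ, 0 < L ∧ ∀ u v : X, ‖G u - G v‖ ≤ L * ‖u - v‖)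
    (hG_neg : ∀ u ∈ K, ∀ v ∈ Kstar, ⟪G u, v - u⟫_ℝ ≤ 0)
    (hG_zero : ∀ u ∈ K, (∀ v ∈ Kstar, ⟪G u, v - u⟫_ℝ = 0) → u ∈ Kstar)
    (lam : ℕ → ℝ) (hlam_pos : ∀ n, 0 < lam n)
    (hlam_lim : Tendsto lam atTop (nhds 0))
    (u : ℕ → X)
    (hu : ∀ n, u n ∈ K ∧ ∀ v ∈ K,
      ⟪A (u n), v - u n⟫_ℝ + (1 / lam n) * ⟪G (u n), v - u n⟫_ℝ
        + j (u n) v - j (u n) (u n) ≥ ⟪f, v - u n⟫_ℝ)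
    (ustar : X)
    (hustar : ustar ∈ Kstar ∧ ∀ v ∈ Kstar,
      ⟪A ustar, v - ustar⟫_ℝ + j ustar v - j ustar ustar ≥ ⟪f, v - ustar⟫_ℝ) :
    Tendsto u atTop (nhds ustar) := by
  obtain ⟨L, -, hG_lip⟩ := hG_lip
  obtain ⟨hustar_Ks, hustar_vi⟩ := hustar
  have hest : ∀ n, (m - α) * ‖u n - ustar‖ ^ 2
      ≤ ⟪A ustar - f, ustar - u n⟫_ℝ + j ustar ustar - j ustar (u n) := fun n =>
    mul_sq_norm_sub_le_of_penalized hA_mono hj_lip (hG_neg _ (hu n).1 _ hustar_Ks) (hlam_pos n)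
      ((hu n).2 _ (hKs_sub hustar_Ks))
  obtain ⟨a, b, hj_lower⟩ := (hj_convex ustar).exists_sub_mul_norm_sub_le (hj_lsc ustar) ustar
  obtain ⟨D, hD⟩ := exists_norm_sub_le_of_sq_le (sub_pos.2 hmα) hj_lower hest
  have hpen : ∀ v ∈ K, ∃ C, ∀ n, -(lam n * C) ≤ ⟪G (u n), v - u n⟫_ℝ := fun v hv =>
    exists_neg_mul_le_inner_of_penalized hM.le hα hA_lip hj_lip hj_lower hD hlam_pos
      fun n => (hu n).2 v hv
  have hG_cont : Continuous G :=
    (LipschitzWith.of_dist_le' (K := L) fun x y => by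
      simpa only [dist_eq_norm] using hG_lip x y).continuous
  rw [tendsto_iff_ultrafilter]
  intro U hU
  obtain ⟨z, hz⟩ := U.exists_tendsto_toWeakSpace_of_norm_le (C := ‖ustar‖ + D) fun n =>
    norm_le_norm_add_norm_sub' (u n) ustar |>.trans (add_le_add_right (hD n) _)
  have hzK : z ∈ K :=
    hK_convex.mem_of_tendsto_toWeakSpace hK_closed hz (.of_forall fun n => (hu n).1)
  have hG_minty := hK_convex.inner_sub_nonneg_of_minty hG_cont hzK
    (inner_apply_sub_nonneg_of_penalty hG_mono hpen (hlam_lim.mono_left hU)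
      (tendsto_toWeakSpace_iff_inner.1 hz))
  have hzKs : z ∈ Kstar := hG_zero z hzK fun v hv =>
    le_antisymm (hG_neg z hzK v hv) (hG_minty v (hKs_sub hv))
  refine tendsto_of_sq_le_of_tendsto_toWeakSpace (hj_lsc ustar) (hj_convex ustar) (sub_pos.2 hmα)
    hest hz ?_
  have := hustar_vi z hzKs
  rw [← neg_sub z ustar, inner_neg_right, inner_sub_left]
  linarith

theorem penalty_convergence
    {X : Type*} [NormedAddCommGroup X] [InnerProductSpace ℝ X] [CompleteSpace X]
    (K : Set X) (hK_ne : K.Nonempty) (hK_closed : IsClosed K) (hK_convex : Convex ℝ K)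
    (A : X → X) (m M : ℝ) (hm : 0 < m) (hM : 0 < M)
    (hA_mono : ∀ u v : X, m * ‖u - v‖ ^ 2 ≤ ⟪A u - A v, u - v⟫_ℝ)
    (hA_lip : ∀ u v : X, ‖A u - A v‖ ≤ M * ‖u - v‖)
    (j : X → X → ℝ)
    (hj_convex : ∀ η : X, ConvexOn ℝ Set.univ (j η))
    (hj_lsc : ∀ η : X, LowerSemicontinuous (j η))
    (α : ℝ) (hα : 0 ≤ α)
    (hj_lip : ∀ η η' v v' : X,
      j η v' - j η v + j η' v - j η' v' ≤ α * ‖η - η'‖ * ‖v - v'‖)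
    (hmα : α < m) (f : X)
    (Kstar : Set X) (hKs_ne : Kstar.Nonempty) (hKs_closed : IsClosed Kstar)
    (hKs_convex : Convex ℝ Kstar) (hKs_sub : Kstar ⊆ K)
    (G : X → X)
    (hG_mono : ∀ u v : X, 0 ≤ ⟪G u - G v, u - v⟫_ℝ)
    (hG_lip : ∃ L : ℝ, 0 < L ∧ ∀ u v : X, ‖G u - G v‖ ≤ L * ‖u - v‖)
    (hG_neg : ∀ u ∈ K, ∀ v ∈ Kstar, ⟪G u, v - u⟫_ℝ ≤ 0)
    (hG_zero : ∀ u ∈ K, (∀ v ∈ Kstar, ⟪G u, v - u⟫_ℝ = 0) → u ∈ Kstar)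
    (lam : ℕ → ℝ) (hlam_pos : ∀ n, 0 < lam n)
    (hlam_lim : Tendsto lam atTop (nhds 0))
    (u : ℕ → X)
    (hu : ∀ n, u n ∈ K ∧ ∀ v ∈ K,
      ⟪A (u n), v - u n⟫_ℝ + (1 / lam n) * ⟪G (u n), v - u n⟫_ℝ
        + j (u n) v - j (u n) (u n) ≥ ⟪f, v - u n⟫_ℝ)
    (ustar : X)
    (hustar : ustar ∈ Kstar ∧ ∀ v ∈ Kstar,
      ⟪A ustar, v - ustar⟫_ℝ + j ustar v - j ustar ustar ≥ ⟪f, v - ustar⟫_ℝ) :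
    Tendsto u atTop (nhds ustar) :=
  penalty_convergence_general K hK_closed hK_convex A m M hM hA_mono hA_lip j hj_convex hj_lsc α hα
    hj_lip hmα f Kstar hKs_sub G hG_mono hG_lip hG_neg hG_zero lam hlam_pos hlam_lim u hu ustar
    hustar
end

section
/- Let a < −l < 0 < l < b be real numbers with l > 0, set L₁ = −l − a and L₂ = b − l. Let F₁ : (a,−l) × ℝ → ℝ and F₂ : (l,b) × ℝ → ℝ be Carathéodory functions (measurable in x, continuous in the second variable) such that for i = 1, 2 there exist constants m_i > 0 and M_i > 0 with (F_i(x,r) − F_i(x,s))(r − s) ≥ m_i|r − s|², |F_i(x,r) − F_i(x,s)| ≤ M_i|r − s| and F_i(x,0) = 0 for all r, s ∈ ℝ and a.e. x in the respective interval. Let p : ℝ → ℝ be Lipschitz continuous with constant L_p > 0 and satisfy p(r) > 0 for r < 2l and p(r) < 0 for r > 2l; assume min(m₁, m₂) > 2 L_p max(L₁, L₂). Let f₁ ∈ L²(a,−l) and f₂ ∈ L²(l,b). For g₁ ∈ L²(a,−l) and g₂ ∈ L²(l,b) define θ(g₁,g₂) = 2l − ∫_a^{−l} g₁(t) dt − ∫_l^b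 g₂(t) dt, and set K = {(g₁,g₂) ∈ L²(a,−l) × L²(l,b) : θ(g₁,g₂) ≥ 0}. Then there exists a unique pair (g₁,g₂) ∈ K such that for every (h₁,h₂) ∈ K: ∫_a^{−l} F₁(x, g₁(x)) (h₁(x) − g₁(x)) dx + ∫_l^b F₂(x, g₂(x)) (h₂(x) − g₂(x)) dx − p(θ(g₁,g₂)) (θ(h₁,h₂) − θ(g₁,g₂)) ≥ ∫_a^{−l} f₁(x) (∫_a^x (h₁(t) − g₁(t)) dt) dx + ∫_l^b f₂(x) (∫_x^b (g₂(t) − h₂(t)) dt) dx. -/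
/-!
In the Hilbert space `H = L²(a, -l) × L²(l, b)` the spring length is `θ x = 2l - ⟪e, x⟫` with
`e = (1, 1)`, so `K = {θ ≥ 0}` is a closed half-space and the problem is the variational
inequality `ℓ (y - x) ≤ ⟪B x, y - x⟫` for all `y ∈ K`, where
`B x = (F₁(·, x₁), F₂(·, x₂)) + p(θ x) e` and `ℓ` is the continuous load functional.
The superposition part of `B` is `min m₁ m₂`-strongly monotone and Lipschitz; the spring term
costs at most `L_p ‖e‖² = L_p (L₁ + L₂) ≤ 2 L_p max L₁ L₂` of monotonicity, so `B` remains
strongly monotone. Stampacchia's theorem then applies: for small `ρ > 0` the map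
`x ↦ P_K (x - ρ B x)` is a contraction of `K`, and its fixed point is the unique solution.
-/

open MeasureTheory

/-- The current length of the spring, expressed through the derivatives
`g₁ = du₁/dx` and `g₂ = du₂/dx` of the displacement fields:
`θ(g₁,g₂) = 2l − ∫_a^{−l} g₁ − ∫_l^b g₂`. -/
noncomputable def springLength (a b l : ℝ) (g₁ g₂ : ℝ → ℝ) : ℝ :=
  2 * l - (∫ t in Set.Ioo a (-l), g₁ t) - ∫ t in Set.Ioo l b, g₂ t

open Set
open scoped RealInnerProductSpace

theorem Equiv.existsUnique_congr_variational {P H : Type*} (e : P ≃ H) {K : Set H}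
    {V : H → H → Prop} (h : ∃! x, x ∈ K ∧ ∀ y ∈ K, V x y) {C : P → Prop} {W : P → P → Prop}
    (hC : ∀ g, C g ↔ e g ∈ K) (hW : ∀ g h, W g h ↔ V (e g) (e h)) :
    ∃! g, C g ∧ ∀ h, C h → W g h := by
  refine (e.existsUnique_congr_left (p := fun g => C g ∧ ∀ h, C h → W g h)).2 ?_
  simpa only [hC, hW, Equiv.apply_symm_apply, e.forall_congr_left] using h

section Stampacchia

variable {H : Type*} [NormedAddCommGroup H] [InnerProductSpace ℝ H]

theorem norm_sub_le_of_inner_sub_nonpos {u u' v v' : H} (hv : ⟪u - v, v' - v⟫ ≤ 0)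
    (hv' : ⟪u' - v', v - v'⟫ ≤ 0) : ‖v - v'‖ ≤ ‖u - u'‖ := by
  have key : ‖v - v'‖ ^ 2 ≤ ⟪u - u', v - v'⟫ := by
    have hexp : ⟪u - u', v - v'⟫ = ‖v - v'‖ ^ 2 - ⟪u - v, v' - v⟫ - ⟪u' - v', v - v'⟫ := by
      rw [← real_inner_self_eq_norm_sq]
      simp only [inner_sub_left, inner_sub_right]
      ring
    linarith
  have hcs := real_inner_le_norm (u - u') (v - v')
  nlinarith [norm_nonneg (v - v'), norm_nonneg (u - u')]

theorem norm_sub_sub_smul_sub_sq_le {B : H → H} {α M ρ : ℝ} {x y : H}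
    (hmono : α * ‖x - y‖ ^ 2 ≤ ⟪B x - B y, x - y⟫) (hlip : ‖B x - B y‖ ≤ M * ‖x - y‖)
    (hρ : 0 ≤ ρ) :
    ‖(x - ρ • B x) - (y - ρ • B y)‖ ^ 2 ≤ (1 - 2 * ρ * α + ρ ^ 2 * M ^ 2) * ‖x - y‖ ^ 2 := by
  have hsplit : (x - ρ • B x) - (y - ρ • B y) = (x - y) - ρ • (B x - B y) := by
    rw [smul_sub]; abel
  have hlip_sq : ‖B x - B y‖ ^ 2 ≤ M ^ 2 * ‖x - y‖ ^ 2 := by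
    rw [← mul_pow]; exact pow_le_pow_left₀ (norm_nonneg _) hlip 2
  rw [hsplit, norm_sub_sq_real, norm_smul, real_inner_smul_right, real_inner_comm, Real.norm_eq_abs,
    abs_of_nonneg hρ]
  nlinarith [mul_le_mul_of_nonneg_left hmono hρ, mul_le_mul_of_nonneg_left hlip_sq (sq_nonneg ρ)]

theorem exists_mem_forall_inner_sub_nonpos [CompleteSpace H] {K : Set H} (hKc : Convex ℝ K)
    (hKcl : IsClosed K) (hKne : K.Nonempty) (u : H) :
    ∃ v ∈ K, ∀ w ∈ K, ⟪u - v, w - v⟫ ≤ 0 := by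
  obtain ⟨v, hvK, hv⟩ := exists_norm_eq_iInf_of_complete_convex hKne hKcl.isComplete hKc u
  exact ⟨v, hvK, (norm_eq_iInf_iff_real_inner_le_zero hKc hvK).1 hv⟩

theorem eq_of_inner_nonneg_of_strongly_monotone {K : Set H} {B : H → H} {α : ℝ} (hα : 0 < α)
    (hmono : ∀ x y, α * ‖x - y‖ ^ 2 ≤ ⟪B x - B y, x - y⟫) {x z : H} (hx : x ∈ K)
    (hz : z ∈ K) (hxB : ∀ y ∈ K, 0 ≤ ⟪B x, y - x⟫) (hzB : ∀ y ∈ K, 0 ≤ ⟪B z, y - z⟫) :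
    z = x := by
  have hexp : ⟪B z - B x, z - x⟫ = -⟪B z, x - z⟫ - ⟪B x, z - x⟫ := by
    simp only [inner_sub_left, inner_sub_right]
    ring
  have : α * ‖z - x‖ ^ 2 ≤ 0 := by linarith [hmono z x, hxB z hz, hzB x hx]
  have : ‖z - x‖ ^ 2 = 0 := le_antisymm (by nlinarith) (sq_nonneg _)
  simpa [sub_eq_zero] using this

/-- Stampacchia's theorem for a Lipschitz, strongly monotone (possibly nonlinear) operator. -/
theorem existsUnique_inner_nonneg_of_strongly_monotone [CompleteSpace H] {K : Set H}
    (hKc : Convex ℝ K) (hKcl : IsClosed K) (hKne : K.Nonempty) {B : H → H} {α M : ℝ}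
    (hα : 0 < α) (hmono : ∀ x y, α * ‖x - y‖ ^ 2 ≤ ⟪B x - B y, x - y⟫)
    (hlip : ∀ x y, ‖B x - B y‖ ≤ M * ‖x - y‖) :
    ∃! x, x ∈ K ∧ ∀ y ∈ K, 0 ≤ ⟪B x, y - x⟫ := by
  choose proj proj_mem proj_inner using exists_mem_forall_inner_sub_nonpos hKc hKcl hKne
  -- `M` is enlarged so that the step `ρ = α / M'²` below makes sense
  set M' := max M α
  have hM' : 0 < M' := lt_max_of_lt_right hα
  have hlip' : ∀ x y, ‖B x - B y‖ ≤ M' * ‖x - y‖ := fun x y =>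
    (hlip x y).trans (mul_le_mul_of_nonneg_right (le_max_left _ _) (norm_nonneg _))
  set ρ := α / M' ^ 2
  set c := 1 - α ^ 2 / M' ^ 2
  have hc : 1 - 2 * ρ * α + ρ ^ 2 * M' ^ 2 = c := by simp only [ρ, c]; field_simp; ring
  have hc1 : √c < 1 := by
    rw [Real.sqrt_lt' one_pos]
    have : 0 < α ^ 2 / M' ^ 2 := by positivity
    linarith
  have hcontr : ∀ x y, ‖proj (x - ρ • B x) - proj (y - ρ • B y)‖ ≤ √c * ‖x - y‖ := by
    intro x y
    refine (norm_sub_le_of_inner_sub_nonpos (proj_inner _ _ (proj_mem _))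
      (proj_inner _ _ (proj_mem _))).trans ?_
    rw [← Real.sqrt_sq (norm_nonneg (x - y)), ← Real.sqrt_mul' _ (sq_nonneg _), ← hc]
    exact Real.le_sqrt_of_sq_le
      (norm_sub_sub_smul_sub_sq_le (hmono x y) (hlip' x y) (by positivity))
  have : Nonempty K := hKne.to_subtype
  have : CompleteSpace K := hKcl.isComplete.completeSpace_coe
  let Φ : K → K := fun x => ⟨proj (x - ρ • B x), proj_mem _⟩
  have hΦ : ContractingWith ⟨√c, Real.sqrt_nonneg c⟩ Φ :=
    ⟨hc1, LipschitzWith.of_dist_le_mul fun x y => by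
      rw [Subtype.dist_eq, Subtype.dist_eq, dist_eq_norm, dist_eq_norm]; exact hcontr x y⟩
  obtain ⟨x₀, hx₀, -⟩ := hΦ.exists_fixedPoint (Classical.arbitrary K) (edist_ne_top _ _)
  have hsol : ∀ y ∈ K, 0 ≤ ⟪B x₀, y - x₀⟫ := by
    intro y hy
    have h := proj_inner (x₀ - ρ • B x₀) y hy
    rw [show proj (x₀ - ρ • B x₀) = x₀ from congrArg Subtype.val hx₀, sub_sub_cancel_left,
      inner_neg_left, real_inner_smul_left] at h
    have hρ : 0 < ρ := by positivity
    nlinarith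
  exact ⟨x₀, ⟨x₀.2, hsol⟩, fun z hz =>
    eq_of_inner_nonneg_of_strongly_monotone hα hmono x₀.2 hz.1 hsol hz.2⟩

theorem existsUnique_le_inner_of_strongly_monotone [CompleteSpace H] {K : Set H}
    (hKc : Convex ℝ K) (hKcl : IsClosed K) (hKne : K.Nonempty) {B : H → H} {α M : ℝ}
    (hα : 0 < α) (hmono : ∀ x y, α * ‖x - y‖ ^ 2 ≤ ⟪B x - B y, x - y⟫)
    (hlip : ∀ x y, ‖B x - B y‖ ≤ M * ‖x - y‖) (ℓ : StrongDual ℝ H) :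
    ∃! x, x ∈ K ∧ ∀ y ∈ K, ℓ (y - x) ≤ ⟪B x, y - x⟫ := by
  set w := (InnerProductSpace.toDual ℝ H).symm ℓ
  have hw (v : H) : ⟪w, v⟫ = ℓ v := InnerProductSpace.toDual_symm_apply
  have h := existsUnique_inner_nonneg_of_strongly_monotone hKc hKcl hKne (B := fun x => B x - w)
    hα (by simpa only [sub_sub_sub_cancel_right] using hmono)
    (by simpa only [sub_sub_sub_cancel_right] using hlip)
  simpa only [inner_sub_left, hw, sub_nonneg] using h

end Stampacchia

namespace MeasureTheory

section L2

variable {α : Type*} [MeasurableSpace α] {μ : Measure α}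

theorem L2.real_inner_eq_integral (u v : Lp ℝ 2 μ) : ⟪u, v⟫ = ∫ x, u x * v x ∂μ := by
  simp only [L2.inner_def, RCLike.inner_apply, conj_trivial, mul_comm]

theorem L2.integrable_mul (u v : Lp ℝ 2 μ) : Integrable (fun x => u x * v x) μ := by
  simpa only [RCLike.inner_apply, conj_trivial, mul_comm] using L2.integrable_inner (𝕜 := ℝ) u v

variable [IsFiniteMeasure μ]

theorem L2.integrable (u : Lp ℝ 2 μ) : Integrable u μ :=
  (Lp.memLp u).integrable one_le_two

theorem L2.inner_const_one (u : Lp ℝ 2 μ) : ⟪Lp.const 2 μ (1 : ℝ), u⟫ = ∫ x, u x ∂μ := by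
  rw [L2.real_inner_eq_integral]
  refine integral_congr_ae ?_
  filter_upwards [Lp.coeFn_const 2 μ (1 : ℝ)] with x hx
  rw [hx, Function.const_apply, one_mul]

theorem L2.norm_const_one_sq : ‖Lp.const 2 μ (1 : ℝ)‖ ^ 2 = μ.real univ := by
  rw [← real_inner_self_eq_norm_sq, L2.inner_const_one,
    integral_congr_ae (Lp.coeFn_const 2 μ (1 : ℝ))]
  simp

theorem L2.integral_abs_le (u : Lp ℝ 2 μ) :
    ∫ x, |u x| ∂μ ≤ ‖Lp.const 2 μ (1 : ℝ)‖ * ‖u‖ :=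
  calc ∫ x, |u x| ∂μ = ⟪Lp.const 2 μ (1 : ℝ), |u|⟫ := by
        rw [L2.inner_const_one]; exact integral_congr_ae (Lp.coeFn_abs u).symm
    _ ≤ ‖Lp.const 2 μ (1 : ℝ)‖ * ‖|u|‖ := real_inner_le_norm _ _
    _ = ‖Lp.const 2 μ (1 : ℝ)‖ * ‖u‖ := by rw [norm_abs_eq_norm]

end L2

section Nemytskii

variable {α : Type*} [MeasurableSpace α] {μ : Measure α} {F : α → ℝ → ℝ}

theorem AEStronglyMeasurable.comp_caratheodory (hmeas : ∀ r, Measurable fun x => F x r)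
    (hcont : ∀ x, Continuous (F x)) {g : α → ℝ} (hg : AEStronglyMeasurable g μ) :
    AEStronglyMeasurable (fun x => F x (g x)) μ := by
  have hF : StronglyMeasurable (Function.uncurry fun r x => F x r) :=
    stronglyMeasurable_uncurry_of_continuous_of_stronglyMeasurable hcont
      fun r => (hmeas r).stronglyMeasurable
  obtain ⟨g', hg'meas, hgg'⟩ := hg.aemeasurable
  exact ⟨fun x => F x (g' x), hF.comp_measurable (hg'meas.prodMk measurable_id),
    by filter_upwards [hgg'] with x hx; rw [hx]⟩

theorem MemLp.comp_caratheodory {p : ENNReal} {M : ℝ} (hmeas : ∀ r, Measurable fun x => F x r)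
    (hcont : ∀ x, Continuous (F x)) (hlip : ∀ᵐ x ∂μ, ∀ r s, |F x r - F x s| ≤ M * |r - s|)
    (hzero : ∀ᵐ x ∂μ, F x 0 = 0) {g : α → ℝ} (hg : MemLp g p μ) :
    MemLp (fun x => F x (g x)) p μ := by
  refine MemLp.of_le_mul (c := M) hg (hg.aestronglyMeasurable.comp_caratheodory hmeas hcont) ?_
  filter_upwards [hlip, hzero] with x hlipx hzerox
  simpa [hzerox] using hlipx (g x) 0

noncomputable def nemytskii {p : ENNReal} (hF : ∀ g : Lp ℝ p μ, MemLp (fun x => F x (g x)) p μ)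
    (g : Lp ℝ p μ) : Lp ℝ p μ :=
  (hF g).toLp _

section Lp

variable {p : ENNReal} {hF : ∀ g : Lp ℝ p μ, MemLp (fun x => F x (g x)) p μ}

theorem coeFn_nemytskii (g : Lp ℝ p μ) : nemytskii hF g =ᵐ[μ] fun x => F x (g x) :=
  MemLp.coeFn_toLp _

theorem norm_nemytskii_sub_le {M : ℝ} (hlip : ∀ᵐ x ∂μ, ∀ r s, |F x r - F x s| ≤ M * |r - s|)
    (g h : Lp ℝ p μ) : ‖nemytskii hF g - nemytskii hF h‖ ≤ M * ‖g - h‖ := by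
  refine Lp.norm_le_mul_norm_of_ae_le_mul ?_
  filter_upwards [hlip, Lp.coeFn_sub (nemytskii hF g) (nemytskii hF h), Lp.coeFn_sub g h,
    coeFn_nemytskii (hF := hF) g, coeFn_nemytskii (hF := hF) h] with x hx h₁ h₂ h₃ h₄
  simpa only [h₁, h₂, h₃, h₄, Pi.sub_apply, Real.norm_eq_abs] using hx (g x) (h x)

end Lp

variable {hF : ∀ g : Lp ℝ 2 μ, MemLp (fun x => F x (g x)) 2 μ}

theorem inner_nemytskii_sub (g h : Lp ℝ 2 μ) :
    ⟪nemytskii hF g, h - g⟫ = ∫ x, F x (g x) * (h x - g x) ∂μ := by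
  rw [L2.real_inner_eq_integral]
  refine integral_congr_ae ?_
  filter_upwards [coeFn_nemytskii (hF := hF) g, Lp.coeFn_sub h g] with x h₁ h₂
  rw [h₁, h₂, Pi.sub_apply]

theorem inner_nemytskii_sub_ge {m : ℝ}
    (hmono : ∀ᵐ x ∂μ, ∀ r s, m * |r - s| ^ 2 ≤ (F x r - F x s) * (r - s)) (g h : Lp ℝ 2 μ) :
    m * ‖g - h‖ ^ 2 ≤ ⟪nemytskii hF g - nemytskii hF h, g - h⟫ := by
  rw [← real_inner_self_eq_norm_sq, L2.real_inner_eq_integral, L2.real_inner_eq_integral,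
    ← integral_const_mul]
  refine integral_mono_ae ((L2.integrable_mul _ _).const_mul m) (L2.integrable_mul _ _) ?_
  filter_upwards [hmono, Lp.coeFn_sub g h, Lp.coeFn_sub (nemytskii hF g) (nemytskii hF h),
    coeFn_nemytskii (hF := hF) g, coeFn_nemytskii (hF := hF) h] with x hx h₁ h₂ h₃ h₄
  simp only [h₁, h₂, h₃, h₄, Pi.sub_apply]
  simpa only [sq_abs, ← sq] using hx (g x) (h x)

end Nemytskii

section NestedIntegral

variable {α : Type*} [MeasurableSpace α] {ν : Measure α} {s : Set α} {S : α → Set α}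

theorem abs_setIntegral_le_setIntegral_abs_of_subset {t : Set α} (hts : t ⊆ s) {u : α → ℝ}
    (hu : IntegrableOn u s ν) : |∫ x in t, u x ∂ν| ≤ ∫ x in s, |u x| ∂ν :=
  abs_integral_le_integral_abs.trans <| setIntegral_mono_set hu.abs
    (Filter.Eventually.of_forall fun _ => abs_nonneg _) (Filter.Eventually.of_forall hts)

/-- For `S x = (a, x)` this pairs `f` with the primitive of `u`. -/
noncomputable def nestedIntegral (ν : Measure α) (s : Set α) (S : α → Set α) (f u : α → ℝ) : ℝ :=
  ∫ x in s, f x * ∫ t in S x, u t ∂ν ∂ν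

theorem nestedIntegral_congr (hs : MeasurableSet s) (hS : ∀ x ∈ s, S x ⊆ s) (f : α → ℝ)
    {u v : α → ℝ} (huv : u =ᵐ[ν.restrict s] v) :
    nestedIntegral ν s S f u = nestedIntegral ν s S f v := by
  refine setIntegral_congr_ae hs (Filter.Eventually.of_forall fun x hx => ?_)
  rw [integral_congr_ae (ae_restrict_of_ae_restrict_of_subset (hS x hx) huv)]

theorem integrable_mul_setIntegral (hs : MeasurableSet s) (hS : ∀ x ∈ s, S x ⊆ s)
    {f u : α → ℝ} (hf : IntegrableOn f s ν) (hu : IntegrableOn u s ν)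
    (hP : AEStronglyMeasurable (fun x => ∫ t in S x, u t ∂ν) (ν.restrict s)) :
    Integrable (fun x => f x * ∫ t in S x, u t ∂ν) (ν.restrict s) := by
  refine hf.mul_bdd (c := ∫ t in s, |u t| ∂ν) hP ((ae_restrict_mem hs).mono fun x hx => ?_)
  rw [Real.norm_eq_abs]
  exact abs_setIntegral_le_setIntegral_abs_of_subset (hS x hx) hu

theorem nestedIntegral_smul (hs : MeasurableSet s) (hS : ∀ x ∈ s, S x ⊆ s) (c : ℝ)
    (f u : Lp ℝ 2 (ν.restrict s)) :
    nestedIntegral ν s S f ⇑(c • u) = c * nestedIntegral ν s S f u := by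
  rw [nestedIntegral_congr hs hS f (Lp.coeFn_smul c u), nestedIntegral, nestedIntegral,
    ← integral_const_mul]
  simp only [Pi.smul_apply, smul_eq_mul, integral_const_mul, mul_left_comm c]

variable [IsFiniteMeasure (ν.restrict s)]

theorem nestedIntegral_add (hs : MeasurableSet s) (hS : ∀ x ∈ s, S x ⊆ s)
    (hP : ∀ u : Lp ℝ 2 (ν.restrict s),
      AEStronglyMeasurable (fun x => ∫ t in S x, u t ∂ν) (ν.restrict s))
    (f u v : Lp ℝ 2 (ν.restrict s)) :
    nestedIntegral ν s S f ⇑(u + v) = nestedIntegral ν s S f u + nestedIntegral ν s S f v := by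
  rw [nestedIntegral_congr hs hS f (Lp.coeFn_add u v), nestedIntegral, nestedIntegral,
    nestedIntegral, ← integral_add
      (integrable_mul_setIntegral hs hS (L2.integrable f) (L2.integrable u) (hP u))
      (integrable_mul_setIntegral hs hS (L2.integrable f) (L2.integrable v) (hP v))]
  refine setIntegral_congr_fun hs fun x hx => ?_
  simp only [Pi.add_apply]
  rw [integral_add (IntegrableOn.mono_set (L2.integrable u) (hS x hx))
    (IntegrableOn.mono_set (L2.integrable v) (hS x hx)), mul_add]

theorem abs_nestedIntegral_le (hs : MeasurableSet s) (hS : ∀ x ∈ s, S x ⊆ s)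
    (hP : ∀ u : Lp ℝ 2 (ν.restrict s),
      AEStronglyMeasurable (fun x => ∫ t in S x, u t ∂ν) (ν.restrict s))
    (f u : Lp ℝ 2 (ν.restrict s)) :
    |nestedIntegral ν s S f u|
      ≤ (∫ x in s, |f x| ∂ν) * ‖Lp.const 2 (ν.restrict s) (1 : ℝ)‖ * ‖u‖ :=
  calc |nestedIntegral ν s S f u|
      ≤ ∫ x in s, |f x| * ∫ t in s, |u t| ∂ν ∂ν := by
        refine abs_integral_le_integral_abs.trans (integral_mono_ae
          (integrable_mul_setIntegral hs hS (L2.integrable f) (L2.integrable u) (hP u)).abs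
          ((L2.integrable f).abs.mul_const _) ((ae_restrict_mem hs).mono fun x hx => ?_))
        dsimp only
        rw [abs_mul]
        exact mul_le_mul_of_nonneg_left
          (abs_setIntegral_le_setIntegral_abs_of_subset (hS x hx) (L2.integrable u))
          (abs_nonneg _)
    _ ≤ (∫ x in s, |f x| ∂ν) * (‖Lp.const 2 (ν.restrict s) (1 : ℝ)‖ * ‖u‖) := by
        rw [integral_mul_const]
        exact mul_le_mul_of_nonneg_left (L2.integral_abs_le u)
          (integral_nonneg fun _ => abs_nonneg _)
    _ = _ := (mul_assoc _ _ _).symm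

noncomputable def nestedIntegralCLM (hs : MeasurableSet s) (hS : ∀ x ∈ s, S x ⊆ s)
    (hP : ∀ u : Lp ℝ 2 (ν.restrict s),
      AEStronglyMeasurable (fun x => ∫ t in S x, u t ∂ν) (ν.restrict s))
    (f : Lp ℝ 2 (ν.restrict s)) : Lp ℝ 2 (ν.restrict s) →L[ℝ] ℝ :=
  LinearMap.mkContinuous
    { toFun := fun u => nestedIntegral ν s S f u
      map_add' := nestedIntegral_add hs hS hP f
      map_smul' := fun c u => nestedIntegral_smul hs hS c f u }
    _ (abs_nestedIntegral_le hs hS hP f)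

theorem nestedIntegralCLM_sub_apply (hs : MeasurableSet s) (hS : ∀ x ∈ s, S x ⊆ s)
    (hP : ∀ u : Lp ℝ 2 (ν.restrict s),
      AEStronglyMeasurable (fun x => ∫ t in S x, u t ∂ν) (ν.restrict s))
    (f u v : Lp ℝ 2 (ν.restrict s)) :
    nestedIntegralCLM hs hS hP f (u - v) = ∫ x in s, f x * ∫ t in S x, (u t - v t) ∂ν ∂ν :=
  nestedIntegral_congr hs hS f (Lp.coeFn_sub u v)

end NestedIntegral

end MeasureTheory

theorem aestronglyMeasurable_setIntegral_Ioo_left {a c : ℝ} (hac : a ≤ c) {u : ℝ → ℝ}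
    (hu : IntegrableOn u (Ioo a c)) :
    AEStronglyMeasurable (fun x => ∫ t in Ioo a x, u t) (volume.restrict (Ioo a c)) := by
  have hcont : ContinuousOn (fun x => ∫ t in a..x, u t) (uIcc a c) :=
    intervalIntegral.continuousOn_primitive_interval
      (by rwa [uIcc_of_le hac, integrableOn_Icc_iff_integrableOn_Ioo])
  refine ((hcont.mono (Ioo_subset_Icc_self.trans Icc_subset_uIcc)).aestronglyMeasurable
    measurableSet_Ioo).congr ?_
  filter_upwards [ae_restrict_mem measurableSet_Ioo] with x hx
  rw [intervalIntegral.integral_of_le hx.1.le, integral_Ioc_eq_integral_Ioo]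

theorem aestronglyMeasurable_setIntegral_Ioo_right {a c : ℝ} (hac : a ≤ c) {u : ℝ → ℝ}
    (hu : IntegrableOn u (Ioo a c)) :
    AEStronglyMeasurable (fun x => ∫ t in Ioo x c, u t) (volume.restrict (Ioo a c)) := by
  have hcont : ContinuousOn (fun x => ∫ t in x..c, u t) (uIcc a c) :=
    intervalIntegral.continuousOn_primitive_interval_left
      (by rwa [uIcc_of_le hac, integrableOn_Icc_iff_integrableOn_Ioo])
  refine ((hcont.mono (Ioo_subset_Icc_self.trans Icc_subset_uIcc)).aestronglyMeasurable
    measurableSet_Ioo).congr ?_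
  filter_upwards [ae_restrict_mem measurableSet_Ioo] with x hx
  rw [intervalIntegral.integral_of_le hx.2.le, integral_Ioc_eq_integral_Ioo]

section ProdOperator

variable {E F : Type*} [NormedAddCommGroup E] [NormedAddCommGroup F] {N₁ : E → E} {N₂ : F → F}

theorem WithLp.prod_norm_map_sub_le {M₁ M₂ : ℝ} (h₁ : ∀ x y, ‖N₁ x - N₁ y‖ ≤ M₁ * ‖x - y‖)
    (h₂ : ∀ x y, ‖N₂ x - N₂ y‖ ≤ M₂ * ‖x - y‖) (x y : WithLp 2 (E × F)) :
    ‖WithLp.toLp 2 (N₁ x.fst, N₂ x.snd) - WithLp.toLp 2 (N₁ y.fst, N₂ y.snd)‖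
      ≤ max M₁ M₂ * ‖x - y‖ := by
  set M := max M₁ M₂
  have hle₁ : ‖N₁ x.fst - N₁ y.fst‖ ≤ M * ‖x.fst - y.fst‖ :=
    (h₁ _ _).trans (mul_le_mul_of_nonneg_right (le_max_left _ _) (norm_nonneg _))
  have hle₂ : ‖N₂ x.snd - N₂ y.snd‖ ≤ M * ‖x.snd - y.snd‖ :=
    (h₂ _ _).trans (mul_le_mul_of_nonneg_right (le_max_right _ _) (norm_nonneg _))
  have hsq := WithLp.prod_norm_sq_eq_of_L2 (x - y)
  have hsq' := WithLp.prod_norm_sq_eq_of_L2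
    (WithLp.toLp 2 (N₁ x.fst, N₂ x.snd) - WithLp.toLp 2 (N₁ y.fst, N₂ y.snd))
  simp only [WithLp.sub_fst, WithLp.sub_snd, WithLp.toLp_fst, WithLp.toLp_snd] at hsq hsq'
  -- `M` may be negative only when `x = y`, hence `M * ‖x - y‖ ≥ 0` in all cases
  have hM : 0 ≤ M * ‖x - y‖ := by
    rcases (norm_nonneg (x - y)).eq_or_lt with h | h
    · rw [← h, mul_zero]
    · refine (mul_nonneg_iff_of_pos_right h).1 ?_
      rw [mul_assoc, ← sq, hsq, mul_add, sq, sq, ← mul_assoc, ← mul_assoc]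
      exact add_nonneg (mul_nonneg ((norm_nonneg _).trans hle₁) (norm_nonneg _))
        (mul_nonneg ((norm_nonneg _).trans hle₂) (norm_nonneg _))
  refine (sq_le_sq₀ (norm_nonneg _) hM).1 ?_
  rw [hsq', mul_pow, hsq]
  nlinarith [pow_le_pow_left₀ (norm_nonneg _) hle₁ 2, pow_le_pow_left₀ (norm_nonneg _) hle₂ 2]

variable [InnerProductSpace ℝ E] [InnerProductSpace ℝ F]

theorem WithLp.prod_inner_map_sub_ge {m₁ m₂ : ℝ}
    (h₁ : ∀ x y, m₁ * ‖x - y‖ ^ 2 ≤ ⟪N₁ x - N₁ y, x - y⟫)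
    (h₂ : ∀ x y, m₂ * ‖x - y‖ ^ 2 ≤ ⟪N₂ x - N₂ y, x - y⟫) (x y : WithLp 2 (E × F)) :
    min m₁ m₂ * ‖x - y‖ ^ 2 ≤
      ⟪WithLp.toLp 2 (N₁ x.fst, N₂ x.snd) - WithLp.toLp 2 (N₁ y.fst, N₂ y.snd), x - y⟫ := by
  rw [WithLp.prod_norm_sq_eq_of_L2, WithLp.prod_inner_apply]
  simp only [WithLp.ofLp_fst, WithLp.ofLp_snd, WithLp.sub_fst, WithLp.sub_snd, WithLp.toLp_fst,
    WithLp.toLp_snd]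
  nlinarith [h₁ x.fst y.fst, h₂ x.snd y.snd,
    mul_le_mul_of_nonneg_right (min_le_left m₁ m₂) (sq_nonneg ‖x.fst - y.fst‖),
    mul_le_mul_of_nonneg_right (min_le_right m₁ m₂) (sq_nonneg ‖x.snd - y.snd‖)]

end ProdOperator

section RankOnePerturbation

variable {H : Type*} [NormedAddCommGroup H] [InnerProductSpace ℝ H] {N : H → H} {p : ℝ → ℝ}
  {C c : ℝ}

theorem add_smul_sub_add_smul (e x y : H) :
    (N x + p (c - ⟪e, x⟫) • e) - (N y + p (c - ⟪e, y⟫) • e) =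
      (N x - N y) + (p (c - ⟪e, x⟫) - p (c - ⟪e, y⟫)) • e := by
  rw [sub_smul]; abel

theorem abs_sub_comp_const_sub_inner_le (hp : ∀ r s, |p r - p s| ≤ C * |r - s|) (e x y : H) :
    |p (c - ⟪e, x⟫) - p (c - ⟪e, y⟫)| ≤ C * |⟪e, x - y⟫| := by
  have h := hp (c - ⟪e, x⟫) (c - ⟪e, y⟫)
  rwa [sub_sub_sub_cancel_left, abs_sub_comm ⟪e, y⟫, ← inner_sub_right] at h

theorem inner_add_smul_sub_ge {α : ℝ} (hN : ∀ x y, α * ‖x - y‖ ^ 2 ≤ ⟪N x - N y, x - y⟫)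
    (hp : ∀ r s, |p r - p s| ≤ C * |r - s|) (hC : 0 ≤ C) (e x y : H) :
    (α - C * ‖e‖ ^ 2) * ‖x - y‖ ^ 2 ≤
      ⟪(N x + p (c - ⟪e, x⟫) • e) - (N y + p (c - ⟪e, y⟫) • e), x - y⟫ := by
  rw [add_smul_sub_add_smul, inner_add_left, real_inner_smul_left]
  have hpt : |(p (c - ⟪e, x⟫) - p (c - ⟪e, y⟫)) * ⟪e, x - y⟫| ≤ C * ⟪e, x - y⟫ ^ 2 := by
    rw [abs_mul, ← sq_abs ⟪e, x - y⟫, sq, ← mul_assoc]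
    exact mul_le_mul_of_nonneg_right (abs_sub_comp_const_sub_inner_le hp e x y) (abs_nonneg _)
  have hcs : ⟪e, x - y⟫ ^ 2 ≤ ‖e‖ ^ 2 * ‖x - y‖ ^ 2 := by
    rw [← mul_pow, ← sq_abs]
    exact pow_le_pow_left₀ (abs_nonneg _) (abs_real_inner_le_norm _ _) 2
  nlinarith [hN x y, neg_abs_le ((p (c - ⟪e, x⟫) - p (c - ⟪e, y⟫)) * ⟪e, x - y⟫),
    mul_le_mul_of_nonneg_left hcs hC]

theorem norm_add_smul_sub_le_s6 {M : ℝ} (hN : ∀ x y, ‖N x - N y‖ ≤ M * ‖x - y‖)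
    (hp : ∀ r s, |p r - p s| ≤ C * |r - s|) (hC : 0 ≤ C) (e x y : H) :
    ‖(N x + p (c - ⟪e, x⟫) • e) - (N y + p (c - ⟪e, y⟫) • e)‖ ≤
      (M + C * ‖e‖ ^ 2) * ‖x - y‖ := by
  rw [add_smul_sub_add_smul]
  refine (norm_add_le _ _).trans ?_
  have hpt : |p (c - ⟪e, x⟫) - p (c - ⟪e, y⟫)| ≤ C * (‖e‖ * ‖x - y‖) :=
    (abs_sub_comp_const_sub_inner_le hp e x y).trans
      (mul_le_mul_of_nonneg_left (abs_real_inner_le_norm _ _) hC)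
  rw [norm_smul, Real.norm_eq_abs]
  nlinarith [hN x y, mul_le_mul_of_nonneg_right hpt (norm_nonneg e)]

end RankOnePerturbation

section SpringRods

variable {a b l : ℝ}

abbrev RodsSpace (a b l : ℝ) : Type :=
  WithLp 2 (Lp ℝ 2 (volume.restrict (Ioo a (-l))) × Lp ℝ 2 (volume.restrict (Ioo l b)))

noncomputable def springDirection (a b l : ℝ) : RodsSpace a b l :=
  WithLp.toLp 2 (Lp.const 2 _ (1 : ℝ), Lp.const 2 _ (1 : ℝ))

theorem springLength_eq_sub_inner
    (g : Lp ℝ 2 (volume.restrict (Ioo a (-l))) × Lp ℝ 2 (volume.restrict (Ioo l b))) :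
    springLength a b l g.1 g.2 = 2 * l - ⟪springDirection a b l, WithLp.toLp 2 g⟫ := by
  rw [springDirection, WithLp.prod_inner_apply]
  simp only [L2.inner_const_one, springLength]
  ring

theorem norm_springDirection_sq (ha : a ≤ -l) (hb : l ≤ b) :
    ‖springDirection a b l‖ ^ 2 = (-l - a) + (b - l) := by
  rw [WithLp.prod_norm_sq_eq_of_L2]
  simp only [springDirection, WithLp.toLp_fst, WithLp.toLp_snd, L2.norm_const_one_sq]
  simp [ha, hb]

/-- The constraint set `K = {θ ≥ 0}`. -/
def springAdmissible (a b l : ℝ) : Set (RodsSpace a b l) :=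
  {x | ⟪springDirection a b l, x⟫ ≤ 2 * l}

theorem convex_springAdmissible : Convex ℝ (springAdmissible a b l) :=
  convex_halfSpace_le (innerₛₗ ℝ (springDirection a b l)).isLinear _

theorem isClosed_springAdmissible : IsClosed (springAdmissible a b l) :=
  isClosed_le (continuous_const.inner continuous_id) continuous_const

theorem zero_mem_springAdmissible (hl : 0 ≤ l) : 0 ∈ springAdmissible a b l := by
  simp [springAdmissible, hl]

theorem toLp_mem_springAdmissible_iff
    (g : Lp ℝ 2 (volume.restrict (Ioo a (-l))) × Lp ℝ 2 (volume.restrict (Ioo l b))) :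
    WithLp.toLp 2 g ∈ springAdmissible a b l ↔ springLength a b l g.1 g.2 ≥ 0 := by
  rw [springLength_eq_sub_inner, ge_iff_le, sub_nonneg]
  rfl

variable {F₁ F₂ : ℝ → ℝ → ℝ}
  {hF₁ : ∀ g : Lp ℝ 2 (volume.restrict (Ioo a (-l))),
    MemLp (fun x => F₁ x (g x)) 2 (volume.restrict (Ioo a (-l)))}
  {hF₂ : ∀ g : Lp ℝ 2 (volume.restrict (Ioo l b)),
    MemLp (fun x => F₂ x (g x)) 2 (volume.restrict (Ioo l b))}

/-- The operator of the weak formulation: elastic response of the rods plus spring reaction. -/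
noncomputable def springOperator (hF₁ : ∀ g : Lp ℝ 2 (volume.restrict (Ioo a (-l))),
      MemLp (fun x => F₁ x (g x)) 2 (volume.restrict (Ioo a (-l))))
    (hF₂ : ∀ g : Lp ℝ 2 (volume.restrict (Ioo l b)),
      MemLp (fun x => F₂ x (g x)) 2 (volume.restrict (Ioo l b)))
    (p : ℝ → ℝ) (x : RodsSpace a b l) : RodsSpace a b l :=
  WithLp.toLp 2 (nemytskii hF₁ x.fst, nemytskii hF₂ x.snd) +
    p (2 * l - ⟪springDirection a b l, x⟫) • springDirection a b l

theorem inner_springOperator_sub_ge {m₁ m₂ C : ℝ} {p : ℝ → ℝ}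
    (hF₁mono : ∀ᵐ x ∂volume.restrict (Ioo a (-l)),
      ∀ r s, m₁ * |r - s| ^ 2 ≤ (F₁ x r - F₁ x s) * (r - s))
    (hF₂mono : ∀ᵐ x ∂volume.restrict (Ioo l b),
      ∀ r s, m₂ * |r - s| ^ 2 ≤ (F₂ x r - F₂ x s) * (r - s))
    (hp : ∀ r s, |p r - p s| ≤ C * |r - s|) (hC : 0 ≤ C) (x y : RodsSpace a b l) :
    (min m₁ m₂ - C * ‖springDirection a b l‖ ^ 2) * ‖x - y‖ ^ 2 ≤
      ⟪springOperator hF₁ hF₂ p x - springOperator hF₁ hF₂ p y, x - y⟫ :=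
  inner_add_smul_sub_ge (N := fun x => WithLp.toLp 2 (nemytskii hF₁ x.fst, nemytskii hF₂ x.snd))
    (WithLp.prod_inner_map_sub_ge (inner_nemytskii_sub_ge hF₁mono)
      (inner_nemytskii_sub_ge hF₂mono)) hp hC _ x y

theorem norm_springOperator_sub_le {M₁ M₂ C : ℝ} {p : ℝ → ℝ}
    (hF₁lip : ∀ᵐ x ∂volume.restrict (Ioo a (-l)), ∀ r s, |F₁ x r - F₁ x s| ≤ M₁ * |r - s|)
    (hF₂lip : ∀ᵐ x ∂volume.restrict (Ioo l b), ∀ r s, |F₂ x r - F₂ x s| ≤ M₂ * |r - s|)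
    (hp : ∀ r s, |p r - p s| ≤ C * |r - s|) (hC : 0 ≤ C) (x y : RodsSpace a b l) :
    ‖springOperator hF₁ hF₂ p x - springOperator hF₁ hF₂ p y‖ ≤
      (max M₁ M₂ + C * ‖springDirection a b l‖ ^ 2) * ‖x - y‖ :=
  norm_add_smul_sub_le_s6 (N := fun x => WithLp.toLp 2 (nemytskii hF₁ x.fst, nemytskii hF₂ x.snd))
    (WithLp.prod_norm_map_sub_le (norm_nemytskii_sub_le hF₁lip) (norm_nemytskii_sub_le hF₂lip))
    hp hC _ x y

theorem inner_springOperator_toLp_sub (p : ℝ → ℝ)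
    (g h : Lp ℝ 2 (volume.restrict (Ioo a (-l))) × Lp ℝ 2 (volume.restrict (Ioo l b))) :
    ⟪springOperator hF₁ hF₂ p (WithLp.toLp 2 g), WithLp.toLp 2 h - WithLp.toLp 2 g⟫ =
      (∫ x in Ioo a (-l), F₁ x (g.1 x) * (h.1 x - g.1 x)) +
        (∫ x in Ioo l b, F₂ x (g.2 x) * (h.2 x - g.2 x)) -
        p (springLength a b l g.1 g.2) *
          (springLength a b l h.1 h.2 - springLength a b l g.1 g.2) := by
  have hN : ⟪WithLp.toLp 2 (nemytskii hF₁ g.1, nemytskii hF₂ g.2),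
      WithLp.toLp 2 h - WithLp.toLp 2 g⟫ =
      ⟪nemytskii hF₁ g.1, h.1 - g.1⟫ + ⟪nemytskii hF₂ g.2, h.2 - g.2⟫ :=
    WithLp.prod_inner_apply _ _
  rw [springOperator, inner_add_left, real_inner_smul_left, WithLp.toLp_fst, WithLp.toLp_snd, hN,
    inner_nemytskii_sub, inner_nemytskii_sub, springLength_eq_sub_inner,
    springLength_eq_sub_inner, inner_sub_right]
  ring

/-- The load functional `∫ f₁ u₁ + ∫ f₂ u₂`, where `u₁ = ∫_a^x g₁` and `u₂ = -∫_x^b g₂` are the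
displacements with derivatives `g = (g₁, g₂)`. -/
noncomputable def springLoad (ha : a ≤ -l) (hb : l ≤ b) (f₁ : Lp ℝ 2 (volume.restrict (Ioo a (-l))))
    (f₂ : Lp ℝ 2 (volume.restrict (Ioo l b))) : StrongDual ℝ (RodsSpace a b l) :=
  (nestedIntegralCLM measurableSet_Ioo (fun _ hx => Ioo_subset_Ioo_right hx.2.le)
      (fun u => aestronglyMeasurable_setIntegral_Ioo_left ha (L2.integrable u)) f₁).comp
      (WithLp.fstL 2 ℝ _ _) -
    (nestedIntegralCLM measurableSet_Ioo (fun _ hx => Ioo_subset_Ioo_left hx.1.le)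
      (fun u => aestronglyMeasurable_setIntegral_Ioo_right hb (L2.integrable u)) f₂).comp
      (WithLp.sndL 2 ℝ _ _)

theorem springLoad_toLp_sub (ha : a ≤ -l) (hb : l ≤ b)
    (f₁ : Lp ℝ 2 (volume.restrict (Ioo a (-l)))) (f₂ : Lp ℝ 2 (volume.restrict (Ioo l b)))
    (g h : Lp ℝ 2 (volume.restrict (Ioo a (-l))) × Lp ℝ 2 (volume.restrict (Ioo l b))) :
    springLoad ha hb f₁ f₂ (WithLp.toLp 2 h - WithLp.toLp 2 g) =
      (∫ x in Ioo a (-l), f₁ x * ∫ t in Ioo a x, (h.1 t - g.1 t)) +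
        (∫ x in Ioo l b, f₂ x * ∫ t in Ioo x b, (g.2 t - h.2 t)) := by
  simp only [springLoad, sub_apply, ContinuousLinearMap.comp_apply,
    WithLp.fstL_apply, WithLp.sndL_apply, WithLp.sub_fst, WithLp.sub_snd, WithLp.toLp_fst,
    WithLp.toLp_snd]
  rw [← neg_sub g.2 h.2, map_neg, nestedIntegralCLM_sub_apply, nestedIntegralCLM_sub_apply,
    sub_neg_eq_add]

end SpringRods

theorem spring_rods_exists_unique_weak_solution_general
    (a b l : ℝ) (hl : 0 < l) (ha : a < -l) (hb : l < b)
    (L₁ L₂ : ℝ) (hL₁ : L₁ = -l - a) (hL₂ : L₂ = b - l)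
    (F₁ F₂ : ℝ → ℝ → ℝ)
    (hF₁meas : ∀ r : ℝ, Measurable fun x => F₁ x r)
    (hF₂meas : ∀ r : ℝ, Measurable fun x => F₂ x r)
    (hF₁cont : ∀ x : ℝ, Continuous fun r => F₁ x r)
    (hF₂cont : ∀ x : ℝ, Continuous fun r => F₂ x r)
    (m₁ M₁ m₂ M₂ : ℝ)
    (hF₁mono : ∀ᵐ x ∂volume.restrict (Set.Ioo a (-l)),
      ∀ r s : ℝ, m₁ * |r - s| ^ 2 ≤ (F₁ x r - F₁ x s) * (r - s))
    (hF₁lip : ∀ᵐ x ∂volume.restrict (Set.Ioo a (-l)),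
      ∀ r s : ℝ, |F₁ x r - F₁ x s| ≤ M₁ * |r - s|)
    (hF₁zero : ∀ᵐ x ∂volume.restrict (Set.Ioo a (-l)), F₁ x 0 = 0)
    (hF₂mono : ∀ᵐ x ∂volume.restrict (Set.Ioo l b),
      ∀ r s : ℝ, m₂ * |r - s| ^ 2 ≤ (F₂ x r - F₂ x s) * (r - s))
    (hF₂lip : ∀ᵐ x ∂volume.restrict (Set.Ioo l b),
      ∀ r s : ℝ, |F₂ x r - F₂ x s| ≤ M₂ * |r - s|)
    (hF₂zero : ∀ᵐ x ∂volume.restrict (Set.Ioo l b), F₂ x 0 = 0)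
    (p : ℝ → ℝ) (Cp : ℝ) (hCp : 0 < Cp)
    (hp_lip : ∀ r s : ℝ, |p r - p s| ≤ Cp * |r - s|)
    (hsmall : 2 * Cp * max L₁ L₂ < min m₁ m₂)
    (f₁ : Lp ℝ 2 (volume.restrict (Set.Ioo a (-l))))
    (f₂ : Lp ℝ 2 (volume.restrict (Set.Ioo l b))) :
    ∃! g : Lp ℝ 2 (volume.restrict (Set.Ioo a (-l))) ×
           Lp ℝ 2 (volume.restrict (Set.Ioo l b)),
      springLength a b l g.1 g.2 ≥ 0 ∧
      ∀ h : Lp ℝ 2 (volume.restrict (Set.Ioo a (-l))) ×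
            Lp ℝ 2 (volume.restrict (Set.Ioo l b)),
        springLength a b l h.1 h.2 ≥ 0 →
        (∫ x in Set.Ioo a (-l), F₁ x (g.1 x) * (h.1 x - g.1 x)) +
          (∫ x in Set.Ioo l b, F₂ x (g.2 x) * (h.2 x - g.2 x)) -
          p (springLength a b l g.1 g.2) *
            (springLength a b l h.1 h.2 - springLength a b l g.1 g.2)
        ≥ (∫ x in Set.Ioo a (-l), f₁ x * ∫ t in Set.Ioo a x, (h.1 t - g.1 t)) +
          (∫ x in Set.Ioo l b, f₂ x * ∫ t in Set.Ioo x b, (g.2 t - h.2 t)) := by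
  have hF₁ (g : Lp ℝ 2 (volume.restrict (Ioo a (-l)))) :=
    (Lp.memLp g).comp_caratheodory hF₁meas hF₁cont hF₁lip hF₁zero
  have hF₂ (g : Lp ℝ 2 (volume.restrict (Ioo l b))) :=
    (Lp.memLp g).comp_caratheodory hF₂meas hF₂cont hF₂lip hF₂zero
  have hα : 0 < min m₁ m₂ - Cp * ‖springDirection a b l‖ ^ 2 := by
    rw [norm_springDirection_sq ha.le hb.le, ← hL₁, ← hL₂]
    nlinarith [le_max_left L₁ L₂, le_max_right L₁ L₂]
  refine (WithLp.equiv 2 _).symm.existsUnique_congr_variational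
    (existsUnique_le_inner_of_strongly_monotone convex_springAdmissible
      isClosed_springAdmissible ⟨0, zero_mem_springAdmissible hl.le⟩ hα
      (inner_springOperator_sub_ge (hF₁ := hF₁) (hF₂ := hF₂) hF₁mono hF₂mono hp_lip hCp.le)
      (norm_springOperator_sub_le hF₁lip hF₂lip hp_lip hCp.le)
      (springLoad ha.le hb.le f₁ f₂))
    (fun g => (toLp_mem_springAdmissible_iff g).symm) (fun g h => ?_)
  rw [WithLp.equiv_symm_apply, springLoad_toLp_sub, inner_springOperator_toLp_sub]

theorem spring_rods_exists_unique_weak_solution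
    (a b l : ℝ) (hl : 0 < l) (ha : a < -l) (hb : l < b)
    (L₁ L₂ : ℝ) (hL₁ : L₁ = -l - a) (hL₂ : L₂ = b - l)
    (F₁ F₂ : ℝ → ℝ → ℝ)
    (hF₁meas : ∀ r : ℝ, Measurable fun x => F₁ x r)
    (hF₂meas : ∀ r : ℝ, Measurable fun x => F₂ x r)
    (hF₁cont : ∀ x : ℝ, Continuous fun r => F₁ x r)
    (hF₂cont : ∀ x : ℝ, Continuous fun r => F₂ x r)
    (m₁ M₁ m₂ M₂ : ℝ) (hm₁ : 0 < m₁) (hM₁ : 0 < M₁) (hm₂ : 0 < m₂) (hM₂ : 0 < M₂)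
    (hF₁mono : ∀ᵐ x ∂volume.restrict (Set.Ioo a (-l)),
      ∀ r s : ℝ, m₁ * |r - s| ^ 2 ≤ (F₁ x r - F₁ x s) * (r - s))
    (hF₁lip : ∀ᵐ x ∂volume.restrict (Set.Ioo a (-l)),
      ∀ r s : ℝ, |F₁ x r - F₁ x s| ≤ M₁ * |r - s|)
    (hF₁zero : ∀ᵐ x ∂volume.restrict (Set.Ioo a (-l)), F₁ x 0 = 0)
    (hF₂mono : ∀ᵐ x ∂volume.restrict (Set.Ioo l b),
      ∀ r s : ℝ, m₂ * |r - s| ^ 2 ≤ (F₂ x r - F₂ x s) * (r - s))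
    (hF₂lip : ∀ᵐ x ∂volume.restrict (Set.Ioo l b),
      ∀ r s : ℝ, |F₂ x r - F₂ x s| ≤ M₂ * |r - s|)
    (hF₂zero : ∀ᵐ x ∂volume.restrict (Set.Ioo l b), F₂ x 0 = 0)
    (p : ℝ → ℝ) (Cp : ℝ) (hCp : 0 < Cp)
    (hp_lip : ∀ r s : ℝ, |p r - p s| ≤ Cp * |r - s|)
    (hp_pos : ∀ r : ℝ, r < 2 * l → 0 < p r)
    (hp_neg : ∀ r : ℝ, 2 * l < r → p r < 0)
    (hsmall : 2 * Cp * max L₁ L₂ < min m₁ m₂)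
    (f₁ : Lp ℝ 2 (volume.restrict (Set.Ioo a (-l))))
    (f₂ : Lp ℝ 2 (volume.restrict (Set.Ioo l b))) :
    ∃! g : Lp ℝ 2 (volume.restrict (Set.Ioo a (-l))) ×
           Lp ℝ 2 (volume.restrict (Set.Ioo l b)),
      springLength a b l g.1 g.2 ≥ 0 ∧
      ∀ h : Lp ℝ 2 (volume.restrict (Set.Ioo a (-l))) ×
            Lp ℝ 2 (volume.restrict (Set.Ioo l b)),
        springLength a b l h.1 h.2 ≥ 0 →
        (∫ x in Set.Ioo a (-l), F₁ x (g.1 x) * (h.1 x - g.1 x)) +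
          (∫ x in Set.Ioo l b, F₂ x (g.2 x) * (h.2 x - g.2 x)) -
          p (springLength a b l g.1 g.2) *
            (springLength a b l h.1 h.2 - springLength a b l g.1 g.2)
        ≥ (∫ x in Set.Ioo a (-l), f₁ x * ∫ t in Set.Ioo a x, (h.1 t - g.1 t)) +
          (∫ x in Set.Ioo l b, f₂ x * ∫ t in Set.Ioo x b, (g.2 t - h.2 t)) :=
  spring_rods_exists_unique_weak_solution_general a b l hl ha hb L₁ L₂ hL₁ hL₂ F₁ F₂ hF₁meas hF₂meas
    hF₁cont hF₂cont m₁ M₁ m₂ M₂ hF₁mono hF₁lip hF₁zero hF₂mono hF₂lip hF₂zero p Cp hCp hp_lip hsmall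
    f₁ f₂
end

section
/- Let X be a real Hilbert space, w ∈ X, c ∈ ℝ, and define θ : X → ℝ by θ(v) = c − (w, v)_X. Let p : ℝ → ℝ be Lipschitz continuous with constant L_p > 0, and define j : X × X → ℝ by j(u, v) = −p(θ(u)) θ(v). Then for all η, η̃, v, ṽ ∈ X, j(η, ṽ) − j(η, v) + j(η̃, v) − j(η̃, ṽ) ≤ L_p ‖w‖_X² ‖η − η̃‖_X ‖v − ṽ‖_X. -/
open scoped InnerProductSpace

theorem contact_functional_estimate
    {X : Type*} [NormedAddCommGroup X] [InnerProductSpace ℝ X] [CompleteSpace X]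
    (w : X) (c : ℝ) (θ : X → ℝ) (hθ : ∀ v : X, θ v = c - ⟪w, v⟫_ℝ)
    (p : ℝ → ℝ) (Lp : ℝ) (hLp : 0 < Lp)
    (hp_lip : ∀ r s : ℝ, |p r - p s| ≤ Lp * |r - s|)
    (j : X → X → ℝ) (hj : ∀ u v : X, j u v = -(p (θ u)) * θ v) :
    ∀ η η' v v' : X,
      j η v' - j η v + j η' v - j η' v' ≤ Lp * ‖w‖ ^ 2 * ‖η - η'‖ * ‖v - v'‖ := by
  intro η η' v v'
  have key : j η v' - j η v + j η' v - j η' v'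
      = (p (θ η') - p (θ η)) * (θ v' - θ v) := by
    simp only [hj]; ring
  rw [key]
  have h1 : (p (θ η') - p (θ η)) * (θ v' - θ v)
      ≤ |p (θ η') - p (θ η)| * |θ v' - θ v| := by
    calc _ ≤ |(p (θ η') - p (θ η)) * (θ v' - θ v)| := le_abs_self _
    _ = _ := abs_mul _ _
  have h2 : |p (θ η') - p (θ η)| ≤ Lp * |θ η' - θ η| := hp_lip _ _
  have hθd : θ η' - θ η = ⟪w, η - η'⟫_ℝ := by
    rw [hθ, hθ, inner_sub_right]; ring
  have hθd' : θ v' - θ v = ⟪w, v - v'⟫_ℝ := by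
    rw [hθ, hθ, inner_sub_right]; ring
  have hη : |θ η' - θ η| ≤ ‖w‖ * ‖η - η'‖ := by
    rw [hθd]; exact abs_real_inner_le_norm _ _
  have hv : |θ v' - θ v| ≤ ‖w‖ * ‖v - v'‖ := by
    rw [hθd']; exact abs_real_inner_le_norm _ _
  calc (p (θ η') - p (θ η)) * (θ v' - θ v)
      ≤ |p (θ η') - p (θ η)| * |θ v' - θ v| := h1
    _ ≤ (Lp * (‖w‖ * ‖η - η'‖)) * (‖w‖ * ‖v - v'‖) := by
        apply mul_le_mul
        · exact h2.trans (by gcongr)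
        · exact hv
        · exact abs_nonneg _
        · positivity
    _ = Lp * ‖w‖ ^ 2 * ‖η - η'‖ * ‖v - v'‖ := by ring
end

section
/- Let X be a real Hilbert space, w ∈ X with w ≠ 0, l > 0, and define θ : X → ℝ by θ(v) = 2l − (w, v)_X. Set K = {v ∈ X : θ(v) ≥ 0} and K' = {v ∈ X : θ(v) ≥ 2l}. Let q : ℝ → ℝ be Lipschitz continuous, satisfy (q(r₁) − q(r₂))(r₁ − r₂) ≤ 0 for all r₁, r₂ ∈ ℝ, q(r) ≥ 0 for r ≤ 2l, q(r) ≤ 0 for r ≥ 2l, and q(r) = 0 if and only if r ≥ 2l. Define G : X → X by Gu = q(θ(u)) w. Then: (a) (Gu, v − u)_X ≤ 0 for all u ∈ K and v ∈ K'; and (b) if u ∈ K and (Gu, v − u)_X = 0 for all v ∈ K', then u ∈ K'. -/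
open scoped InnerProductSpace

theorem penalty_operator_rigid_compression
    {X : Type*} [NormedAddCommGroup X] [InnerProductSpace ℝ X] [CompleteSpace X]
    (w : X) (hw : w ≠ 0) (l : ℝ) (hl : 0 < l)
    (θ : X → ℝ) (hθ : ∀ v : X, θ v = 2 * l - ⟪w, v⟫_ℝ)
    (K K' : Set X)
    (hK : K = {v : X | θ v ≥ 0}) (hK' : K' = {v : X | θ v ≥ 2 * l})
    (q : ℝ → ℝ)
    (hq_lip : ∃ Lq : ℝ, 0 < Lq ∧ ∀ r s : ℝ, |q r - q s| ≤ Lq * |r - s|)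
    (hq_mono : ∀ r s : ℝ, (q r - q s) * (r - s) ≤ 0)
    (hq_nonneg : ∀ r : ℝ, r ≤ 2 * l → 0 ≤ q r)
    (hq_nonpos : ∀ r : ℝ, 2 * l ≤ r → q r ≤ 0)
    (hq_zero : ∀ r : ℝ, q r = 0 ↔ 2 * l ≤ r)
    (G : X → X) (hG : ∀ u : X, G u = q (θ u) • w) :
    (∀ u ∈ K, ∀ v ∈ K', ⟪G u, v - u⟫_ℝ ≤ 0) ∧
    (∀ u ∈ K, (∀ v ∈ K', ⟪G u, v - u⟫_ℝ = 0) → u ∈ K') := by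
  have key : ∀ u v : X, ⟪G u, v - u⟫_ℝ = q (θ u) * (θ u - θ v) := by
    intro u v
    rw [hG, real_inner_smul_left, inner_sub_right, hθ u, hθ v]
    ring
  constructor
  · intro u hu v hv
    rw [hK] at hu; rw [hK'] at hv
    rw [key]
    rcases le_or_gt (2 * l) (θ u) with h | h
    · rw [(hq_zero (θ u)).2 h]; ring_nf; simp
    · have h1 : 0 ≤ q (θ u) := hq_nonneg _ h.le
      have h2 : θ u - θ v ≤ 0 := by
        have := hv
        simp only [Set.mem_setOf_eq] at this
        linarith
      exact mul_nonpos_of_nonneg_of_nonpos h1 h2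
  · intro u hu heq
    rw [hK'] ; simp only [Set.mem_setOf_eq]
    have h0 : (0 : X) ∈ K' := by
      rw [hK']; simp only [Set.mem_setOf_eq]
      rw [hθ]; simp
    have := heq 0 h0
    rw [key] at this
    rw [hθ 0] at this
    simp only [inner_zero_right, sub_zero] at this
    by_contra hlt
    push_neg at hlt
    have hqpos : 0 < q (θ u) := by
      rcases lt_or_eq_of_le (hq_nonneg _ hlt.le) with h | h
      · exact h
      · exact absurd ((hq_zero (θ u)).1 h.symm) (not_le.2 hlt)
    have : q (θ u) * (θ u - 2 * l) < 0 :=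
      mul_neg_of_pos_of_neg hqpos (by linarith)
    linarith
end

section
/- Let X be a real Hilbert space, w ∈ X, l > 0, and define θ : X → ℝ by θ(v) = 2l − (w, v)_X. Set K = {v ∈ X : θ(v) ≥ 0} and K'' = {v ∈ X : 0 ≤ θ(v) ≤ 2l}. Let q : ℝ → ℝ be Lipschitz continuous, satisfy (q(r₁) − q(r₂))(r₁ − r₂) ≤ 0 for all r₁, r₂ ∈ ℝ, q(r) ≥ 0 for r ≤ 2l, q(r) ≤ 0 for r ≥ 2l, and q(r) = 0 if and only if r ≤ 2l. Define G : X → X by Gu = q(θ(u)) w. Then: (a) (Gu, v − u)_X ≤ 0 for all u ∈ K and v ∈ K''; and (b) if u ∈ K and (Gu, v − u)_X = 0 for all v ∈ K'', then u ∈ K''. -/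
open scoped InnerProductSpace

theorem penalty_operator_rigid_extension
    {X : Type*} [NormedAddCommGroup X] [InnerProductSpace ℝ X] [CompleteSpace X]
    (w : X) (l : ℝ) (hl : 0 < l)
    (θ : X → ℝ) (hθ : ∀ v : X, θ v = 2 * l - ⟪w, v⟫_ℝ)
    (K K'' : Set X)
    (hK : K = {v : X | θ v ≥ 0}) (hK'' : K'' = {v : X | 0 ≤ θ v ∧ θ v ≤ 2 * l})
    (q : ℝ → ℝ)
    (hq_lip : ∃ Lq : ℝ, 0 < Lq ∧ ∀ r s : ℝ, |q r - q s| ≤ Lq * |r - s|)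
    (hq_mono : ∀ r s : ℝ, (q r - q s) * (r - s) ≤ 0)
    (hq_nonneg : ∀ r : ℝ, r ≤ 2 * l → 0 ≤ q r)
    (hq_nonpos : ∀ r : ℝ, 2 * l ≤ r → q r ≤ 0)
    (hq_zero : ∀ r : ℝ, q r = 0 ↔ r ≤ 2 * l)
    (G : X → X) (hG : ∀ u : X, G u = q (θ u) • w) :
    (∀ u ∈ K, ∀ v ∈ K'', ⟪G u, v - u⟫_ℝ ≤ 0) ∧
    (∀ u ∈ K, (∀ v ∈ K'', ⟪G u, v - u⟫_ℝ = 0) → u ∈ K'') := by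
  have key : ∀ u v : X, ⟪G u, v - u⟫_ℝ = q (θ u) * (θ u - θ v) := by
    intro u v
    rw [hG, real_inner_smul_left, inner_sub_right, hθ u, hθ v]
    ring
  constructor
  · intro u hu v hv
    rw [hK''] at hv
    rw [key]
    rcases le_or_gt (θ u) (2 * l) with h | h
    · rw [(hq_zero (θ u)).2 h]; simp
    · have hq : q (θ u) ≤ 0 := hq_nonpos _ h.le
      have : 0 ≤ θ u - θ v := by linarith [hv.2]
      exact mul_nonpos_of_nonpos_of_nonneg hq this
  · intro u hu h
    rw [hK''] at *
    rw [hK] at hu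
    refine ⟨hu, ?_⟩
    by_contra hgt
    push_neg at hgt
    have h0 : (0 : X) ∈ {v : X | 0 ≤ θ v ∧ θ v ≤ 2 * l} := by
      simp only [Set.mem_setOf_eq, hθ, inner_zero_right, sub_zero]
      constructor <;> linarith
    have := h 0 h0
    rw [key] at this
    have hθ0 : θ (0 : X) = 2 * l := by rw [hθ]; simp
    rw [hθ0] at this
    have hqne : q (θ u) ≠ 0 := fun hz => absurd ((hq_zero _).1 hz) (not_le.2 hgt)
    have : θ u - 2 * l = 0 := by
      rcases mul_eq_zero.1 this with h' | h'
      · exact absurd h' hqne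
      · exact h'
    linarith
end

section
/- Let X be a real Hilbert space, w ∈ X, l > 0, and define θ : X → ℝ by θ(v) = 2l − (w, v)_X. Set K = {v ∈ X : θ(v) ≥ 0} and K''' = {v ∈ X : θ(v) = 2l}. Let q : ℝ → ℝ be Lipschitz continuous, satisfy (q(r₁) − q(r₂))(r₁ − r₂) ≤ 0 for all r₁, r₂ ∈ ℝ, q(r) ≥ 0 for r ≤ 2l, q(r) ≤ 0 for r ≥ 2l, and q(r) = 0 if and only if r = 2l. Define G : X → X by Gu = q(θ(u)) w. Then: (a) (Gu, v − u)_X ≤ 0 for all u ∈ K and v ∈ K'''; and (b) if u ∈ K and (Gu, v − u)_X = 0 for all v ∈ K''', then u ∈ K'''. -/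
open scoped InnerProductSpace

theorem penalty_operator_rigid_both
    {X : Type*} [NormedAddCommGroup X] [InnerProductSpace ℝ X] [CompleteSpace X]
    (w : X) (l : ℝ) (hl : 0 < l)
    (θ : X → ℝ) (hθ : ∀ v : X, θ v = 2 * l - ⟪w, v⟫_ℝ)
    (K K''' : Set X)
    (hK : K = {v : X | θ v ≥ 0}) (hK''' : K''' = {v : X | θ v = 2 * l})
    (q : ℝ → ℝ)
    (hq_lip : ∃ Lq : ℝ, 0 < Lq ∧ ∀ r s : ℝ, |q r - q s| ≤ Lq * |r - s|)
    (hq_mono : ∀ r s : ℝ, (q r - q s) * (r - s) ≤ 0)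
    (hq_nonneg : ∀ r : ℝ, r ≤ 2 * l → 0 ≤ q r)
    (hq_nonpos : ∀ r : ℝ, 2 * l ≤ r → q r ≤ 0)
    (hq_zero : ∀ r : ℝ, q r = 0 ↔ r = 2 * l)
    (G : X → X) (hG : ∀ u : X, G u = q (θ u) • w) :
    (∀ u ∈ K, ∀ v ∈ K''', ⟪G u, v - u⟫_ℝ ≤ 0) ∧
    (∀ u ∈ K, (∀ v ∈ K''', ⟪G u, v - u⟫_ℝ = 0) → u ∈ K''') := by
  have hq2l : q (2 * l) = 0 := (hq_zero (2 * l)).mpr rfl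
  have key : ∀ u v : X, ⟪G u, v - u⟫_ℝ = q (θ u) * (θ u - θ v) := by
    intro u v
    rw [hG, inner_smul_left, inner_sub_right]
    have h1 : ⟪w, v⟫_ℝ = 2 * l - θ v := by rw [hθ v]; ring
    have h2 : ⟪w, u⟫_ℝ = 2 * l - θ u := by rw [hθ u]; ring
    simp [h1, h2]
  constructor
  · intro u hu v hv
    rw [hK'''] at hv
    rw [key, hv]
    have := hq_mono (θ u) (2 * l)
    rw [hq2l] at this
    linarith [this]
  · intro u hu h
    have h0 : (0 : X) ∈ K''' := by
      rw [hK''']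
      simp [Set.mem_setOf_eq, hθ]
    have := h 0 h0
    rw [key, hθ 0] at this
    simp at this
    rcases this with h1 | h1
    · rw [hK''']
      exact ((hq_zero (θ u)).mp h1)
    · rw [hK''']
      show θ u = 2 * l
      linarith
end

section
/- Let X be a real Hilbert space, w ∈ X with w ≠ 0, l > 0, and define θ : X → ℝ by θ(v) = 2l − (w, v)_X; set K = {v ∈ X : θ(v) ≥ 0} and K' = {v ∈ X : θ(v) ≥ 2l}. Let A : X → X satisfy (Au − Av, u − v)_X ≥ m‖u − v‖_X² and ‖Au − Av‖_X ≤ M‖u − v‖_X for all u, v ∈ X, with m, M > 0. Let p : ℝ → ℝ be Lipschitz with constant L_p > 0 and assume m > L_p‖w‖_X²; define j(u, v) = −p(θ(u)) θ(v). Let q : ℝ → ℝ be Lipschitz continuous, satisfy (q(r₁) − q(r₂))(r₁ − r₂) ≤ 0 for all r₁, r₂ ∈ ℝ, q(r) ≥ 0 for r ≤ 2l, q(r) ≤ 0 for r ≥ 2l, and q(r) = 0 if and only if r ≥ 2l; define G : X → X by Gu = q(θ(u)) w. Let f ∈ X and let {λ_n} be positive reals with λ_n → 0. Then for each n there exists a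 unique u_n ∈ K with (Au_n, v − u_n)_X + (1/λ_n)(Gu_n, v − u_n)_X + j(u_n, v) − j(u_n, u_n) ≥ (f, v − u_n)_X for all v ∈ K, there exists a unique u' ∈ K' with (Au', v − u')_X + j(u', v) − j(u', u') ≥ (f, v − u')_X for all v ∈ K', and u_n → u' strongly in X as n → ∞. -/
/-!
With `θ v = 2l - ⟪w, v⟫`, the spring reaction `j` and the penalty `G` both act through ridge
operators `u ↦ φ ⟪w, u⟫ • w`. Each problem is therefore a variational inequality
`⟪B u, v - u⟫ ≥ 0` on a half-space, for an operator `B` that is Lipschitz and strongly monotone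
with constant `m - Lp ‖w‖²`: the `p`-term costs at most `Lp ‖w‖²` and the penalty is monotone.
Existence and uniqueness follow from the Lions–Stampacchia theorem (a fixed point of the
projected gradient step). For convergence, the penalized inequality is tested with `u'` and the
limit inequality with the projection of `uₙ` onto `K'`. The resulting estimate bounds
`(1/λₙ) q(θ uₙ)` whenever `uₙ ∉ K'`; since `q > 0` below `2l`, the constraint violation
`(2l - θ uₙ)⁺` tends to `0`, and the same estimate then bounds `‖uₙ - u'‖²` by a multiple of it.
-/

open scoped InnerProductSpace NNReal
open Filter Topology

section VariationalInequality

variable {X : Type*} [NormedAddCommGroup X] [InnerProductSpace ℝ X]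

def StronglyMonotoneWith (m : ℝ) (B : X → X) : Prop :=
  ∀ u v, m * ‖u - v‖ ^ 2 ≤ ⟪B u - B v, u - v⟫_ℝ

def IsVarIneqSolution (S : Set X) (B : X → X) (u : X) : Prop :=
  u ∈ S ∧ ∀ v ∈ S, 0 ≤ ⟪B u, v - u⟫_ℝ

theorem exists_forall_inner_sub_nonpos [CompleteSpace X] {S : Set X} (hSc : Convex ℝ S)
    (hScl : IsClosed S) (hSn : S.Nonempty) (x : X) :
    ∃ z ∈ S, ∀ v ∈ S, ⟪x - z, v - z⟫_ℝ ≤ 0 := by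
  obtain ⟨z, hz, hmin⟩ := exists_norm_eq_iInf_of_complete_convex hSn hScl.isComplete hSc x
  exact ⟨z, hz, (norm_eq_iInf_iff_real_inner_le_zero hSc hz).1 hmin⟩

theorem lipschitzWith_one_of_forall_inner_sub_nonpos {S : Set X} {P : X → X}
    (hPS : ∀ x, P x ∈ S) (hP : ∀ x, ∀ v ∈ S, ⟪x - P x, v - P x⟫_ℝ ≤ 0) : LipschitzWith 1 P := by
  refine LipschitzWith.of_dist_le_mul fun x y => ?_
  rw [NNReal.coe_one, one_mul, dist_eq_norm, dist_eq_norm]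
  have hx := hP x (P y) (hPS y)
  have hy := hP y (P x) (hPS x)
  have key : ‖P x - P y‖ ^ 2 ≤ ⟪x - y, P x - P y⟫_ℝ := by
    rw [← neg_sub (P x) (P y), inner_neg_right] at hx
    have hsplit : x - y = (x - P x) - (y - P y) + (P x - P y) := by abel
    rw [hsplit, inner_add_left, inner_sub_left, real_inner_self_eq_norm_sq]
    linarith
  have := key.trans (real_inner_le_norm _ _)
  nlinarith [norm_nonneg (P x - P y), norm_nonneg (x - y)]

namespace StronglyMonotoneWith

variable {a b m : ℝ} {B C : X → X}

theorem add (hB : StronglyMonotoneWith a B) (hC : StronglyMonotoneWith b C) :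
    StronglyMonotoneWith (a + b) (B + C) := fun u v => by
  have := hB u v
  have := hC u v
  simp only [Pi.add_apply, add_sub_add_comm, inner_add_left]
  linarith

theorem sub_const (hB : StronglyMonotoneWith a B) (f : X) :
    StronglyMonotoneWith a (fun u => B u - f) := fun u v => by
  simpa only [sub_sub_sub_cancel_right] using hB u v

theorem const_smul (hB : StronglyMonotoneWith a B) {c : ℝ} (hc : 0 ≤ c) :
    StronglyMonotoneWith (c * a) (c • B) := fun u v => by
  simp only [Pi.smul_apply, ← smul_sub, real_inner_smul_left, mul_assoc]
  exact mul_le_mul_of_nonneg_left (hB u v) hc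

theorem eq_of_isVarIneqSolution (hB : StronglyMonotoneWith m B) (hm : 0 < m) {S : Set X}
    {u v : X} (hu : IsVarIneqSolution S B u) (hv : IsVarIneqSolution S B v) : u = v := by
  have huv := hu.2 v hv.1
  have hvu := hv.2 u hu.1
  have hmono := hB u v
  rw [← neg_sub, inner_neg_right] at huv
  rw [inner_sub_left] at hmono
  have : ‖u - v‖ ^ 2 ≤ 0 := by nlinarith
  exact sub_eq_zero.1 (norm_eq_zero.1 (pow_eq_zero_iff two_ne_zero |>.1
    (le_antisymm this (sq_nonneg _))))

theorem exists_contractingWith_sub_smul (hB : StronglyMonotoneWith m B) (hm : 0 < m)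
    {M : ℝ≥0} (hBM : LipschitzWith M B) :
    ∃ ρ : ℝ, 0 < ρ ∧ ∃ k, ContractingWith k (fun u => u - ρ • B u) := by
  set L : ℝ := M + m
  have hL : 0 < L := by positivity
  set ρ : ℝ := m / L ^ 2
  have hρ : 0 < ρ := by positivity
  have hsq (u v : X) :
      ‖(u - ρ • B u) - (v - ρ • B v)‖ ^ 2 ≤ (1 - (m / L) ^ 2) * ‖u - v‖ ^ 2 := by
    have hBuv : ‖B u - B v‖ ≤ L * ‖u - v‖ := by
      simpa only [dist_eq_norm] using
        (hBM.dist_le_mul u v).trans (by gcongr; linarith : (M : ℝ) * dist u v ≤ L * dist u v)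
    have hstep : (u - ρ • B u) - (v - ρ • B v) = (u - v) - ρ • (B u - B v) := by module
    have hmono := hB u v
    rw [hstep, norm_sub_sq_real, real_inner_smul_right, norm_smul, Real.norm_of_nonneg hρ.le,
      real_inner_comm]
    have : ρ ^ 2 * ‖B u - B v‖ ^ 2 ≤ ρ ^ 2 * (L * ‖u - v‖) ^ 2 := by gcongr
    calc ‖u - v‖ ^ 2 - 2 * (ρ * ⟪B u - B v, u - v⟫_ℝ) + (ρ * ‖B u - B v‖) ^ 2
        ≤ ‖u - v‖ ^ 2 - 2 * (ρ * (m * ‖u - v‖ ^ 2)) + ρ ^ 2 * (L * ‖u - v‖) ^ 2 := by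
          nlinarith
      _ = (1 - (m / L) ^ 2) * ‖u - v‖ ^ 2 := by simp only [ρ]; field_simp; ring
  refine ⟨ρ, hρ, (√(1 - (m / L) ^ 2)).toNNReal,
    Real.toNNReal_lt_one.2 ((Real.sqrt_lt' one_pos).2 ?_), LipschitzWith.of_dist_le' fun u v => ?_⟩
  · have : 0 < (m / L) ^ 2 := by positivity
    linarith
  · rw [dist_eq_norm, dist_eq_norm, ← Real.sqrt_sq (norm_nonneg (u - v)),
      ← Real.sqrt_mul' _ (sq_nonneg _), ← Real.sqrt_sq (norm_nonneg (_ - _))]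
    exact Real.sqrt_le_sqrt (hsq u v)

theorem exists_isVarIneqSolution [CompleteSpace X] (hB : StronglyMonotoneWith m B) (hm : 0 < m)
    {M : ℝ≥0} (hBM : LipschitzWith M B) {S : Set X} (hSc : Convex ℝ S) (hScl : IsClosed S)
    (hSn : S.Nonempty) : ∃ u, IsVarIneqSolution S B u := by
  choose P hPS hP using exists_forall_inner_sub_nonpos hSc hScl hSn
  obtain ⟨ρ, hρ, k, hk⟩ := hB.exists_contractingWith_sub_smul hm hBM
  have hT : ContractingWith k (P ∘ fun u => u - ρ • B u) :=
    ⟨hk.1, by simpa using (lipschitzWith_one_of_forall_inner_sub_nonpos hPS hP).comp hk.2⟩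
  set u := ContractingWith.fixedPoint _ hT
  have hu : P (u - ρ • B u) = u := hT.fixedPoint_isFixedPt
  refine ⟨u, hu ▸ hPS _, fun v hv => ?_⟩
  have := hP (u - ρ • B u) v hv
  rw [hu, sub_sub_cancel_left, inner_neg_left, real_inner_smul_left] at this
  nlinarith

theorem existsUnique_isVarIneqSolution [CompleteSpace X] (hB : StronglyMonotoneWith m B)
    (hm : 0 < m) {M : ℝ≥0} (hBM : LipschitzWith M B) {S : Set X} (hSc : Convex ℝ S)
    (hScl : IsClosed S) (hSn : S.Nonempty) : ∃! u, IsVarIneqSolution S B u :=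
  let ⟨u, hu⟩ := hB.exists_isVarIneqSolution hm hBM hSc hScl hSn
  ⟨u, hu, fun _ hv => hB.eq_of_isVarIneqSolution hm hv hu⟩

theorem existsUnique_isVarIneqSolution_setOf_inner_le [CompleteSpace X]
    (hB : StronglyMonotoneWith m B) (hm : 0 < m) {M : ℝ≥0} (hBM : LipschitzWith M B) (w : X)
    {r : ℝ} (hr : 0 ≤ r) : ∃! u, IsVarIneqSolution {v | ⟪w, v⟫_ℝ ≤ r} B u :=
  hB.existsUnique_isVarIneqSolution hm hBM (convex_halfSpace_le (innerₛₗ ℝ w).isLinear r)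
    (isClosed_le (continuous_const.inner continuous_id) continuous_const) ⟨0, by simpa using hr⟩

end StronglyMonotoneWith

theorem abs_inner_sub_inner_le (w u v : X) : |⟪w, u⟫_ℝ - ⟪w, v⟫_ℝ| ≤ ‖w‖ * ‖u - v‖ := by
  rw [← inner_sub_right]
  exact abs_real_inner_le_norm w (u - v)

/-- The gradient of `u ↦ Φ ⟪w, u⟫` when `Φ' = φ`. -/
def ridgeOperator (w : X) (φ : ℝ → ℝ) : X → X := fun u => φ ⟪w, u⟫_ℝ • w

section ridgeOperator

variable {w : X} {φ : ℝ → ℝ}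

theorem inner_ridgeOperator_sub_ridgeOperator (u v : X) :
    ⟪ridgeOperator w φ u - ridgeOperator w φ v, u - v⟫_ℝ
      = (φ ⟪w, u⟫_ℝ - φ ⟪w, v⟫_ℝ) * ⟪w, u - v⟫_ℝ := by
  rw [ridgeOperator, ridgeOperator, ← sub_smul, real_inner_smul_left]

theorem LipschitzWith.ridgeOperator {L : ℝ≥0} (hφ : LipschitzWith L φ) :
    LipschitzWith (L * ‖w‖₊ ^ 2) (ridgeOperator w φ) := by
  refine LipschitzWith.of_dist_le_mul fun u v => ?_
  rw [dist_eq_norm, dist_eq_norm, _root_.ridgeOperator, _root_.ridgeOperator, ← sub_smul,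
    norm_smul]
  have hφuv : ‖φ ⟪w, u⟫_ℝ - φ ⟪w, v⟫_ℝ‖ ≤ L * (‖w‖ * ‖u - v‖) := by
    simpa only [dist_eq_norm, Real.norm_eq_abs] using
      (hφ.dist_le_mul _ _).trans (by gcongr; exact abs_inner_sub_inner_le w u v)
  push_cast
  calc ‖φ ⟪w, u⟫_ℝ - φ ⟪w, v⟫_ℝ‖ * ‖w‖ ≤ L * (‖w‖ * ‖u - v‖) * ‖w‖ := by gcongr
    _ = L * ‖w‖ ^ 2 * ‖u - v‖ := by ring

theorem stronglyMonotoneWith_ridgeOperator {L : ℝ≥0} (hφ : LipschitzWith L φ) :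
    StronglyMonotoneWith (-(L * ‖w‖ ^ 2)) (ridgeOperator w φ) := fun u v => by
  rw [inner_ridgeOperator_sub_ridgeOperator, inner_sub_right]
  have hφuv : |φ ⟪w, u⟫_ℝ - φ ⟪w, v⟫_ℝ| ≤ L * |⟪w, u⟫_ℝ - ⟪w, v⟫_ℝ| := by
    simpa only [Real.dist_eq] using hφ.dist_le_mul _ _
  have hsq : |⟪w, u⟫_ℝ - ⟪w, v⟫_ℝ| ^ 2 ≤ (‖w‖ * ‖u - v‖) ^ 2 := by
    gcongr; exact abs_inner_sub_inner_le w u v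
  have := neg_abs_le ((φ ⟪w, u⟫_ℝ - φ ⟪w, v⟫_ℝ) * (⟪w, u⟫_ℝ - ⟪w, v⟫_ℝ))
  rw [abs_mul] at this
  nlinarith [abs_nonneg (⟪w, u⟫_ℝ - ⟪w, v⟫_ℝ), L.2]

theorem Monotone.stronglyMonotoneWith_ridgeOperator (hφ : Monotone φ) :
    StronglyMonotoneWith 0 (ridgeOperator w φ) := fun u v => by
  rw [inner_ridgeOperator_sub_ridgeOperator, inner_sub_right, zero_mul]
  exact (monovary_id_iff.2 hφ).sub_mul_sub_nonneg _ _

theorem StronglyMonotoneWith.add_ridgeOperator {m : ℝ} {B : X → X}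
    (hB : StronglyMonotoneWith m B) {L : ℝ≥0} (hφ : LipschitzWith L φ) :
    StronglyMonotoneWith (m - L * ‖w‖ ^ 2) (B + ridgeOperator w φ) := by
  simpa only [sub_eq_add_neg] using hB.add (stronglyMonotoneWith_ridgeOperator hφ)

theorem StronglyMonotoneWith.add_smul_ridgeOperator {m : ℝ} {B : X → X}
    (hB : StronglyMonotoneWith m B) (hφ : Monotone φ) {c : ℝ} (hc : 0 ≤ c) :
    StronglyMonotoneWith m (B + c • ridgeOperator w φ) := by
  simpa using hB.add (hφ.stronglyMonotoneWith_ridgeOperator.const_smul hc)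

end ridgeOperator

section Penalty

variable {m : ℝ} {B : X → X} {w : X}

/-- The basic estimate of the penalty method: `u` is tested against `u'`, and `u'` against the
projection `u - (max ⟪w, u⟫ 0 / ‖w‖²) • w` of `u` onto the half-space `⟪w, ·⟫ ≤ 0`. -/
theorem StronglyMonotoneWith.penalty_estimate (hB : StronglyMonotoneWith m B) (hw : w ≠ 0)
    {κ : ℝ} (hκ : 0 ≤ κ) {u u' : X} (hu : 0 ≤ ⟪B u + κ • w, u' - u⟫_ℝ)
    (hu' : IsVarIneqSolution {v | ⟪w, v⟫_ℝ ≤ 0} B u') :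
    m * ‖u - u'‖ ^ 2 + κ * ⟪w, u⟫_ℝ ≤ ‖B u'‖ / ‖w‖ * max ⟪w, u⟫_ℝ 0 := by
  have hw' : 0 < ‖w‖ := norm_pos_iff.2 hw
  set s := max ⟪w, u⟫_ℝ 0 / ‖w‖ ^ 2
  have hs : 0 ≤ s := by positivity
  have hz : u - s • w ∈ {v | ⟪w, v⟫_ℝ ≤ 0} := by
    simp only [Set.mem_ofPred_eq, inner_sub_right, real_inner_smul_right,
      real_inner_self_eq_norm_sq, s, div_mul_cancel₀ _ (pow_ne_zero 2 hw'.ne')]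
    exact sub_nonpos.2 (le_max_left _ _)
  have htest : κ * ⟪w, u⟫_ℝ ≤ ⟪B u, u' - u⟫_ℝ := by
    rw [inner_add_left, real_inner_smul_left, inner_sub_right w] at hu
    linarith [mul_nonpos_of_nonneg_of_nonpos hκ hu'.1]
  have htest' := hu'.2 _ hz
  have hproj : -⟪B u', s • w⟫_ℝ ≤ ‖B u'‖ / ‖w‖ * max ⟪w, u⟫_ℝ 0 := by
    rw [real_inner_smul_right, ← mul_neg]
    calc s * -⟪B u', w⟫_ℝ ≤ s * (‖B u'‖ * ‖w‖) := by
          gcongr; exact (neg_le_abs _).trans (abs_real_inner_le_norm _ _)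
      _ = ‖B u'‖ / ‖w‖ * max ⟪w, u⟫_ℝ 0 := by simp only [s]; field_simp
  have hsplit : ⟪B u - B u', u - u'⟫_ℝ
      = -⟪B u, u' - u⟫_ℝ - ⟪B u', u - s • w - u'⟫_ℝ - ⟪B u', s • w⟫_ℝ := by
    simp only [inner_sub_left, inner_sub_right]; ring
  linarith [hB u u']

theorem StronglyMonotoneWith.tendsto_of_penalty {ι : Type*} {l : Filter ι}
    (hB : StronglyMonotoneWith m B) (hm : 0 < m) (hw : w ≠ 0) {ψ : ℝ → ℝ} (hψ : Monotone ψ)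
    (hψ0 : ∀ t, ψ t = 0 ↔ t ≤ 0) {c : ι → ℝ} (hc : Tendsto c l atTop) {K : Set X}
    (hK : {v | ⟪w, v⟫_ℝ ≤ 0} ⊆ K) {u : ι → X} {u' : X}
    (hu : ∀ i, IsVarIneqSolution K (B + c i • ridgeOperator w ψ) (u i))
    (hu' : IsVarIneqSolution {v | ⟪w, v⟫_ℝ ≤ 0} B u') :
    Tendsto u l (𝓝 u') := by
  set C := ‖B u'‖ / ‖w‖
  have hψ_nonneg (t : ℝ) : 0 ≤ ψ t := by
    rcases le_total t 0 with ht | ht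
    · exact ((hψ0 t).2 ht).ge
    · exact ((hψ0 0).2 le_rfl).ge.trans (hψ ht)
  have hψ_mul (t : ℝ) : 0 ≤ ψ t * t := by
    rcases le_total t 0 with ht | ht
    · rw [(hψ0 t).2 ht, zero_mul]
    · exact mul_nonneg (hψ_nonneg t) ht
  have hest : ∀ᶠ i in l, 0 ≤ c i ∧
      m * ‖u i - u'‖ ^ 2 + c i * (ψ ⟪w, u i⟫_ℝ * ⟪w, u i⟫_ℝ) ≤ C * max ⟪w, u i⟫_ℝ 0 := by
    filter_upwards [hc.eventually_ge_atTop 0] with i hci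
    refine ⟨hci, ?_⟩
    have hui := (hu i).2 u' (hK hu'.1)
    simp only [Pi.add_apply, Pi.smul_apply, ridgeOperator, smul_smul] at hui
    simpa only [mul_assoc] using hB.penalty_estimate hw (mul_nonneg hci (hψ_nonneg _)) hui hu'
  have hviolation : Tendsto (fun i => max ⟪w, u i⟫_ℝ 0) l (𝓝 0) := by
    refine tendsto_order.2 ⟨fun a ha => .of_forall fun i => ha.trans_le (le_max_right _ _),
      fun ε hε => ?_⟩
    have hψε : 0 < ψ ε := (hψ_nonneg ε).lt_of_ne' (mt (hψ0 ε).1 (not_le.2 hε))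
    filter_upwards [hest, hc.eventually_gt_atTop (C / ψ ε)] with i ⟨hci, hi⟩ hci'
    refine max_lt (not_le.1 fun hεt => ?_) hε
    -- the estimate forces `c i * ψ ⟪w, u i⟫ ≤ C`, while `ψ ⟪w, u i⟫ ≥ ψ ε`
    have ht : 0 < ⟪w, u i⟫_ℝ := hε.trans_le hεt
    have hCψ : C < c i * ψ ε := (div_lt_iff₀ hψε).1 hci'
    have hψt : c i * ψ ε ≤ c i * ψ ⟪w, u i⟫_ℝ := by gcongr; exact hψ hεt
    rw [max_eq_left ht.le] at hi
    nlinarith [sq_nonneg ‖u i - u'‖]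
  have hsq : Tendsto (fun i => ‖u i - u'‖ ^ 2) l (𝓝 0) := by
    refine squeeze_zero' (.of_forall fun i => sq_nonneg _) ?_
      (by simpa using hviolation.const_mul (C / m))
    filter_upwards [hest] with i ⟨hci, hi⟩
    rw [div_mul_eq_mul_div, le_div_iff₀ hm]
    nlinarith [mul_nonneg hci (hψ_mul ⟪w, u i⟫_ℝ)]
  rw [tendsto_iff_norm_sub_tendsto_zero]
  simpa [Real.sqrt_sq (norm_nonneg _)] using hsq.sqrt

end Penalty

end VariationalInequality

theorem lipschitzWith_comp_const_sub {g : ℝ → ℝ} {L : ℝ≥0}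
    (hg : ∀ r s, |g r - g s| ≤ L * |r - s|) (a : ℝ) : LipschitzWith L (fun t => g (a - t)) :=
  .of_dist_le_mul fun s t => by simpa [Real.dist_eq, abs_sub_comm] using hg (a - s) (a - t)

theorem spring_rods_convergence_rigid_compression_general
    {X : Type*} [NormedAddCommGroup X] [InnerProductSpace ℝ X] [CompleteSpace X]
    (w : X) (hw : w ≠ 0) (l : ℝ) (hl : 0 < l)
    (θ : X → ℝ) (hθ : ∀ v : X, θ v = 2 * l - ⟪w, v⟫_ℝ)
    (K K' : Set X)
    (hK : K = {v : X | θ v ≥ 0}) (hK' : K' = {v : X | θ v ≥ 2 * l})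
    (A : X → X) (m M : ℝ)
    (hA_mono : ∀ u v : X, m * ‖u - v‖ ^ 2 ≤ ⟪A u - A v, u - v⟫_ℝ)
    (hA_lip : ∀ u v : X, ‖A u - A v‖ ≤ M * ‖u - v‖)
    (p : ℝ → ℝ) (Lp : ℝ) (hLp : 0 < Lp)
    (hp_lip : ∀ r s : ℝ, |p r - p s| ≤ Lp * |r - s|)
    (hsmall : Lp * ‖w‖ ^ 2 < m)
    (j : X → X → ℝ) (hj : ∀ u v : X, j u v = -(p (θ u)) * θ v)
    (q : ℝ → ℝ)
    (hq_lip : ∃ Lq : ℝ, 0 < Lq ∧ ∀ r s : ℝ, |q r - q s| ≤ Lq * |r - s|)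
    (hq_mono : ∀ r s : ℝ, (q r - q s) * (r - s) ≤ 0)
    (hq_zero : ∀ r : ℝ, q r = 0 ↔ 2 * l ≤ r)
    (G : X → X) (hG : ∀ u : X, G u = q (θ u) • w)
    (f : X) (lam : ℕ → ℝ) (hlam_pos : ∀ n, 0 < lam n)
    (hlam_lim : Tendsto lam atTop (nhds 0)) :
    (∀ n : ℕ, ∃! u : X, u ∈ K ∧ ∀ v ∈ K,
      ⟪A u, v - u⟫_ℝ + (1 / lam n) * ⟪G u, v - u⟫_ℝ + j u v - j u u
        ≥ ⟪f, v - u⟫_ℝ) ∧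
    (∃! u' : X, u' ∈ K' ∧ ∀ v ∈ K',
      ⟪A u', v - u'⟫_ℝ + j u' v - j u' u' ≥ ⟪f, v - u'⟫_ℝ) ∧
    (∀ (un : ℕ → X) (u' : X),
      (∀ n : ℕ, un n ∈ K ∧ ∀ v ∈ K,
        ⟪A (un n), v - un n⟫_ℝ + (1 / lam n) * ⟪G (un n), v - un n⟫_ℝ
          + j (un n) v - j (un n) (un n) ≥ ⟪f, v - un n⟫_ℝ) →
      (u' ∈ K' ∧ ∀ v ∈ K',
        ⟪A u', v - u'⟫_ℝ + j u' v - j u' u' ≥ ⟪f, v - u'⟫_ℝ) →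
      Tendsto un atTop (nhds u')) := by
  obtain ⟨Lq, hLq, hq_lip⟩ := hq_lip
  obtain rfl : θ = fun v => 2 * l - ⟪w, v⟫_ℝ := funext hθ
  set ψ : ℝ → ℝ := fun t => q (2 * l - t)
  obtain rfl : G = ridgeOperator w ψ := funext hG
  obtain rfl : K = {v | ⟪w, v⟫_ℝ ≤ 2 * l} := by rw [hK]; ext; simp
  obtain rfl : K' = {v | ⟪w, v⟫_ℝ ≤ 0} := by rw [hK']; ext; simp
  have hq_anti : Antitone q :=
    antivary_id_iff.1 (antivary_iff_forall_mul_nonpos.2 fun r s => hq_mono s r)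
  have hψ : Monotone ψ := fun s t hst => hq_anti (by linarith)
  have hψ0 (t : ℝ) : ψ t = 0 ↔ t ≤ 0 := by simp [ψ, hq_zero]
  have hφL := lipschitzWith_comp_const_sub (L := ⟨Lp, hLp.le⟩) hp_lip (2 * l)
  have hψL := lipschitzWith_comp_const_sub (L := ⟨Lq, hLq.le⟩) hq_lip (2 * l)
  set B₀ : X → X := (fun u => A u - f) + ridgeOperator w (fun t => p (2 * l - t))
  have hB₀ : StronglyMonotoneWith (m - Lp * ‖w‖ ^ 2) B₀ :=
    (StronglyMonotoneWith.sub_const hA_mono f).add_ridgeOperator hφL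
  have hm' : 0 < m - Lp * ‖w‖ ^ 2 := by linarith
  have hB₀L : LipschitzWith _ B₀ :=
    ((LipschitzWith.of_dist_le' (K := M) (by simpa [dist_eq_norm] using hA_lip)).sub
      (.const f)).add hφL.ridgeOperator
  -- both problems are variational inequalities for `B₀ + c • G`, with `c = 1/λₙ` resp. `c = 0`
  have hpen (c : ℝ) (S : Set X) (u : X) : (u ∈ S ∧ ∀ v ∈ S,
      ⟪A u, v - u⟫_ℝ + c * ⟪ridgeOperator w ψ u, v - u⟫_ℝ + j u v - j u u ≥ ⟪f, v - u⟫_ℝ) ↔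
      IsVarIneqSolution S (B₀ + c • ridgeOperator w ψ) u := by
    refine and_congr_right fun _ => forall₂_congr fun v _ => ?_
    simp only [B₀, hj, Pi.add_apply, Pi.smul_apply, ridgeOperator, inner_add_left,
      inner_sub_left, real_inner_smul_left, inner_sub_right]
    constructor <;> intro <;> linarith
  have hlim (S : Set X) (u : X) : (u ∈ S ∧ ∀ v ∈ S,
      ⟪A u, v - u⟫_ℝ + j u v - j u u ≥ ⟪f, v - u⟫_ℝ) ↔ IsVarIneqSolution S B₀ u := by
    simpa using hpen 0 S u
  have hc : Tendsto (fun n => 1 / lam n) atTop atTop := by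
    simpa only [one_div, Pi.inv_def] using
      (tendsto_nhdsWithin_iff.2 ⟨hlam_lim, .of_forall hlam_pos⟩).inv_tendsto_nhdsGT_zero
  refine ⟨fun n => (existsUnique_congr (hpen _ _)).2 ?_, (existsUnique_congr (hlim _)).2 ?_,
    fun un u' hun hu' => ?_⟩
  · exact (hB₀.add_smul_ridgeOperator hψ (one_div_pos.2 (hlam_pos n)).le
      ).existsUnique_isVarIneqSolution_setOf_inner_le hm'
      (hB₀L.add ((lipschitzWith_smul _).comp hψL.ridgeOperator)) w (by positivity)
  · exact hB₀.existsUnique_isVarIneqSolution_setOf_inner_le hm' hB₀L w le_rfl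
  · exact hB₀.tendsto_of_penalty hm' hw hψ hψ0 hc
      (Set.ofPred_subset_ofPred.2 fun v hv => by linarith) (fun n => (hpen _ _ _).1 (hun n))
      ((hlim _ _).1 hu')

theorem spring_rods_convergence_rigid_compression
    {X : Type*} [NormedAddCommGroup X] [InnerProductSpace ℝ X] [CompleteSpace X]
    (w : X) (hw : w ≠ 0) (l : ℝ) (hl : 0 < l)
    (θ : X → ℝ) (hθ : ∀ v : X, θ v = 2 * l - ⟪w, v⟫_ℝ)
    (K K' : Set X)
    (hK : K = {v : X | θ v ≥ 0}) (hK' : K' = {v : X | θ v ≥ 2 * l})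
    (A : X → X) (m M : ℝ) (hm : 0 < m) (hM : 0 < M)
    (hA_mono : ∀ u v : X, m * ‖u - v‖ ^ 2 ≤ ⟪A u - A v, u - v⟫_ℝ)
    (hA_lip : ∀ u v : X, ‖A u - A v‖ ≤ M * ‖u - v‖)
    (p : ℝ → ℝ) (Lp : ℝ) (hLp : 0 < Lp)
    (hp_lip : ∀ r s : ℝ, |p r - p s| ≤ Lp * |r - s|)
    (hsmall : Lp * ‖w‖ ^ 2 < m)
    (j : X → X → ℝ) (hj : ∀ u v : X, j u v = -(p (θ u)) * θ v)
    (q : ℝ → ℝ)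
    (hq_lip : ∃ Lq : ℝ, 0 < Lq ∧ ∀ r s : ℝ, |q r - q s| ≤ Lq * |r - s|)
    (hq_mono : ∀ r s : ℝ, (q r - q s) * (r - s) ≤ 0)
    (hq_nonneg : ∀ r : ℝ, r ≤ 2 * l → 0 ≤ q r)
    (hq_nonpos : ∀ r : ℝ, 2 * l ≤ r → q r ≤ 0)
    (hq_zero : ∀ r : ℝ, q r = 0 ↔ 2 * l ≤ r)
    (G : X → X) (hG : ∀ u : X, G u = q (θ u) • w)
    (f : X) (lam : ℕ → ℝ) (hlam_pos : ∀ n, 0 < lam n)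
    (hlam_lim : Tendsto lam atTop (nhds 0)) :
    (∀ n : ℕ, ∃! u : X, u ∈ K ∧ ∀ v ∈ K,
      ⟪A u, v - u⟫_ℝ + (1 / lam n) * ⟪G u, v - u⟫_ℝ + j u v - j u u
        ≥ ⟪f, v - u⟫_ℝ) ∧
    (∃! u' : X, u' ∈ K' ∧ ∀ v ∈ K',
      ⟪A u', v - u'⟫_ℝ + j u' v - j u' u' ≥ ⟪f, v - u'⟫_ℝ) ∧
    (∀ (un : ℕ → X) (u' : X),
      (∀ n : ℕ, un n ∈ K ∧ ∀ v ∈ K,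
        ⟪A (un n), v - un n⟫_ℝ + (1 / lam n) * ⟪G (un n), v - un n⟫_ℝ
          + j (un n) v - j (un n) (un n) ≥ ⟪f, v - un n⟫_ℝ) →
      (u' ∈ K' ∧ ∀ v ∈ K',
        ⟪A u', v - u'⟫_ℝ + j u' v - j u' u' ≥ ⟪f, v - u'⟫_ℝ) →
      Tendsto un atTop (nhds u')) :=
  spring_rods_convergence_rigid_compression_general w hw l hl θ hθ K K' hK hK' A m M hA_mono hA_lip
    p Lp hLp hp_lip hsmall j hj q hq_lip hq_mono hq_zero G hG f lam hlam_pos hlam_lim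
end

section
/- Let X be a real Hilbert space, w ∈ X, l > 0, and define θ : X → ℝ by θ(v) = 2l − (w, v)_X; set K = {v ∈ X : θ(v) ≥ 0} and K'' = {v ∈ X : 0 ≤ θ(v) ≤ 2l}. Let A : X → X satisfy (Au − Av, u − v)_X ≥ m‖u − v‖_X² and ‖Au − Av‖_X ≤ M‖u − v‖_X for all u, v ∈ X, with m, M > 0. Let p : ℝ → ℝ be Lipschitz with constant L_p > 0 and assume m > L_p‖w‖_X²; define j(u, v) = −p(θ(u)) θ(v). Let q : ℝ → ℝ be Lipschitz continuous, satisfy (q(r₁) − q(r₂))(r₁ − r₂) ≤ 0 for all r₁, r₂ ∈ ℝ, q(r) ≥ 0 for r ≤ 2l, q(r) ≤ 0 for r ≥ 2l, and q(r) = 0 if and only if r ≤ 2l; define G : X → X by Gu = q(θ(u)) w. Let f ∈ X and let {λ_n} be positive reals with λ_n → 0. Then for each n there exists a unique u_n ∈ K with (Au_n, v − u_n)_X + (1/λ_n)(Gu_n, v − u_n)_X + j(u_n, v) − j(u_n, u_n) ≥ (f, v − u_n)_X for all v ∈ K, there exists a unique u'' ∈ K'' with (Au'', v − u'')_X + j(u'',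 v) − j(u'', u'') ≥ (f, v − u'')_X for all v ∈ K'', and u_n → u'' strongly in X as n → ∞. -/
open scoped InnerProductSpace
open Filter

section aux
set_option linter.unusedSectionVars false
variable {X : Type*} [NormedAddCommGroup X] [InnerProductSpace ℝ X] [CompleteSpace X]

lemma proj_spec' {C : Set X} (hne : C.Nonempty) (hcl : IsClosed C) (hcv : Convex ℝ C)
    (u : X) : ∃ pu, pu ∈ C ∧ ∀ z ∈ C, ⟪u - pu, z - pu⟫_ℝ ≤ 0 := by
  obtain ⟨v, hv, hmin⟩ := exists_norm_eq_iInf_of_complete_convex hne hcl.isComplete hcv u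
  exact ⟨v, hv, fun z hz => (norm_eq_iInf_iff_real_inner_le_zero hcv hv).1 hmin z hz⟩

lemma vi_unique' {C : Set X} (T : X → X) (m' : ℝ) (hm' : 0 < m')
    (hmono : ∀ u v, m' * ‖u - v‖ ^ 2 ≤ ⟪T u - T v, u - v⟫_ℝ) (f : X)
    {u₁ u₂ : X} (h₁ : u₁ ∈ C ∧ ∀ v ∈ C, 0 ≤ ⟪T u₁ - f, v - u₁⟫_ℝ)
    (h₂ : u₂ ∈ C ∧ ∀ v ∈ C, 0 ≤ ⟪T u₂ - f, v - u₂⟫_ℝ) : u₁ = u₂ := by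
  have a1 := h₁.2 u₂ h₂.1
  have a2 := h₂.2 u₁ h₁.1
  have e : ⟪T u₁ - f, u₂ - u₁⟫_ℝ + ⟪T u₂ - f, u₁ - u₂⟫_ℝ
      = -⟪T u₁ - T u₂, u₁ - u₂⟫_ℝ := by
    simp [inner_sub_left, inner_sub_right]; ring
  have hmon := hmono u₁ u₂
  have hd2 : ‖u₁ - u₂‖ ^ 2 ≤ 0 := by nlinarith
  have hsq : ‖u₁ - u₂‖ ^ 2 = 0 := le_antisymm hd2 (sq_nonneg _)
  have : ‖u₁ - u₂‖ = 0 := pow_eq_zero_iff (n := 2) (by norm_num) |>.mp hsq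
  exact sub_eq_zero.mp (norm_eq_zero.mp this)

lemma stampacchia' {C : Set X} (hne : C.Nonempty) (hcl : IsClosed C) (hcv : Convex ℝ C)
    (T : X → X) (m' M' : ℝ) (hm' : 0 < m') (hM' : 0 < M')
    (hmono : ∀ u v, m' * ‖u - v‖ ^ 2 ≤ ⟪T u - T v, u - v⟫_ℝ)
    (hlip : ∀ u v, ‖T u - T v‖ ≤ M' * ‖u - v‖) (f : X) :
    ∃ u, u ∈ C ∧ ∀ v ∈ C, 0 ≤ ⟪T u - f, v - u⟫_ℝ := by
  choose P hP using proj_spec' hne hcl hcv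
  have hP_ne : ∀ a b : X, ‖P a - P b‖ ≤ ‖a - b‖ := by
    intro a b
    have h1 := (hP a).2 (P b) (hP b).1
    have h2 := (hP b).2 (P a) (hP a).1
    have e : ⟪a - P a, P b - P a⟫_ℝ + ⟪b - P b, P a - P b⟫_ℝ
        = -⟪a - b, P a - P b⟫_ℝ + ‖P a - P b‖ ^ 2 := by
      simp [inner_sub_left, inner_sub_right, real_inner_self_eq_norm_sq, norm_sub_sq_real,
        real_inner_comm (P b) (P a), real_inner_comm a (P b), real_inner_comm b (P a),
        real_inner_comm a (P a), real_inner_comm b (P b), real_inner_comm a b]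
      ring
    have key : ‖P a - P b‖ ^ 2 ≤ ⟪a - b, P a - P b⟫_ℝ := by linarith
    have cs := real_inner_le_norm (a - b) (P a - P b)
    nlinarith [norm_nonneg (P a - P b), norm_nonneg (a - b)]
  set ρ : ℝ := m' / M' ^ 2 with hρdef
  have hρ : 0 < ρ := by positivity
  set g : X → X := fun u => P (u - ρ • (T u - f)) with hg
  set c : ℝ := max (1 - m' ^ 2 / M' ^ 2) 0 with hc
  have hc0 : 0 ≤ c := le_max_right _ _
  have hc1 : c < 1 := by
    apply max_lt _ one_pos
    have : 0 < m' ^ 2 / M' ^ 2 := by positivity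
    linarith
  set κ : ℝ := Real.sqrt c with hκ
  have hκ0 : 0 ≤ κ := Real.sqrt_nonneg _
  have hκ1 : κ < 1 := by
    rw [hκ, show (1:ℝ) = Real.sqrt 1 by simp]
    exact Real.sqrt_lt_sqrt hc0 hc1
  have hcontr : ∀ u v : X, ‖g u - g v‖ ≤ κ * ‖u - v‖ := by
    intro u v
    have step1 : ‖g u - g v‖ ≤ ‖(u - v) - ρ • (T u - T v)‖ := by
      have := hP_ne (u - ρ • (T u - f)) (v - ρ • (T v - f))
      calc ‖g u - g v‖ ≤ ‖(u - ρ • (T u - f)) - (v - ρ • (T v - f))‖ := this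
        _ = ‖(u - v) - ρ • (T u - T v)‖ := by congr 1; module
    have expand : ‖(u - v) - ρ • (T u - T v)‖ ^ 2
        = ‖u - v‖ ^ 2 - 2 * ρ * ⟪T u - T v, u - v⟫_ℝ + ρ ^ 2 * ‖T u - T v‖ ^ 2 := by
      rw [norm_sub_sq_real, norm_smul, real_inner_smul_right]
      simp [real_inner_comm (u - v) (T u - T v), abs_of_pos hρ]
      ring
    have hmn := hmono u v
    have hlp := hlip u v
    have hTn : ‖T u - T v‖ ^ 2 ≤ M' ^ 2 * ‖u - v‖ ^ 2 := by
      nlinarith [norm_nonneg (T u - T v), norm_nonneg (u - v)]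
    have bound : ‖(u - v) - ρ • (T u - T v)‖ ^ 2 ≤ c * ‖u - v‖ ^ 2 := by
      have h1 : ‖(u - v) - ρ • (T u - T v)‖ ^ 2 ≤ (1 - m' ^ 2 / M' ^ 2) * ‖u - v‖ ^ 2 := by
        rw [expand]
        have hρm : ρ * m' = m' ^ 2 / M' ^ 2 := by rw [hρdef]; field_simp
        have hρM : ρ ^ 2 * M' ^ 2 = m' ^ 2 / M' ^ 2 := by
          rw [hρdef]; field_simp
        have e1 : ρ * (m' * ‖u - v‖ ^ 2) = m' ^ 2 / M' ^ 2 * ‖u - v‖ ^ 2 := by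
          rw [← hρm]; ring
        have e2 : ρ ^ 2 * (M' ^ 2 * ‖u - v‖ ^ 2) = m' ^ 2 / M' ^ 2 * ‖u - v‖ ^ 2 := by
          rw [← hρM]; ring
        linarith [mul_le_mul_of_nonneg_left hmn hρ.le,
          mul_le_mul_of_nonneg_left hTn (sq_nonneg ρ)]
      calc ‖(u - v) - ρ • (T u - T v)‖ ^ 2 ≤ (1 - m' ^ 2 / M' ^ 2) * ‖u - v‖ ^ 2 := h1
        _ ≤ c * ‖u - v‖ ^ 2 := by
            apply mul_le_mul_of_nonneg_right (le_max_left _ _) (sq_nonneg _)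
    have : ‖g u - g v‖ ^ 2 ≤ (κ * ‖u - v‖) ^ 2 := by
      have hκsq : κ ^ 2 = c := Real.sq_sqrt hc0
      calc ‖g u - g v‖ ^ 2 ≤ ‖(u - v) - ρ • (T u - T v)‖ ^ 2 :=
            pow_le_pow_left₀ (norm_nonneg _) step1 2
        _ ≤ c * ‖u - v‖ ^ 2 := bound
        _ = (κ * ‖u - v‖) ^ 2 := by rw [mul_pow, hκsq]
    have h0 : 0 ≤ κ * ‖u - v‖ := by positivity
    nlinarith [norm_nonneg (g u - g v)]
  have hLip : LipschitzWith κ.toNNReal g :=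
    LipschitzWith.of_dist_le_mul (fun x y => by
      rw [dist_eq_norm, dist_eq_norm, Real.coe_toNNReal κ hκ0]
      exact hcontr x y)
  have hCW : ContractingWith κ.toNNReal g := by
    constructor
    · exact_mod_cast (Real.toNNReal_lt_one).mpr hκ1
    · exact hLip
  obtain ⟨y, hy, -⟩ := hCW.exists_fixedPoint (hne.some) (edist_ne_top _ _)
  have hyC : y ∈ C := by
    have : g y = y := hy
    rw [← this]; exact (hP _).1
  refine ⟨y, hyC, fun v hv => ?_⟩
  have hchar := (hP (y - ρ • (T y - f))).2 v hv
  have hgy : P (y - ρ • (T y - f)) = y := hy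
  rw [hgy] at hchar
  have : ⟪y - ρ • (T y - f) - y, v - y⟫_ℝ = -(ρ * ⟪T y - f, v - y⟫_ℝ) := by
    rw [show y - ρ • (T y - f) - y = -(ρ • (T y - f)) by abel]
    rw [inner_neg_left, real_inner_smul_left]
  rw [this] at hchar
  nlinarith

end aux


set_option maxHeartbeats 1600000 in
theorem spring_rods_convergence_rigid_extension
    {X : Type*} [NormedAddCommGroup X] [InnerProductSpace ℝ X] [CompleteSpace X]
    (w : X) (l : ℝ) (hl : 0 < l)
    (θ : X → ℝ) (hθ : ∀ v : X, θ v = 2 * l - ⟪w, v⟫_ℝ)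
    (K K'' : Set X)
    (hK : K = {v : X | θ v ≥ 0}) (hK'' : K'' = {v : X | 0 ≤ θ v ∧ θ v ≤ 2 * l})
    (A : X → X) (m M : ℝ) (hm : 0 < m) (hM : 0 < M)
    (hA_mono : ∀ u v : X, m * ‖u - v‖ ^ 2 ≤ ⟪A u - A v, u - v⟫_ℝ)
    (hA_lip : ∀ u v : X, ‖A u - A v‖ ≤ M * ‖u - v‖)
    (p : ℝ → ℝ) (Lp : ℝ) (hLp : 0 < Lp)
    (hp_lip : ∀ r s : ℝ, |p r - p s| ≤ Lp * |r - s|)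
    (hsmall : Lp * ‖w‖ ^ 2 < m)
    (j : X → X → ℝ) (hj : ∀ u v : X, j u v = -(p (θ u)) * θ v)
    (q : ℝ → ℝ)
    (hq_lip : ∃ Lq : ℝ, 0 < Lq ∧ ∀ r s : ℝ, |q r - q s| ≤ Lq * |r - s|)
    (hq_mono : ∀ r s : ℝ, (q r - q s) * (r - s) ≤ 0)
    (hq_nonneg : ∀ r : ℝ, r ≤ 2 * l → 0 ≤ q r)
    (hq_nonpos : ∀ r : ℝ, 2 * l ≤ r → q r ≤ 0)
    (hq_zero : ∀ r : ℝ, q r = 0 ↔ r ≤ 2 * l)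
    (G : X → X) (hG : ∀ u : X, G u = q (θ u) • w)
    (f : X) (lam : ℕ → ℝ) (hlam_pos : ∀ n, 0 < lam n)
    (hlam_lim : Tendsto lam atTop (nhds 0)) :
    (∀ n : ℕ, ∃! u : X, u ∈ K ∧ ∀ v ∈ K,
      ⟪A u, v - u⟫_ℝ + (1 / lam n) * ⟪G u, v - u⟫_ℝ + j u v - j u u
        ≥ ⟪f, v - u⟫_ℝ) ∧
    (∃! u' : X, u' ∈ K'' ∧ ∀ v ∈ K'',
      ⟪A u', v - u'⟫_ℝ + j u' v - j u' u' ≥ ⟪f, v - u'⟫_ℝ) ∧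
    (∀ (un : ℕ → X) (u' : X),
      (∀ n : ℕ, un n ∈ K ∧ ∀ v ∈ K,
        ⟪A (un n), v - un n⟫_ℝ + (1 / lam n) * ⟪G (un n), v - un n⟫_ℝ
          + j (un n) v - j (un n) (un n) ≥ ⟪f, v - un n⟫_ℝ) →
      (u' ∈ K'' ∧ ∀ v ∈ K'',
        ⟪A u', v - u'⟫_ℝ + j u' v - j u' u' ≥ ⟪f, v - u'⟫_ℝ) →
      Tendsto un atTop (nhds u')) := by
  obtain ⟨Lq, hLq, hq_lipschitz⟩ := hq_lip
  -- basic inner-product facts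
  have hθdiff : ∀ u v : X, θ u - θ v = -⟪w, u - v⟫_ℝ := by
    intro u v; rw [hθ, hθ, inner_sub_right]; ring
  have habs_inner : ∀ u v : X, |⟪w, u - v⟫_ℝ| ≤ ‖w‖ * ‖u - v‖ :=
    fun u v => abs_real_inner_le_norm w (u - v)
  -- the operator B and constants
  set B : X → X := fun u => A u + p (θ u) • w with hBdef
  set m' : ℝ := m - Lp * ‖w‖ ^ 2 with hm'def
  have hm' : 0 < m' := by rw [hm'def]; linarith
  set M' : ℝ := M + Lp * ‖w‖ ^ 2 with hM'def
  have hM' : 0 < M' := by rw [hM'def]; positivity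
  have hB_sub : ∀ u v : X, B u - B v = (A u - A v) + (p (θ u) - p (θ v)) • w := by
    intro u v; rw [hBdef]; simp only [sub_smul]; module
  have hB_mono : ∀ u v : X, m' * ‖u - v‖ ^ 2 ≤ ⟪B u - B v, u - v⟫_ℝ := by
    intro u v
    have e : ⟪B u - B v, u - v⟫_ℝ
        = ⟪A u - A v, u - v⟫_ℝ + (p (θ u) - p (θ v)) * ⟪w, u - v⟫_ℝ := by
      rw [hB_sub, inner_add_left, real_inner_smul_left]
    have h1 := hp_lip (θ u) (θ v)
    have h2 : |θ u - θ v| = |⟪w, u - v⟫_ℝ| := by rw [hθdiff]; exact abs_neg _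
    have habs : |(p (θ u) - p (θ v)) * ⟪w, u - v⟫_ℝ| ≤ Lp * ⟪w, u - v⟫_ℝ ^ 2 := by
      rw [abs_mul]
      calc |p (θ u) - p (θ v)| * |⟪w, u - v⟫_ℝ|
          ≤ (Lp * |⟪w, u - v⟫_ℝ|) * |⟪w, u - v⟫_ℝ| := by
            apply mul_le_mul_of_nonneg_right _ (abs_nonneg _)
            rw [← h2]; exact h1
        _ = Lp * ⟪w, u - v⟫_ℝ ^ 2 := by rw [mul_assoc, ← sq_abs]; ring
    have h4 : ⟪w, u - v⟫_ℝ ^ 2 ≤ ‖w‖ ^ 2 * ‖u - v‖ ^ 2 := by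
      nlinarith [habs_inner u v, abs_nonneg (⟪w, u - v⟫_ℝ), sq_abs (⟪w, u - v⟫_ℝ),
        norm_nonneg w, norm_nonneg (u - v)]
    have h5 : -(Lp * (‖w‖ ^ 2 * ‖u - v‖ ^ 2)) ≤ (p (θ u) - p (θ v)) * ⟪w, u - v⟫_ℝ := by
      have := neg_abs_le ((p (θ u) - p (θ v)) * ⟪w, u - v⟫_ℝ)
      nlinarith [mul_le_mul_of_nonneg_left h4 hLp.le]
    have := hA_mono u v
    rw [e] ; rw [hm'def]; nlinarith
  have hB_lip : ∀ u v : X, ‖B u - B v‖ ≤ M' * ‖u - v‖ := by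
    intro u v
    have h2 : |θ u - θ v| ≤ ‖w‖ * ‖u - v‖ := by
      rw [show |θ u - θ v| = |⟪w, u - v⟫_ℝ| by rw [hθdiff]; exact abs_neg _]
      exact habs_inner u v
    calc ‖B u - B v‖ ≤ ‖A u - A v‖ + ‖(p (θ u) - p (θ v)) • w‖ := by
          rw [hB_sub]; exact norm_add_le _ _
      _ = ‖A u - A v‖ + |p (θ u) - p (θ v)| * ‖w‖ := by
          rw [norm_smul, Real.norm_eq_abs]
      _ ≤ M * ‖u - v‖ + (Lp * (‖w‖ * ‖u - v‖)) * ‖w‖ := by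
          have := hp_lip (θ u) (θ v)
          have hb : |p (θ u) - p (θ v)| ≤ Lp * (‖w‖ * ‖u - v‖) := by
            calc |p (θ u) - p (θ v)| ≤ Lp * |θ u - θ v| := this
              _ ≤ Lp * (‖w‖ * ‖u - v‖) := by
                  apply mul_le_mul_of_nonneg_left h2 hLp.le
          have := hA_lip u v
          have hw0 : (0:ℝ) ≤ ‖w‖ := norm_nonneg w
          nlinarith
      _ = M' * ‖u - v‖ := by rw [hM'def]; ring
  -- the penalized operators
  set Tn : ℕ → X → X := fun n u => B u + ((lam n)⁻¹ * q (θ u)) • w with hTndef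
  have hTn_sub : ∀ n (u v : X), Tn n u - Tn n v
      = (B u - B v) + ((lam n)⁻¹ * (q (θ u) - q (θ v))) • w := by
    intro n u v; rw [hTndef]; simp only [mul_sub, sub_smul]; module
  have hTn_mono : ∀ n (u v : X), m' * ‖u - v‖ ^ 2 ≤ ⟪Tn n u - Tn n v, u - v⟫_ℝ := by
    intro n u v
    have e : ⟪Tn n u - Tn n v, u - v⟫_ℝ
        = ⟪B u - B v, u - v⟫_ℝ + (lam n)⁻¹ * ((q (θ u) - q (θ v)) * ⟪w, u - v⟫_ℝ) := by
      rw [hTn_sub, inner_add_left, real_inner_smul_left]; ring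
    have hw2 : ⟪w, u - v⟫_ℝ = -(θ u - θ v) := by rw [hθdiff]; ring
    have h2 : 0 ≤ (lam n)⁻¹ * ((q (θ u) - q (θ v)) * ⟪w, u - v⟫_ℝ) := by
      apply mul_nonneg (inv_nonneg.2 (hlam_pos n).le)
      rw [hw2]; nlinarith [hq_mono (θ u) (θ v)]
    linarith [hB_mono u v, e.ge]
  have hTn_lip : ∀ n (u v : X),
      ‖Tn n u - Tn n v‖ ≤ (M' + (lam n)⁻¹ * (Lq * ‖w‖ ^ 2)) * ‖u - v‖ := by
    intro n u v
    have h2 : |θ u - θ v| ≤ ‖w‖ * ‖u - v‖ := by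
      rw [show |θ u - θ v| = |⟪w, u - v⟫_ℝ| by rw [hθdiff]; exact abs_neg _]
      exact habs_inner u v
    have hln : (0:ℝ) ≤ (lam n)⁻¹ := inv_nonneg.2 (hlam_pos n).le
    calc ‖Tn n u - Tn n v‖ ≤ ‖B u - B v‖ + ‖((lam n)⁻¹ * (q (θ u) - q (θ v))) • w‖ := by
          rw [hTn_sub]; exact norm_add_le _ _
      _ = ‖B u - B v‖ + (lam n)⁻¹ * |q (θ u) - q (θ v)| * ‖w‖ := by
          rw [norm_smul, Real.norm_eq_abs, abs_mul, abs_of_nonneg hln]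
      _ ≤ M' * ‖u - v‖ + (lam n)⁻¹ * (Lq * (‖w‖ * ‖u - v‖)) * ‖w‖ := by
          have hb : |q (θ u) - q (θ v)| ≤ Lq * (‖w‖ * ‖u - v‖) := by
            calc |q (θ u) - q (θ v)| ≤ Lq * |θ u - θ v| := hq_lipschitz _ _
              _ ≤ Lq * (‖w‖ * ‖u - v‖) := mul_le_mul_of_nonneg_left h2 hLq.le
          have hw0 : (0:ℝ) ≤ ‖w‖ := norm_nonneg w
          have h6 := hB_lip u v
          have h7 : (lam n)⁻¹ * |q (θ u) - q (θ v)| * ‖w‖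
              ≤ (lam n)⁻¹ * (Lq * (‖w‖ * ‖u - v‖)) * ‖w‖ :=
            mul_le_mul_of_nonneg_right (mul_le_mul_of_nonneg_left hb hln) hw0
          exact add_le_add h6 h7
      _ = (M' + (lam n)⁻¹ * (Lq * ‖w‖ ^ 2)) * ‖u - v‖ := by ring
  -- the sets
  have hKiff : ∀ v : X, v ∈ K ↔ ⟪w, v⟫_ℝ ≤ 2 * l := by
    intro v; rw [hK]; simp only [Set.mem_setOf_eq, hθ]; constructor <;> intro h <;> linarith
  have hK''iff : ∀ v : X, v ∈ K'' ↔ (⟪w, v⟫_ℝ ≤ 2 * l ∧ 0 ≤ ⟪w, v⟫_ℝ) := by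
    intro v; rw [hK'']; simp only [Set.mem_setOf_eq, hθ]
    constructor <;> rintro ⟨h1, h2⟩ <;> constructor <;> linarith
  have hcont : Continuous fun v : X => ⟪w, v⟫_ℝ := continuous_const.inner continuous_id
  have hlin : IsLinearMap ℝ fun v : X => ⟪w, v⟫_ℝ := (innerSL ℝ w).toLinearMap.isLinear
  have hKcl : IsClosed K := by
    have : K = (fun v : X => ⟪w, v⟫_ℝ) ⁻¹' Set.Iic (2 * l) := by
      ext v; simp [hKiff v]
    rw [this]; exact isClosed_Iic.preimage hcont
  have hKcv : Convex ℝ K := by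
    have : K = {v : X | ⟪w, v⟫_ℝ ≤ 2 * l} := by ext v; simp [hKiff v]
    rw [this]; exact convex_halfSpace_le hlin _
  have hKne : K.Nonempty := ⟨0, by rw [hKiff, inner_zero_right]; positivity⟩
  have hK''cl : IsClosed K'' := by
    have : K'' = (fun v : X => ⟪w, v⟫_ℝ) ⁻¹' (Set.Iic (2 * l) ∩ Set.Ici 0) := by
      ext v; simp only [Set.mem_preimage, Set.mem_inter_iff, Set.mem_Iic, Set.mem_Ici, hK''iff v]
    rw [this]; exact (isClosed_Iic.inter isClosed_Ici).preimage hcont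
  have hK''cv : Convex ℝ K'' := by
    have : K'' = {v : X | ⟪w, v⟫_ℝ ≤ 2 * l} ∩ {v : X | 0 ≤ ⟪w, v⟫_ℝ} := by
      ext v; simp only [Set.mem_inter_iff, Set.mem_setOf_eq, hK''iff v]
    rw [this]; exact (convex_halfSpace_le hlin _).inter (convex_halfSpace_ge hlin _)
  have hK''ne : K''.Nonempty := ⟨0, by rw [hK''iff, inner_zero_right]; exact ⟨by positivity, le_refl _⟩⟩
  have hK''K : K'' ⊆ K := by
    intro v hv; rw [hKiff]; exact ((hK''iff v).mp hv).1
  -- identities relating the statements to the operators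
  have hid2 : ∀ u v : X, ⟪B u - f, v - u⟫_ℝ
      = ⟪A u, v - u⟫_ℝ + j u v - j u u - ⟪f, v - u⟫_ℝ := by
    intro u v
    rw [hBdef]
    simp only [hj, hθ, inner_sub_left, inner_add_left, real_inner_smul_left, inner_sub_right]
    ring
  have hid1 : ∀ n (u v : X), ⟪Tn n u - f, v - u⟫_ℝ
      = ⟪A u, v - u⟫_ℝ + (1 / lam n) * ⟪G u, v - u⟫_ℝ + j u v - j u u - ⟪f, v - u⟫_ℝ := by
    intro n u v
    rw [hTndef, hBdef]
    simp only [hj, hθ, hG, inner_sub_left, inner_add_left, real_inner_smul_left,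
      inner_sub_right, one_div]
    ring
  have hconv1 : ∀ n (u : X),
      ((∀ v ∈ K, ⟪A u, v - u⟫_ℝ + (1 / lam n) * ⟪G u, v - u⟫_ℝ + j u v - j u u
        ≥ ⟪f, v - u⟫_ℝ) ↔ (∀ v ∈ K, 0 ≤ ⟪Tn n u - f, v - u⟫_ℝ)) := by
    intro n u
    constructor <;> intro h v hv <;> have h' := h v hv <;> have e := hid1 n u v <;> linarith
  have hconv2 : ∀ u : X,
      ((∀ v ∈ K'', ⟪A u, v - u⟫_ℝ + j u v - j u u ≥ ⟪f, v - u⟫_ℝ)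
        ↔ (∀ v ∈ K'', 0 ≤ ⟪B u - f, v - u⟫_ℝ)) := by
    intro u
    constructor <;> intro h v hv <;> have h' := h v hv <;> have e := hid2 u v <;> linarith
  refine ⟨?_, ?_, ?_⟩
  · -- Part 1: existence and uniqueness for the penalized problems
    intro n
    have hMn : 0 < M' + (lam n)⁻¹ * (Lq * ‖w‖ ^ 2) := by
      have : (0:ℝ) ≤ (lam n)⁻¹ * (Lq * ‖w‖ ^ 2) :=
        mul_nonneg (inv_nonneg.2 (hlam_pos n).le) (by positivity)
      linarith
    obtain ⟨u, huC, huVI⟩ := stampacchia' hKne hKcl hKcv (Tn n) m' _ hm' hMn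
      (hTn_mono n) (hTn_lip n) f
    refine ⟨u, ⟨huC, (hconv1 n u).mpr huVI⟩, fun y hy => ?_⟩
    exact vi_unique' (Tn n) m' hm' (hTn_mono n) f ⟨hy.1, (hconv1 n y).mp hy.2⟩ ⟨huC, huVI⟩
  · -- Part 2: existence and uniqueness for the limit problem
    obtain ⟨u, huC, huVI⟩ := stampacchia' hK''ne hK''cl hK''cv B m' M' hm' hM'
      hB_mono hB_lip f
    refine ⟨u, ⟨huC, (hconv2 u).mpr huVI⟩, fun y hy => ?_⟩
    exact vi_unique' B m' hm' hB_mono f ⟨hy.1, (hconv2 y).mp hy.2⟩ ⟨huC, huVI⟩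
  · -- Part 3: convergence
    intro un u' hun hu'
    have hu'B : u' ∈ K'' ∧ ∀ v ∈ K'', 0 ≤ ⟪B u' - f, v - u'⟫_ℝ :=
      ⟨hu'.1, (hconv2 u').mp hu'.2⟩
    have hunB : ∀ n, un n ∈ K ∧ ∀ v ∈ K, 0 ≤ ⟪Tn n (un n) - f, v - un n⟫_ℝ :=
      fun n => ⟨(hun n).1, (hconv1 n (un n)).mp (hun n).2⟩
    have hu'K : u' ∈ K := hK''K hu'B.1
    have hθu' : θ u' ≤ 2 * l := by
      have := hu'.1; rw [hK''] at this; exact this.2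
    have hqu' : q (θ u') = 0 := (hq_zero _).mpr hθu'
    have hsplit : ∀ n, ⟪Tn n (un n) - f, u' - un n⟫_ℝ
        = ⟪B (un n) - f, u' - un n⟫_ℝ
          + (lam n)⁻¹ * (q (θ (un n)) * (θ (un n) - θ u')) := by
      intro n
      have e1 : Tn n (un n) - f = (B (un n) - f) + ((lam n)⁻¹ * q (θ (un n))) • w := by
        rw [hTndef]; dsimp only; module
      rw [e1, inner_add_left, real_inner_smul_left]
      have e2 : ⟪w, u' - un n⟫_ℝ = θ (un n) - θ u' := by
        rw [hθ, hθ, inner_sub_right]; ring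
      rw [e2]; ring
    have hqterm : ∀ n, q (θ (un n)) * (θ (un n) - θ u') ≤ 0 := by
      intro n
      have h := hq_mono (θ (un n)) (θ u')
      rw [hqu'] at h
      simpa using h
    have hApos : ∀ n, 0 ≤ ⟪B (un n) - f, u' - un n⟫_ℝ := by
      intro n
      have h0 := (hunB n).2 u' hu'K
      rw [hsplit n] at h0
      have h1 : (lam n)⁻¹ * (q (θ (un n)) * (θ (un n) - θ u')) ≤ 0 :=
        mul_nonpos_of_nonneg_of_nonpos (inv_nonneg.2 (hlam_pos n).le) (hqterm n)
      linarith
    have hkey : ∀ n, m' * ‖un n - u'‖ ^ 2 ≤ ⟪f - B u', un n - u'⟫_ℝ := by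
      intro n
      have e : ⟪B (un n) - B u', un n - u'⟫_ℝ
          = -⟪B (un n) - f, u' - un n⟫_ℝ + ⟪f - B u', un n - u'⟫_ℝ := by
        simp [inner_sub_left, inner_sub_right]; ring
      have h1 := hB_mono (un n) u'
      linarith [hApos n, e.le, e.ge]
    set C₀ : ℝ := ‖f - B u'‖ / m' with hC₀def
    have hC₀ : 0 ≤ C₀ := div_nonneg (norm_nonneg _) hm'.le
    have hbound : ∀ n, ‖un n - u'‖ ≤ C₀ := by
      intro n
      by_cases h0 : ‖un n - u'‖ = 0
      · rw [h0]; exact hC₀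
      · have hpos : 0 < ‖un n - u'‖ := lt_of_le_of_ne (norm_nonneg _) (Ne.symm h0)
        have h1 := hkey n
        have h2 := real_inner_le_norm (f - B u') (un n - u')
        rw [hC₀def, le_div_iff₀ hm']
        have h3 : (m' * ‖un n - u'‖) * ‖un n - u'‖ ≤ ‖f - B u'‖ * ‖un n - u'‖ := by
          nlinarith
        have h4 := le_of_mul_le_mul_right h3 hpos
        linarith
    set C₁ : ℝ := (M' * C₀ + ‖B u' - f‖) * C₀ with hC₁def
    have hpen : ∀ n, -(q (θ (un n))) * (θ (un n) - θ u') ≤ lam n * C₁ := by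
      intro n
      have h0 := (hunB n).2 u' hu'K
      rw [hsplit n] at h0
      have hBn : ‖B (un n) - f‖ ≤ M' * C₀ + ‖B u' - f‖ := by
        calc ‖B (un n) - f‖ ≤ ‖B (un n) - B u'‖ + ‖B u' - f‖ := by
              have e : B (un n) - f = (B (un n) - B u') + (B u' - f) := by abel
              rw [e]; exact norm_add_le _ _
          _ ≤ M' * C₀ + ‖B u' - f‖ := by
              have h1 := hB_lip (un n) u'
              have h2 := hbound n
              have h3 : M' * ‖un n - u'‖ ≤ M' * C₀ := mul_le_mul_of_nonneg_left h2 hM'.le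
              linarith
      have hin : ⟪B (un n) - f, u' - un n⟫_ℝ ≤ C₁ := by
        have h1 := real_inner_le_norm (B (un n) - f) (u' - un n)
        have h2 : ‖u' - un n‖ = ‖un n - u'‖ := norm_sub_rev _ _
        have h3 := hbound n
        rw [hC₁def]
        nlinarith [norm_nonneg (B (un n) - f), norm_nonneg (un n - u'),
          norm_nonneg (B u' - f)]
      have h4 : -((lam n)⁻¹ * (q (θ (un n)) * (θ (un n) - θ u'))) ≤ C₁ := by linarith
      have h5 : 0 < lam n := hlam_pos n
      have h6 := mul_le_mul_of_nonneg_left h4 h5.le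
      have e : lam n * -((lam n)⁻¹ * (q (θ (un n)) * (θ (un n) - θ u')))
          = -(q (θ (un n)) * (θ (un n) - θ u')) := by
        rw [mul_neg, ← mul_assoc, mul_inv_cancel₀ (ne_of_gt h5), one_mul]
      rw [e] at h6
      nlinarith [h6]
    set vv : ℕ → X := fun n => if θ (un n) ≤ 2 * l then un n
        else un n + ((θ (un n) - 2 * l) / ‖w‖ ^ 2) • w with hvvdef
    have hunK : ∀ n, 0 ≤ θ (un n) := by
      intro n; have h := (hunB n).1; rw [hK] at h; exact h
    have hwne : ∀ n, ¬θ (un n) ≤ 2 * l → w ≠ 0 := by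
      intro n hcge hw0
      apply hcge
      rw [hθ, hw0, inner_zero_left, sub_zero]
    have hvvK'' : ∀ n, vv n ∈ K'' := by
      intro n
      rw [hvvdef]; dsimp only
      by_cases hc : θ (un n) ≤ 2 * l
      · rw [if_pos hc, hK'']; exact ⟨hunK n, hc⟩
      · rw [if_neg hc]
        have hw0 : w ≠ 0 := hwne n hc
        have hnw : (0:ℝ) < ‖w‖ ^ 2 := pow_pos (norm_pos_iff.mpr hw0) 2
        have e : θ (un n + ((θ (un n) - 2 * l) / ‖w‖ ^ 2) • w) = 2 * l := by
          rw [hθ, inner_add_right, real_inner_smul_right, real_inner_self_eq_norm_sq]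
          rw [div_mul_cancel₀ _ (ne_of_gt hnw)]
          have h1 : θ (un n) = 2 * l - ⟪w, un n⟫_ℝ := hθ _
          linarith
        rw [hK'']
        simp only [Set.mem_setOf_eq, e]
        exact ⟨by linarith, le_refl _⟩
    have hEzero : ∀ n, θ (un n) ≤ 2 * l → ‖un n - vv n‖ = 0 := by
      intro n hc; rw [hvvdef]; dsimp only; rw [if_pos hc]; simp
    have hEpos : ∀ n, ¬θ (un n) ≤ 2 * l →
        ‖un n - vv n‖ = (θ (un n) - 2 * l) / ‖w‖ := by
      intro n hc
      rw [hvvdef]; dsimp only; rw [if_neg hc]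
      have hw0 : w ≠ 0 := hwne n hc
      have hnw : 0 < ‖w‖ := norm_pos_iff.mpr hw0
      have e : un n - (un n + ((θ (un n) - 2 * l) / ‖w‖ ^ 2) • w)
          = -(((θ (un n) - 2 * l) / ‖w‖ ^ 2) • w) := by module
      rw [e, norm_neg, norm_smul, Real.norm_eq_abs,
        abs_of_nonneg (div_nonneg (by linarith [not_le.mp hc]) (by positivity))]
      rw [sq]
      field_simp
    have hsq : ∀ n, ‖un n - u'‖ ^ 2 ≤ C₀ * ‖un n - vv n‖ := by
      intro n
      have hsplit2 : ⟪f - B u', un n - u'⟫_ℝ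
          = ⟪f - B u', un n - vv n⟫_ℝ + ⟪f - B u', vv n - u'⟫_ℝ := by
        rw [← inner_add_right]; congr 1; abel
      have h1 : ⟪f - B u', vv n - u'⟫_ℝ ≤ 0 := by
        have h0 := hu'B.2 (vv n) (hvvK'' n)
        have e : ⟪f - B u', vv n - u'⟫_ℝ = -⟪B u' - f, vv n - u'⟫_ℝ := by
          rw [← inner_neg_left, neg_sub]
        rw [e]; linarith
      have h2 := real_inner_le_norm (f - B u') (un n - vv n)
      have h3 := hkey n
      rw [hC₀def, div_mul_eq_mul_div, le_div_iff₀ hm']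
      nlinarith [hsplit2.le, hsplit2.ge]
    have hEtend : Tendsto (fun n => ‖un n - vv n‖) atTop (nhds 0) := by
      rw [Metric.tendsto_atTop]
      intro ε hε
      by_cases hw0 : w = 0
      · refine ⟨0, fun n _ => ?_⟩
        have hθn : θ (un n) ≤ 2 * l := by rw [hθ, hw0, inner_zero_left, sub_zero]
        rw [Real.dist_eq, sub_zero, hEzero n hθn, abs_zero]; exact hε
      · have hnw : 0 < ‖w‖ := norm_pos_iff.mpr hw0
        set η : ℝ := ε * ‖w‖ with hηdef
        have hη : 0 < η := mul_pos hε hnw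
        have hqη : q (2 * l + η) < 0 := by
          rcases lt_or_eq_of_le (hq_nonpos (2 * l + η) (by linarith)) with h | h
          · exact h
          · exfalso
            have h2 := (hq_zero (2 * l + η)).mp h
            linarith
        set δ : ℝ := -q (2 * l + η) * η with hδdef
        have hδ : 0 < δ := mul_pos (by linarith) hη
        have htend2 : Tendsto (fun n => lam n * C₁) atTop (nhds 0) := by
          simpa using hlam_lim.mul_const C₁
        obtain ⟨N, hN⟩ := mem_atTop_sets.mp (htend2 (Iio_mem_nhds hδ))
        refine ⟨N, fun n hn => ?_⟩
        have hlt : lam n * C₁ < δ := hN n hn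
        rw [Real.dist_eq, sub_zero, abs_of_nonneg (norm_nonneg _)]
        by_cases hc : θ (un n) ≤ 2 * l
        · rw [hEzero n hc]; exact hε
        · have hgt : 2 * l < θ (un n) := not_le.mp hc
          have hsm : θ (un n) - 2 * l < η := by
            by_contra hge
            push_neg at hge
            have h1 : 2 * l + η ≤ θ (un n) := by linarith
            have h2 : q (θ (un n)) ≤ q (2 * l + η) := by
              rcases eq_or_lt_of_le h1 with he | hlt2
              · rw [← he]
              · nlinarith [hq_mono (θ (un n)) (2 * l + η)]
            have h4 : η ≤ θ (un n) - θ u' := by linarith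
            have h5 := hpen n
            have h6 : δ ≤ -q (θ (un n)) * (θ (un n) - θ u') := by
              rw [hδdef]
              exact mul_le_mul (by linarith) h4 hη.le (by linarith)
            nlinarith [h5, h6, hlt]
          rw [hEpos n hc, div_lt_iff₀ hnw]
          rw [hηdef] at hsm
          linarith
    have hsq2 : Tendsto (fun n => ‖un n - u'‖ ^ 2) atTop (nhds 0) := by
      apply squeeze_zero (fun n => sq_nonneg _) hsq
      simpa using hEtend.const_mul C₀
    have hnorm : Tendsto (fun n => ‖un n - u'‖) atTop (nhds 0) := by
      have he : (fun n => ‖un n - u'‖) = fun n => Real.sqrt (‖un n - u'‖ ^ 2) :=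
        funext fun n => (Real.sqrt_sq (norm_nonneg _)).symm
      rw [he]
      simpa using hsq2.sqrt
    rw [tendsto_iff_norm_sub_tendsto_zero]
    exact hnorm
end
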